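/- arXiv:2004.09737 — 5 statements merged into one kernel-verified Lean document; each statement's English description precedes it below -/
import Mathlib

section
/- Let p > 1, t ∈ (0,1), and let μ = μ₁ × ⋯ × μ_n be a product measure on ℝ^n where each μ_i is a Borel measure on ℝ having a quasi-concave density φ_i with φ_i(0) = sup φ_i. Let f, g, h : ℝ^n → [0,∞) be measurable, with f and g bounded and weakly unconditional, satisfying: for every x ∈ supp(f), y ∈ supp(g) and λ ∈ (0,1), h((1−t)^{1/p}(1−λ)^{(p−1)/p} x + t^{1/p} λ^{(p−1)/p} y) ≥ f(x)^{(1−t)^{1/p}(1−λ)^{(p−1)/p}} · g(y)^{t^{1/p} λ^{(p−1)/p}}. Then for every λ ∈ (0,1), ∫_{ℝ^n} h dμ ≥ [((1−t)/(1−λ))^{1−λ} (t/λ)^{λ}]^{n/p} · (∫_{ℝ^n} f^{((1−t)/(1−λ))^{1/p}} dμ)^{1−λ} · (∫_{ℝ^n} g^{(t/λ)^{1/p}} dμ)^{λ}. -/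
open MeasureTheory Set ENNReal NNReal Pointwise

namespace LPPL

/-- weighted AM-GM in `ℝ≥0∞`. -/
lemma geom_le_arith (x y : ℝ≥0∞) {w : ℝ} (hw : w ∈ Set.Ioo (0:ℝ) 1) :
    x ^ (1 - w) * y ^ w ≤ ENNReal.ofReal (1 - w) * x + ENNReal.ofReal w * y := by
  obtain ⟨hw0, hw1⟩ := hw
  have h1w : (0:ℝ) < 1 - w := by linarith
  rcases eq_or_ne x ⊤ with hx | hx
  · subst hx
    rcases eq_or_ne y 0 with hy | hy
    · simp [hy, ENNReal.zero_rpow_of_pos hw0]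
    · have hy' : y ^ w ≠ 0 := by
        simp only [ne_eq, ENNReal.rpow_eq_zero_iff, not_or, not_and]
        exact ⟨fun h => absurd h hy, fun _ => not_lt.mpr hw0.le⟩
      have hL : (⊤:ℝ≥0∞) ^ (1 - w) * y ^ w = ⊤ := by
        rw [ENNReal.top_rpow_of_pos h1w, ENNReal.top_mul hy']
      have hR : ENNReal.ofReal (1 - w) * (⊤:ℝ≥0∞) = ⊤ :=
        ENNReal.mul_top (by simp only [ne_eq, ENNReal.ofReal_eq_zero, not_le]; linarith)
      rw [hL, hR, top_add]
  rcases eq_or_ne y ⊤ with hy | hy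
  · subst hy
    rcases eq_or_ne x 0 with hx0 | hx0
    · simp [hx0, ENNReal.zero_rpow_of_pos h1w]
    · have hx' : x ^ (1 - w) ≠ 0 := by
        simp only [ne_eq, ENNReal.rpow_eq_zero_iff, not_or, not_and]
        exact ⟨fun h => absurd h hx0, fun _ => not_lt.mpr h1w.le⟩
      have hL : x ^ (1 - w) * (⊤:ℝ≥0∞) ^ w = ⊤ := by
        rw [ENNReal.top_rpow_of_pos hw0, ENNReal.mul_top hx']
      have hR : ENNReal.ofReal w * (⊤:ℝ≥0∞) = ⊤ :=
        ENNReal.mul_top (by simp only [ne_eq, ENNReal.ofReal_eq_zero, not_le]; linarith)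
      rw [hL, hR, add_top]
  lift x to ℝ≥0 using hx
  lift y to ℝ≥0 using hy
  rw [← ENNReal.coe_rpow_of_nonneg x h1w.le, ← ENNReal.coe_rpow_of_nonneg y hw0.le,
    ENNReal.ofReal_eq_coe_nnreal h1w.le, ENNReal.ofReal_eq_coe_nnreal hw0.le,
    ← ENNReal.coe_mul, ← ENNReal.coe_mul, ← ENNReal.coe_mul, ← ENNReal.coe_add,
    ENNReal.coe_le_coe]
  have hsum : (⟨1 - w, h1w.le⟩ : ℝ≥0) + (⟨w, hw0.le⟩ : ℝ≥0) = 1 := by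
    ext; push_cast; ring
  have := NNReal.geom_mean_le_arith_mean2_weighted ⟨1 - w, h1w.le⟩ ⟨w, hw0.le⟩ x y hsum
  exact this

lemma iSup_rpow (u : ℕ → ℝ≥0∞) {e : ℝ} (he : 0 < e) :
    (⨆ k, u k) ^ e = ⨆ k, u k ^ e := by
  refine le_antisymm ?_ (iSup_le fun k => ENNReal.rpow_le_rpow (le_iSup u k) he.le)
  have h1 : ∀ k, u k ≤ (⨆ k, u k ^ e) ^ (1/e) := by
    intro k
    have : u k = (u k ^ e) ^ (1/e) := by
      rw [← ENNReal.rpow_mul, mul_one_div, div_self he.ne', ENNReal.rpow_one]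
    rw [this]
    exact ENNReal.rpow_le_rpow (le_iSup (fun k => u k ^ e) k) (by positivity)
  calc (⨆ k, u k) ^ e ≤ ((⨆ k, u k ^ e) ^ (1/e)) ^ e :=
        ENNReal.rpow_le_rpow (iSup_le h1) he.le
    _ = ⨆ k, u k ^ e := by
        rw [← ENNReal.rpow_mul, one_div, inv_mul_cancel₀ he.ne', ENNReal.rpow_one]

/-- 1-D sumset superadditivity of Lebesgue measure. -/
lemma volume_add_le (A B : Set ℝ) (hA : MeasurableSet A) (hB : MeasurableSet B)
    (hAne : A.Nonempty) (hBne : B.Nonempty) :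
    volume A + volume B ≤ volume (A + B) := by
  obtain ⟨a₀, ha₀⟩ := hAne
  obtain ⟨b₀, hb₀⟩ := hBne
  have htrans : ∀ (c : ℝ) (S : Set ℝ), volume ((· + c) '' S) = volume S := by
    intro c S
    have himg : (· + c) '' S = (· + (-c)) ⁻¹' S := by
      ext z
      simp only [Set.mem_image, Set.mem_preimage]
      constructor
      · rintro ⟨x, hx, rfl⟩; simpa using hx
      · intro hz; exact ⟨z + -c, hz, by ring⟩
    rw [himg, measure_preimage_add_right]
  rcases eq_or_ne (volume A) ⊤ with hAinf | hAfin
  · have : volume (A + B) = ⊤ := by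
      refine top_le_iff.mp ?_
      rw [← hAinf, ← htrans b₀ A]
      refine measure_mono ?_
      rintro z ⟨x, hx, rfl⟩
      exact ⟨x, hx, b₀, hb₀, rfl⟩
    simp [this]
  rcases eq_or_ne (volume B) ⊤ with hBinf | hBfin
  · have : volume (A + B) = ⊤ := by
      refine top_le_iff.mp ?_
      rw [← hBinf, ← htrans a₀ B]
      refine measure_mono ?_
      rintro z ⟨y, hy, rfl⟩
      exact ⟨a₀, ha₀, y, hy, by ring⟩
    simp [this]
  have hcompact : ∀ K L : Set ℝ, IsCompact K → IsCompact L → K.Nonempty → L.Nonempty →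
      volume K + volume L ≤ volume (K + L) := by
    intro K L hK hL hKne hLne
    set x₀ := sSup K with hx₀def
    set y₀ := sInf L with hy₀def
    have hx₀ : x₀ ∈ K := hK.sSup_mem hKne
    have hy₀ : y₀ ∈ L := hL.sInf_mem hLne
    set P := (· + y₀) '' K with hPdef
    set Q := (· + x₀) '' L with hQdef
    have hPQ : P ∪ Q ⊆ K + L := by
      rintro z (⟨x, hx, rfl⟩ | ⟨y, hy, rfl⟩)
      · exact ⟨x, hx, y₀, hy₀, rfl⟩
      · exact ⟨x₀, hx₀, y, hy, by ring⟩
    have hPQint : P ∩ Q ⊆ {x₀ + y₀} := by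
      rintro z ⟨⟨x, hx, rfl⟩, ⟨y, hy, hyz⟩⟩
      have hyz' : y + x₀ = x + y₀ := hyz
      have hxle : x ≤ x₀ := le_csSup hK.bddAbove hx
      have hyge : y₀ ≤ y := csInf_le hL.bddBelow hy
      have hx1 : x = x₀ := by linarith
      simp only [Set.mem_singleton_iff, hx1]
    have hQm : MeasurableSet Q := by
      have himg : Q = (· + (-x₀)) ⁻¹' L := by
        ext z
        simp only [hQdef, Set.mem_image, Set.mem_preimage]
        constructor
        · rintro ⟨y, hy, rfl⟩; simpa using hy
        · intro hz; exact ⟨z + -x₀, hz, by ring⟩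
      rw [himg]
      exact hL.isClosed.measurableSet.preimage (measurable_add_const _)
    calc volume K + volume L = volume P + volume Q := by rw [htrans, htrans]
      _ = volume (P ∪ Q) + volume (P ∩ Q) := (measure_union_add_inter P hQm).symm
      _ ≤ volume (K + L) + 0 := by
          refine add_le_add (measure_mono hPQ) (le_trans (measure_mono hPQint) ?_)
          simp [Real.volume_singleton]
      _ = volume (K + L) := by rw [add_zero]
  refine ENNReal.le_of_forall_pos_le_add fun ε hε _ => ?_
  have hε2 : (ENNReal.ofReal ((ε:ℝ)/2) : ℝ≥0∞) ≠ 0 := by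
    simp only [ne_eq, ENNReal.ofReal_eq_zero, not_le]
    have : (0:ℝ) < ε := hε
    positivity
  obtain ⟨K, hKA, hKc, hKvol⟩ := hA.exists_isCompact_lt_add hAfin hε2
  obtain ⟨L, hLB, hLc, hLvol⟩ := hB.exists_isCompact_lt_add hBfin hε2
  set K' := K ∪ {a₀} with hK'def
  set L' := L ∪ {b₀} with hL'def
  have hK'c : IsCompact K' := hKc.union isCompact_singleton
  have hL'c : IsCompact L' := hLc.union isCompact_singleton
  have hK'A : K' ⊆ A := union_subset hKA (by simpa using ha₀)
  have hL'B : L' ⊆ B := union_subset hLB (by simpa using hb₀)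
  have hKK' : volume K ≤ volume K' := measure_mono subset_union_left
  have hLL' : volume L ≤ volume L' := measure_mono subset_union_left
  have key := hcompact K' L' hK'c hL'c (by simp [hK'def]) (by simp [hL'def])
  have hsub : volume (K' + L') ≤ volume (A + B) :=
    measure_mono (Set.add_subset_add hK'A hL'B)
  have hεε : ENNReal.ofReal ((ε:ℝ)/2) + ENNReal.ofReal ((ε:ℝ)/2) = (ε : ℝ≥0∞) := by
    rw [← ENNReal.ofReal_add (by positivity) (by positivity), add_halves]
    exact ENNReal.ofReal_coe_nnreal
  calc volume A + volume B ≤ (volume K + ENNReal.ofReal ((ε:ℝ)/2))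
        + (volume L + ENNReal.ofReal ((ε:ℝ)/2)) := add_le_add hKvol.le hLvol.le
    _ = volume K + volume L + (ENNReal.ofReal ((ε:ℝ)/2) + ENNReal.ofReal ((ε:ℝ)/2)) := by ring
    _ ≤ volume (A + B) + ε := by
        rw [hεε]
        exact add_le_add (le_trans (add_le_add hKK' hLL') (le_trans key hsub)) le_rfl



section Layer

variable {F H : ℝ → ℝ≥0∞}

lemma layer_set_meas (hF : Measurable F) :
    MeasurableSet {p : ℝ × ℝ | 0 < p.2 ∧ ENNReal.ofReal p.2 < F p.1} := by
  have hset : {p : ℝ × ℝ | 0 < p.2 ∧ ENNReal.ofReal p.2 < F p.1}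
      = {p : ℝ × ℝ | 0 < p.2} ∩ {p : ℝ × ℝ | ENNReal.ofReal p.2 < F p.1} := rfl
  rw [hset]
  exact (measurable_snd measurableSet_Ioi).inter
    (measurableSet_lt measurable_snd.ennreal_ofReal (hF.comp measurable_fst))

lemma layer_slice (ν : Measure ℝ) (hF : Measurable F) (s : ℝ) :
    (∫⁻ z, Set.indicator {p : ℝ × ℝ | 0 < p.2 ∧ ENNReal.ofReal p.2 < F p.1}
        (fun _ => 1) (z, s) ∂ν) = ν {z | 0 < s ∧ ENNReal.ofReal s < F z} := by
  have hfun : (fun z => Set.indicator {p : ℝ × ℝ | 0 < p.2 ∧ ENNReal.ofReal p.2 < F p.1}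
      (fun _ => (1:ℝ≥0∞)) (z, s))
      = Set.indicator {z | 0 < s ∧ ENNReal.ofReal s < F z} (fun _ => 1) := by
    funext z
    simp only [Set.indicator_apply, Set.mem_setOf_eq]
  have hms : MeasurableSet {z | 0 < s ∧ ENNReal.ofReal s < F z} := by
    rcases le_or_gt s 0 with hs | hs
    · have : {z | 0 < s ∧ ENNReal.ofReal s < F z} = ∅ := by
        ext z; simp only [Set.mem_setOf_eq, Set.mem_empty_iff_false, iff_false, not_and]
        intro h; linarith
      rw [this]; exact MeasurableSet.empty
    · have : {z | 0 < s ∧ ENNReal.ofReal s < F z} = {z | ENNReal.ofReal s < F z} := by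
        ext z; simp [hs]
      rw [this]
      exact measurableSet_lt measurable_const hF
  rw [hfun, lintegral_indicator_const hms, one_mul]

/-- layer-cake representation of a lower integral. -/
lemma fun_layer (ν : Measure ℝ) [SigmaFinite ν] (hF : Measurable F) :
    ∫⁻ z, F z ∂ν = ∫⁻ s, ν {z | 0 < s ∧ ENNReal.ofReal s < F z} ∂volume := by
  set S := {p : ℝ × ℝ | 0 < p.2 ∧ ENNReal.ofReal p.2 < F p.1} with hSdef
  have hS : MeasurableSet S := layer_set_meas hF
  set Q : ℝ → ℝ → ℝ≥0∞ := fun z s => Set.indicator S (fun _ => 1) (z, s) with hQdef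
  have hQ : Measurable (Function.uncurry Q) := by
    have : Function.uncurry Q = Set.indicator S (fun _ => 1) := by
      funext p; cases p; rfl
    rw [this]
    exact measurable_const.indicator hS
  have h1 : ∀ z, (∫⁻ s, Q z s ∂volume) = F z := by
    intro z
    have hfun : (fun s => Q z s)
        = Set.indicator {s | 0 < s ∧ ENNReal.ofReal s < F z} (fun _ => 1) := by
      funext s
      simp only [hQdef, Set.indicator_apply, hSdef, Set.mem_setOf_eq]
    rw [hfun]
    rcases eq_or_ne (F z) ⊤ with hFz | hFz
    · have hset : {s | 0 < s ∧ ENNReal.ofReal s < F z} = Set.Ioi 0 := by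
        ext s; simp [hFz, ENNReal.ofReal_lt_top]
      rw [hset, lintegral_indicator_const measurableSet_Ioi, one_mul, Real.volume_Ioi, hFz]
    · have hset : {s | 0 < s ∧ ENNReal.ofReal s < F z} = Set.Ioo 0 ((F z).toReal) := by
        ext s
        simp only [Set.mem_setOf_eq, Set.mem_Ioo]
        exact and_congr_right fun hs => ENNReal.ofReal_lt_iff_lt_toReal hs.le hFz
      rw [hset, lintegral_indicator_const measurableSet_Ioo, one_mul, Real.volume_Ioo, sub_zero,
        ENNReal.ofReal_toReal hFz]
  have h2 : ∀ s, (∫⁻ z, Q z s ∂ν) = ν {z | 0 < s ∧ ENNReal.ofReal s < F z} :=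
    layer_slice ν hF
  calc ∫⁻ z, F z ∂ν = ∫⁻ z, ∫⁻ s, Q z s ∂volume ∂ν := lintegral_congr fun z => (h1 z).symm
    _ = ∫⁻ s, ∫⁻ z, Q z s ∂ν ∂volume := lintegral_lintegral_swap hQ.aemeasurable
    _ = ∫⁻ s, ν {z | 0 < s ∧ ENNReal.ofReal s < F z} ∂volume := lintegral_congr h2

lemma fun_layer_meas (ν : Measure ℝ) [SigmaFinite ν] (hF : Measurable F) :
    Measurable fun s => ν {z | 0 < s ∧ ENNReal.ofReal s < F z} := by
  set S := {p : ℝ × ℝ | 0 < p.2 ∧ ENNReal.ofReal p.2 < F p.1} with hSdef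
  have hS : MeasurableSet S := layer_set_meas hF
  set Q : ℝ → ℝ → ℝ≥0∞ := fun z s => Set.indicator S (fun _ => 1) (z, s) with hQdef
  have hQ : Measurable (Function.uncurry Q) := by
    have : Function.uncurry Q = Set.indicator S (fun _ => 1) := by
      funext p; cases p; rfl
    rw [this]
    exact measurable_const.indicator hS
  have h2 : (fun s => ν {z | 0 < s ∧ ENNReal.ofReal s < F z})
      = fun s => ∫⁻ z, Q z s ∂ν := by
    funext s; exact (layer_slice ν hF s).symm
  rw [h2]
  exact hQ.lintegral_prod_left'

/-- layer-cake decomposition of an integral against a density. -/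
lemma density_layer (φ : ℝ → ℝ) (hφm : Measurable φ) (hH : Measurable H) :
    ∫⁻ z, H z ∂(volume.withDensity fun z => ENNReal.ofReal (φ z))
      = ∫⁻ s, (∫⁻ z in {z | 0 < s ∧ s < φ z}, H z) ∂volume := by
  rw [lintegral_withDensity_eq_lintegral_mul _ hφm.ennreal_ofReal hH]
  set S := {p : ℝ × ℝ | 0 < p.2 ∧ p.2 < φ p.1} with hSdef
  have hS : MeasurableSet S := by
    have hset : {p : ℝ × ℝ | 0 < p.2 ∧ p.2 < φ p.1}
        = {p : ℝ × ℝ | 0 < p.2} ∩ {p : ℝ × ℝ | p.2 < φ p.1} := rfl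
    rw [hSdef, hset]
    exact (measurable_snd measurableSet_Ioi).inter
      (measurableSet_lt measurable_snd (hφm.comp measurable_fst))
  set Q : ℝ → ℝ → ℝ≥0∞ := fun z s => Set.indicator S (fun p => H p.1) (z, s) with hQdef
  have hQ : Measurable (Function.uncurry Q) := by
    have : Function.uncurry Q = Set.indicator S (fun p => H p.1) := by
      funext p; cases p; rfl
    rw [this]
    exact (hH.comp measurable_fst).indicator hS
  have h1 : ∀ z, (∫⁻ s, Q z s ∂volume) = ENNReal.ofReal (φ z) * H z := by
    intro z
    have hfun : (fun s => Q z s) = Set.indicator (Set.Ioo 0 (φ z)) (fun _ => H z) := by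
      funext s
      simp only [hQdef, Set.indicator_apply, hSdef, Set.mem_setOf_eq, Set.mem_Ioo]
    rw [hfun, lintegral_indicator_const measurableSet_Ioo, Real.volume_Ioo, sub_zero,
      mul_comm]
  have h2 : ∀ s, (∫⁻ z, Q z s ∂volume) = ∫⁻ z in {z | 0 < s ∧ s < φ z}, H z := by
    intro s
    have hms : MeasurableSet {z | 0 < s ∧ s < φ z} := by
      rcases le_or_gt s 0 with hs | hs
      · have : {z | 0 < s ∧ s < φ z} = ∅ := by
          ext z; simp only [Set.mem_setOf_eq, Set.mem_empty_iff_false, iff_false, not_and]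
          intro h; linarith
        rw [this]; exact MeasurableSet.empty
      · have : {z | 0 < s ∧ s < φ z} = {z | s < φ z} := by
          ext z; simp [hs]
        rw [this]
        exact measurableSet_lt measurable_const hφm
    have hfun : (fun z => Q z s) = Set.indicator {z | 0 < s ∧ s < φ z} H := by
      funext z
      simp only [hQdef, Set.indicator_apply, hSdef, Set.mem_setOf_eq]
    rw [hfun, lintegral_indicator hms]
  calc ∫⁻ z, (fun z => ENNReal.ofReal (φ z)) z * H z ∂volume
      = ∫⁻ z, ∫⁻ s, Q z s ∂volume ∂volume := lintegral_congr fun z => (h1 z).symm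
    _ = ∫⁻ s, ∫⁻ z, Q z s ∂volume ∂volume := lintegral_lintegral_swap hQ.aemeasurable
    _ = ∫⁻ s, (∫⁻ z in {z | 0 < s ∧ s < φ z}, H z) ∂volume := lintegral_congr h2

end Layer


section Core

/-- Core additive inequality on a convex-ish section `K` of the density. -/
lemma core_K {a b lam : ℝ} (ha : 0 < a) (hb : 0 < b) (hlam : lam ∈ Set.Ioo (0:ℝ) 1)
    (K : Set ℝ) (hKm : MeasurableSet K) (hK0 : 0 ∈ K)
    (hKc : ∀ x ∈ K, ∀ y ∈ K, a * x + b * y ∈ K)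
    {F G H : ℝ → ℝ≥0∞} (hFm : Measurable F) (hGm : Measurable G) (hHm : Measurable H)
    (hF1 : ∀ x, F x ≤ 1) (hF0 : F 0 = 1) (hG1 : ∀ y, G y ≤ 1) (hG0 : G 0 = 1)
    (cond : ∀ x y, F x ≠ 0 → G y ≠ 0 → F x ^ (1 - lam) * G y ^ lam ≤ H (a * x + b * y)) :
    ENNReal.ofReal a * (∫⁻ x in K, F x) + ENNReal.ofReal b * (∫⁻ y in K, G y)
      ≤ ∫⁻ z in K, H z := by
  obtain ⟨hlam0, hlam1⟩ := hlam
  set ν := volume.restrict K with hνdef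
  set H1 : ℝ → ℝ≥0∞ := fun z => min (H z) 1 with hH1def
  have hH1m : Measurable H1 := hHm.min measurable_const
  -- pointwise superlevel inequality
  have key : ∀ r : ℝ, ENNReal.ofReal a * ν {z | 0 < r ∧ ENNReal.ofReal r < F z}
      + ENNReal.ofReal b * ν {z | 0 < r ∧ ENNReal.ofReal r < G z}
      ≤ ν {z | 0 < r ∧ ENNReal.ofReal r < H1 z} := by
    intro r
    rcases le_or_gt r 0 with hr | hr
    · have hFe : {z | 0 < r ∧ ENNReal.ofReal r < F z} = ∅ := by
        ext z; simp only [Set.mem_setOf_eq, Set.mem_empty_iff_false, iff_false, not_and]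
        intro h; linarith
      have hGe : {z | 0 < r ∧ ENNReal.ofReal r < G z} = ∅ := by
        ext z; simp only [Set.mem_setOf_eq, Set.mem_empty_iff_false, iff_false, not_and]
        intro h; linarith
      simp [hFe, hGe]
    rcases le_or_gt 1 r with hr1 | hr1
    · have hFe : {z | 0 < r ∧ ENNReal.ofReal r < F z} = ∅ := by
        ext z
        simp only [Set.mem_setOf_eq, Set.mem_empty_iff_false, iff_false, not_and]
        intro _ hcon
        exact absurd (lt_of_lt_of_le hcon (hF1 z)) (not_lt.mpr (ENNReal.one_le_ofReal.mpr hr1))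
      have hGe : {z | 0 < r ∧ ENNReal.ofReal r < G z} = ∅ := by
        ext z
        simp only [Set.mem_setOf_eq, Set.mem_empty_iff_false, iff_false, not_and]
        intro _ hcon
        exact absurd (lt_of_lt_of_le hcon (hG1 z)) (not_lt.mpr (ENNReal.one_le_ofReal.mpr hr1))
      simp [hFe, hGe]
    -- main case 0 < r < 1
    set c : ℝ≥0∞ := ENNReal.ofReal r with hcdef
    have hc0 : c ≠ 0 := by simp [hcdef, ENNReal.ofReal_eq_zero]; linarith
    have hc1 : c < 1 := ENNReal.ofReal_lt_one.mpr hr1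
    have hctop : c ≠ ⊤ := ENNReal.ofReal_ne_top
    set A := K ∩ {x | c < F x} with hAdef
    set B := K ∩ {y | c < G y} with hBdef
    have hAm : MeasurableSet A := hKm.inter (measurableSet_lt measurable_const hFm)
    have hBm : MeasurableSet B := hKm.inter (measurableSet_lt measurable_const hGm)
    have h0A : (0:ℝ) ∈ A := ⟨hK0, by rw [Set.mem_setOf_eq, hF0]; exact hc1⟩
    have h0B : (0:ℝ) ∈ B := ⟨hK0, by rw [Set.mem_setOf_eq, hG0]; exact hc1⟩
    -- superlevel sets of restricted measure
    have hres : ∀ (J : ℝ → ℝ≥0∞), Measurable J →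
        ν {z | 0 < r ∧ c < J z} = volume (K ∩ {z | c < J z}) := by
      intro J hJ
      have hseteq : {z | 0 < r ∧ c < J z} = {z | c < J z} := by
        ext z; simp [hr]
      rw [hseteq, hνdef, Measure.restrict_apply (measurableSet_lt measurable_const hJ),
        Set.inter_comm]
    -- the sumset inclusion
    have hincl : (a • A) + (b • B) ⊆ K ∩ {z | c < H1 z} := by
      rintro z ⟨u, hu, v, hv, rfl⟩
      obtain ⟨x, hx, rfl⟩ := hu
      obtain ⟨y, hy, rfl⟩ := hv
      have hzK : a * x + b * y ∈ K := hKc x hx.1 y hy.1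
      have hFx : c < F x := hx.2
      have hGy : c < G y := hy.2
      have hFx0 : F x ≠ 0 := fun h => by rw [h] at hFx; exact absurd hFx (by simp)
      have hGy0 : G y ≠ 0 := fun h => by rw [h] at hGy; exact absurd hGy (by simp)
      have hHz : c < H (a * x + b * y) := by
        have hsplit : c = c ^ (1 - lam) * c ^ lam := by
          rw [← ENNReal.rpow_add _ _ hc0 hctop]
          norm_num
        calc c = c ^ (1 - lam) * c ^ lam := hsplit
          _ < F x ^ (1 - lam) * G y ^ lam :=
              ENNReal.mul_lt_mul (ENNReal.rpow_lt_rpow hFx (by linarith))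
                (ENNReal.rpow_lt_rpow hGy hlam0)
          _ ≤ H (a * x + b * y) := cond x y hFx0 hGy0
      refine ⟨hzK, ?_⟩
      rw [Set.mem_setOf_eq, hH1def]
      exact lt_min hHz hc1
    -- measures of dilates
    have hsmulA : volume (a • A) = ENNReal.ofReal a * volume A := by
      have := Measure.addHaar_smul_of_nonneg (volume : Measure ℝ) ha.le A
      simpa using this
    have hsmulB : volume (b • B) = ENNReal.ofReal b * volume B := by
      have := Measure.addHaar_smul_of_nonneg (volume : Measure ℝ) hb.le B
      simpa using this
    have hsmulAm : MeasurableSet (a • A) := by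
      have : a • A = (fun z : ℝ => a⁻¹ • z) ⁻¹' A := by
        ext z
        rw [Set.mem_preimage, Set.mem_smul_set_iff_inv_smul_mem₀ ha.ne']
      rw [this]
      exact hAm.preimage (measurable_const_smul _)
    have hsmulBm : MeasurableSet (b • B) := by
      have : b • B = (fun z : ℝ => b⁻¹ • z) ⁻¹' B := by
        ext z
        rw [Set.mem_preimage, Set.mem_smul_set_iff_inv_smul_mem₀ hb.ne']
      rw [this]
      exact hBm.preimage (measurable_const_smul _)
    have hAne : (a • A).Nonempty := ⟨0, 0, h0A, smul_zero a⟩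
    have hBne : (b • B).Nonempty := ⟨0, 0, h0B, smul_zero b⟩
    calc ENNReal.ofReal a * ν {z | 0 < r ∧ c < F z} + ENNReal.ofReal b * ν {z | 0 < r ∧ c < G z}
        = volume (a • A) + volume (b • B) := by
          rw [hres F hFm, hres G hGm, hsmulA, hsmulB, hAdef, hBdef]
      _ ≤ volume ((a • A) + (b • B)) := volume_add_le _ _ hsmulAm hsmulBm hAne hBne
      _ ≤ volume (K ∩ {z | c < H1 z}) := measure_mono hincl
      _ = ν {z | 0 < r ∧ c < H1 z} := (hres H1 hH1m).symm
  -- integrate the pointwise inequality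
  have hFmeas := fun_layer_meas ν hFm
  have hGmeas := fun_layer_meas ν hGm
  calc ENNReal.ofReal a * (∫⁻ x in K, F x) + ENNReal.ofReal b * (∫⁻ y in K, G y)
      = ENNReal.ofReal a * ∫⁻ r, ν {z | 0 < r ∧ ENNReal.ofReal r < F z} ∂volume
        + ENNReal.ofReal b * ∫⁻ r, ν {z | 0 < r ∧ ENNReal.ofReal r < G z} ∂volume := by
        rw [← fun_layer ν hFm, ← fun_layer ν hGm]
    _ = ∫⁻ r, (ENNReal.ofReal a * ν {z | 0 < r ∧ ENNReal.ofReal r < F z}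
        + ENNReal.ofReal b * ν {z | 0 < r ∧ ENNReal.ofReal r < G z}) ∂volume := by
        rw [lintegral_add_left (hFmeas.const_mul _), lintegral_const_mul _ hFmeas,
          lintegral_const_mul _ hGmeas]
    _ ≤ ∫⁻ r, ν {z | 0 < r ∧ ENNReal.ofReal r < H1 z} ∂volume := lintegral_mono key
    _ = ∫⁻ z in K, H1 z := (fun_layer ν hH1m).symm
    _ ≤ ∫⁻ z in K, H z := lintegral_mono fun z => min_le_left _ _

end Core


section Dim1

lemma Ks_meas {φ : ℝ → ℝ} (hφm : Measurable φ) (s : ℝ) :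
    MeasurableSet {z | 0 < s ∧ s < φ z} := by
  rcases le_or_gt s 0 with hs | hs
  · have : {z | 0 < s ∧ s < φ z} = ∅ := by
      ext z; simp only [Set.mem_setOf_eq, Set.mem_empty_iff_false, iff_false, not_and]
      intro h; linarith
    rw [this]; exact MeasurableSet.empty
  · have : {z | 0 < s ∧ s < φ z} = {z | s < φ z} := by
      ext z; simp [hs]
    rw [this]
    exact measurableSet_lt measurable_const hφm

lemma density_layer_meas (φ : ℝ → ℝ) (hφm : Measurable φ) {H : ℝ → ℝ≥0∞}
    (hH : Measurable H) :
    Measurable fun s => ∫⁻ z in {z | 0 < s ∧ s < φ z}, H z := by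
  set S := {p : ℝ × ℝ | 0 < p.2 ∧ p.2 < φ p.1} with hSdef
  have hS : MeasurableSet S := by
    have hset : S = {p : ℝ × ℝ | 0 < p.2} ∩ {p : ℝ × ℝ | p.2 < φ p.1} := rfl
    rw [hset]
    exact (measurable_snd measurableSet_Ioi).inter
      (measurableSet_lt measurable_snd (hφm.comp measurable_fst))
  set Q : ℝ → ℝ → ℝ≥0∞ := fun z s => Set.indicator S (fun p => H p.1) (z, s) with hQdef
  have hQ : Measurable (Function.uncurry Q) := by
    have : Function.uncurry Q = Set.indicator S (fun p => H p.1) := by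
      funext p; cases p; rfl
    rw [this]
    exact (hH.comp measurable_fst).indicator hS
  have h2 : (fun s => ∫⁻ z in {z | 0 < s ∧ s < φ z}, H z)
      = fun s => ∫⁻ z, Q z s ∂volume := by
    funext s
    have hfun : (fun z => Q z s) = Set.indicator {z | 0 < s ∧ s < φ z} H := by
      funext z
      simp only [hQdef, Set.indicator_apply, hSdef, Set.mem_setOf_eq]
    rw [hfun, lintegral_indicator (Ks_meas hφm s)]
  rw [h2]
  exact hQ.lintegral_prod_left'

/-- normalized additive 1-D inequality for a quasi-concave density peaked at `0`. -/
lemma dim1_norm {a b lam : ℝ} (ha : 0 < a) (hb : 0 < b) (hab : a + b ≤ 1)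
    (hlam : lam ∈ Set.Ioo (0:ℝ) 1)
    {φ : ℝ → ℝ} (hφm : Measurable φ)
    (hφqc : ∀ x y : ℝ, ∀ τ ∈ Set.Icc (0:ℝ) 1, min (φ x) (φ y) ≤ φ ((1 - τ) * x + τ * y))
    (hφmax : ∀ x, φ x ≤ φ 0)
    {F G H : ℝ → ℝ≥0∞} (hFm : Measurable F) (hGm : Measurable G) (hHm : Measurable H)
    (hF1 : ∀ x, F x ≤ 1) (hF0 : F 0 = 1) (hG1 : ∀ y, G y ≤ 1) (hG0 : G 0 = 1)
    (cond : ∀ x y, F x ≠ 0 → G y ≠ 0 → F x ^ (1 - lam) * G y ^ lam ≤ H (a * x + b * y)) :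
    ENNReal.ofReal a * (∫⁻ x, F x ∂(volume.withDensity fun x => ENNReal.ofReal (φ x)))
      + ENNReal.ofReal b * (∫⁻ y, G y ∂(volume.withDensity fun x => ENNReal.ofReal (φ x)))
      ≤ ∫⁻ z, H z ∂(volume.withDensity fun x => ENNReal.ofReal (φ x)) := by
  rw [density_layer φ hφm hFm, density_layer φ hφm hGm, density_layer φ hφm hHm]
  have hFs := density_layer_meas φ hφm hFm
  have hGs := density_layer_meas φ hφm hGm
  have key : ∀ s : ℝ, ENNReal.ofReal a * (∫⁻ z in {z | 0 < s ∧ s < φ z}, F z)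
      + ENNReal.ofReal b * (∫⁻ z in {z | 0 < s ∧ s < φ z}, G z)
      ≤ ∫⁻ z in {z | 0 < s ∧ s < φ z}, H z := by
    intro s
    rcases Set.eq_empty_or_nonempty {z | 0 < s ∧ s < φ z} with he | hne
    · rw [he]
      simp [Measure.restrict_empty]
    · obtain ⟨z₀, hz₀⟩ := hne
      have hs : 0 < s := hz₀.1
      have hK0 : (0:ℝ) ∈ {z | 0 < s ∧ s < φ z} := ⟨hs, lt_of_lt_of_le hz₀.2 (hφmax z₀)⟩
      have hKc : ∀ x ∈ {z | 0 < s ∧ s < φ z}, ∀ y ∈ {z | 0 < s ∧ s < φ z},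
          a * x + b * y ∈ {z | 0 < s ∧ s < φ z} := by
        intro x hx y hy
        have hab0 : 0 < a + b := by linarith
        have hτ : b / (a + b) ∈ Set.Icc (0:ℝ) 1 :=
          ⟨by positivity, by rw [div_le_one hab0]; linarith⟩
        have h1 := hφqc x y _ hτ
        have heq1 : (1 - b / (a + b)) * x + (b / (a + b)) * y = (a * x + b * y) / (a + b) := by
          field_simp
          try ring
        rw [heq1] at h1
        have hτ2 : a + b ∈ Set.Icc (0:ℝ) 1 := ⟨hab0.le, hab⟩
        have h2 := hφqc 0 ((a * x + b * y) / (a + b)) _ hτ2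
        have heq2 : (1 - (a + b)) * 0 + (a + b) * ((a * x + b * y) / (a + b))
            = a * x + b * y := by
          field_simp
          ring
        rw [heq2] at h2
        have hw : s < φ ((a * x + b * y) / (a + b)) :=
          lt_of_lt_of_le (lt_min hx.2 hy.2) h1
        have h0 : s < φ 0 := lt_of_lt_of_le hx.2 (hφmax x)
        exact ⟨hs, lt_of_lt_of_le (lt_min h0 hw) h2⟩
      exact core_K ha hb hlam _ (Ks_meas hφm s) hK0 hKc hFm hGm hHm hF1 hF0 hG1 hG0 cond
  calc ENNReal.ofReal a * (∫⁻ s, (∫⁻ z in {z | 0 < s ∧ s < φ z}, F z) ∂volume)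
      + ENNReal.ofReal b * (∫⁻ s, (∫⁻ z in {z | 0 < s ∧ s < φ z}, G z) ∂volume)
      = ∫⁻ s, (ENNReal.ofReal a * (∫⁻ z in {z | 0 < s ∧ s < φ z}, F z)
        + ENNReal.ofReal b * (∫⁻ z in {z | 0 < s ∧ s < φ z}, G z)) ∂volume := by
        rw [lintegral_add_left (hFs.const_mul _), lintegral_const_mul _ hFs,
          lintegral_const_mul _ hGs]
    _ ≤ ∫⁻ s, (∫⁻ z in {z | 0 < s ∧ s < φ z}, H z) ∂volume := lintegral_mono key

/-- full 1-D weighted Prékopa–Leindler-type inequality. -/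
lemma dim1 {a b lam alpha beta : ℝ} (ha : 0 < a) (hb : 0 < b) (hab : a + b ≤ 1)
    (hlam : lam ∈ Set.Ioo (0:ℝ) 1) (hal : a = (1 - lam) * alpha) (hbe : b = lam * beta)
    {φ : ℝ → ℝ} (hφm : Measurable φ)
    (hφqc : ∀ x y : ℝ, ∀ τ ∈ Set.Icc (0:ℝ) 1, min (φ x) (φ y) ≤ φ ((1 - τ) * x + τ * y))
    (hφmax : ∀ x, φ x ≤ φ 0)
    {F G H : ℝ → ℝ≥0∞} (hFm : Measurable F) (hGm : Measurable G) (hHm : Measurable H)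
    (hFu : ∀ x, F x ≤ F 0) (hGu : ∀ y, G y ≤ G 0)
    (cond : ∀ x y, F x ≠ 0 → G y ≠ 0 → F x ^ (1 - lam) * G y ^ lam ≤ H (a * x + b * y)) :
    ENNReal.ofReal (alpha ^ (1 - lam) * beta ^ lam)
      * (∫⁻ x, F x ∂(volume.withDensity fun x => ENNReal.ofReal (φ x))) ^ (1 - lam)
      * (∫⁻ y, G y ∂(volume.withDensity fun x => ENNReal.ofReal (φ x))) ^ lam
      ≤ ∫⁻ z, H z ∂(volume.withDensity fun x => ENNReal.ofReal (φ x)) := by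
  obtain ⟨hlam0, hlam1⟩ := hlam
  have h1lam : (0:ℝ) < 1 - lam := by linarith
  have halpha : 0 < alpha := by
    by_contra hcon
    push_neg at hcon
    nlinarith
  have hbeta : 0 < beta := by
    by_contra hcon
    push_neg at hcon
    nlinarith
  set ν := volume.withDensity fun x => ENNReal.ofReal (φ x) with hνdef
  rcases eq_or_ne (F 0) 0 with hc0 | hc0
  · have hF00 : F = fun _ => (0:ℝ≥0∞) := funext fun x => le_antisymm (hc0 ▸ hFu x) zero_le
    rw [hF00]
    rw [lintegral_zero, ENNReal.zero_rpow_of_pos h1lam, mul_zero, zero_mul]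
    exact zero_le
  rcases eq_or_ne (G 0) 0 with hd0 | hd0
  · have hG00 : G = fun _ => (0:ℝ≥0∞) := funext fun y => le_antisymm (hd0 ▸ hGu y) zero_le
    rw [hG00]
    rw [lintegral_zero, ENNReal.zero_rpow_of_pos hlam0, mul_zero]
    exact zero_le
  -- truncation step
  have main : ∀ k : ℕ,
      ENNReal.ofReal (alpha ^ (1 - lam) * beta ^ lam)
        * (∫⁻ x, min (F x) ((k:ℝ≥0∞) + 1) ∂ν) ^ (1 - lam)
        * (∫⁻ y, min (G y) ((k:ℝ≥0∞) + 1) ∂ν) ^ lam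
      ≤ ∫⁻ z, H z ∂ν := by
    intro k
    have hk1top : ((k:ℝ≥0∞) + 1) ≠ ⊤ :=
      ENNReal.add_ne_top.mpr ⟨ENNReal.natCast_ne_top k, ENNReal.one_ne_top⟩
    set c := min (F 0) ((k:ℝ≥0∞) + 1) with hcdef
    set d := min (G 0) ((k:ℝ≥0∞) + 1) with hddef
    have hcpos : 0 < c := lt_min (pos_iff_ne_zero.mpr hc0) (by simp)
    have hdpos : 0 < d := lt_min (pos_iff_ne_zero.mpr hd0) (by simp)
    have hcne : c ≠ 0 := hcpos.ne'
    have hdne : d ≠ 0 := hdpos.ne'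
    have hctop : c ≠ ⊤ := ne_top_of_le_ne_top hk1top (min_le_right _ _)
    have hdtop : d ≠ ⊤ := ne_top_of_le_ne_top hk1top (min_le_right _ _)
    set Fk : ℝ → ℝ≥0∞ := fun x => min (F x) ((k:ℝ≥0∞) + 1) with hFkdef
    set Gk : ℝ → ℝ≥0∞ := fun y => min (G y) ((k:ℝ≥0∞) + 1) with hGkdef
    have hFkm : Measurable Fk := hFm.min measurable_const
    have hGkm : Measurable Gk := hGm.min measurable_const
    set m := c ^ (1 - lam) * d ^ lam with hmdef
    have hcrp0 : c ^ (1 - lam) ≠ 0 := by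
      simp only [ne_eq, ENNReal.rpow_eq_zero_iff, not_or, not_and]
      exact ⟨fun h => absurd h hcne, fun h => absurd h hctop⟩
    have hdrp0 : d ^ lam ≠ 0 := by
      simp only [ne_eq, ENNReal.rpow_eq_zero_iff, not_or, not_and]
      exact ⟨fun h => absurd h hdne, fun h => absurd h hdtop⟩
    have hcrptop : c ^ (1 - lam) ≠ ⊤ := ENNReal.rpow_ne_top_of_nonneg h1lam.le hctop
    have hdrptop : d ^ lam ≠ ⊤ := ENNReal.rpow_ne_top_of_nonneg hlam0.le hdtop
    have hm0 : m ≠ 0 := mul_ne_zero hcrp0 hdrp0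
    have hmtop : m ≠ ⊤ := ENNReal.mul_ne_top hcrptop hdrptop
    set F' : ℝ → ℝ≥0∞ := fun x => Fk x * c⁻¹ with hF'def
    set G' : ℝ → ℝ≥0∞ := fun y => Gk y * d⁻¹ with hG'def
    set H' : ℝ → ℝ≥0∞ := fun z => H z * m⁻¹ with hH'def
    have hF'm : Measurable F' := hFkm.mul measurable_const
    have hG'm : Measurable G' := hGkm.mul measurable_const
    have hH'm : Measurable H' := hHm.mul measurable_const
    have hF'1 : ∀ x, F' x ≤ 1 := by
      intro x
      have hle : Fk x ≤ c := min_le_min (hFu x) le_rfl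
      calc F' x = Fk x * c⁻¹ := rfl
        _ ≤ c * c⁻¹ := mul_le_mul_left hle _
        _ = 1 := ENNReal.mul_inv_cancel hcne hctop
    have hG'1 : ∀ y, G' y ≤ 1 := by
      intro y
      have hle : Gk y ≤ d := min_le_min (hGu y) le_rfl
      calc G' y = Gk y * d⁻¹ := rfl
        _ ≤ d * d⁻¹ := mul_le_mul_left hle _
        _ = 1 := ENNReal.mul_inv_cancel hdne hdtop
    have hF'0 : F' 0 = 1 := ENNReal.mul_inv_cancel hcne hctop
    have hG'0 : G' 0 = 1 := ENNReal.mul_inv_cancel hdne hdtop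
    have cond' : ∀ x y, F' x ≠ 0 → G' y ≠ 0 →
        F' x ^ (1 - lam) * G' y ^ lam ≤ H' (a * x + b * y) := by
      intro x y hx hy
      have hFx0 : F x ≠ 0 := by
        intro h
        apply hx
        simp [hF'def, hFkdef, h]
      have hGy0 : G y ≠ 0 := by
        intro h
        apply hy
        simp [hG'def, hGkdef, h]
      have e1 : F' x ^ (1 - lam) = Fk x ^ (1 - lam) * (c ^ (1 - lam))⁻¹ := by
        rw [hF'def]
        rw [ENNReal.mul_rpow_of_nonneg _ _ h1lam.le, ENNReal.inv_rpow]
      have e2 : G' y ^ lam = Gk y ^ lam * (d ^ lam)⁻¹ := by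
        rw [hG'def]
        rw [ENNReal.mul_rpow_of_nonneg _ _ hlam0.le, ENNReal.inv_rpow]
      have e3 : (c ^ (1 - lam))⁻¹ * (d ^ lam)⁻¹ = m⁻¹ := by
        rw [hmdef, ENNReal.mul_inv (Or.inl hcrp0) (Or.inl hcrptop)]
      calc F' x ^ (1 - lam) * G' y ^ lam
          = (Fk x ^ (1 - lam) * Gk y ^ lam) * ((c ^ (1 - lam))⁻¹ * (d ^ lam)⁻¹) := by
            rw [e1, e2]; ring
        _ = (Fk x ^ (1 - lam) * Gk y ^ lam) * m⁻¹ := by rw [e3]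
        _ ≤ (F x ^ (1 - lam) * G y ^ lam) * m⁻¹ := by
            refine mul_le_mul_left (mul_le_mul'
              (ENNReal.rpow_le_rpow (min_le_left _ _) h1lam.le)
              (ENNReal.rpow_le_rpow (min_le_left _ _) hlam0.le)) _
        _ ≤ H (a * x + b * y) * m⁻¹ := mul_le_mul_left (cond x y hFx0 hGy0) _
        _ = H' (a * x + b * y) := rfl
    have A := dim1_norm ha hb hab ⟨hlam0, hlam1⟩ hφm hφqc hφmax hF'm hG'm hH'm
      hF'1 hF'0 hG'1 hG'0 cond'
    have hIF' : (∫⁻ x, F' x ∂ν) = (∫⁻ x, Fk x ∂ν) * c⁻¹ :=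
      lintegral_mul_const' _ _ (ENNReal.inv_ne_top.mpr hcne)
    have hIG' : (∫⁻ y, G' y ∂ν) = (∫⁻ y, Gk y ∂ν) * d⁻¹ :=
      lintegral_mul_const' _ _ (ENNReal.inv_ne_top.mpr hdne)
    have hIH' : (∫⁻ z, H' z ∂ν) = (∫⁻ z, H z ∂ν) * m⁻¹ :=
      lintegral_mul_const' _ _ (ENNReal.inv_ne_top.mpr hm0)
    rw [hIF', hIG', hIH'] at A
    set IFk := ∫⁻ x, Fk x ∂ν with hIFkdef
    set IGk := ∫⁻ y, Gk y ∂ν with hIGkdef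
    set IH := ∫⁻ z, H z ∂ν with hIHdef
    set X := ENNReal.ofReal alpha * (IFk * c⁻¹) with hXdef
    set Y := ENNReal.ofReal beta * (IGk * d⁻¹) with hYdef
    have hXY : X ^ (1 - lam) * Y ^ lam ≤ IH * m⁻¹ := by
      refine le_trans (geom_le_arith X Y ⟨hlam0, hlam1⟩) ?_
      have eX : ENNReal.ofReal (1 - lam) * X = ENNReal.ofReal a * (IFk * c⁻¹) := by
        rw [hXdef, ← mul_assoc, ← ENNReal.ofReal_mul h1lam.le, ← hal]
      have eY : ENNReal.ofReal lam * Y = ENNReal.ofReal b * (IGk * d⁻¹) := by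
        rw [hYdef, ← mul_assoc, ← ENNReal.ofReal_mul hlam0.le, ← hbe]
      rw [eX, eY]
      exact A
    have hfin : m * (X ^ (1 - lam) * Y ^ lam) ≤ IH := by
      calc m * (X ^ (1 - lam) * Y ^ lam) ≤ m * (IH * m⁻¹) := mul_le_mul_right hXY _
        _ = IH := by rw [← div_eq_mul_inv, ENNReal.mul_div_cancel hm0 hmtop]
    have hexpand : m * (X ^ (1 - lam) * Y ^ lam)
        = ENNReal.ofReal (alpha ^ (1 - lam) * beta ^ lam) * IFk ^ (1 - lam) * IGk ^ lam := by
      have e1 : m * (X ^ (1 - lam) * Y ^ lam)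
          = (c ^ (1 - lam) * X ^ (1 - lam)) * (d ^ lam * Y ^ lam) := by
        rw [hmdef]; ring
      have e2 : c ^ (1 - lam) * X ^ (1 - lam) = (c * X) ^ (1 - lam) :=
        (ENNReal.mul_rpow_of_nonneg c X h1lam.le).symm
      have e3 : d ^ lam * Y ^ lam = (d * Y) ^ lam :=
        (ENNReal.mul_rpow_of_nonneg d Y hlam0.le).symm
      have e4 : c * X = ENNReal.ofReal alpha * IFk := by
        rw [hXdef]
        calc c * (ENNReal.ofReal alpha * (IFk * c⁻¹))
            = ENNReal.ofReal alpha * IFk * (c * c⁻¹) := by ring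
          _ = ENNReal.ofReal alpha * IFk := by
              rw [ENNReal.mul_inv_cancel hcne hctop, mul_one]
      have e5 : d * Y = ENNReal.ofReal beta * IGk := by
        rw [hYdef]
        calc d * (ENNReal.ofReal beta * (IGk * d⁻¹))
            = ENNReal.ofReal beta * IGk * (d * d⁻¹) := by ring
          _ = ENNReal.ofReal beta * IGk := by
              rw [ENNReal.mul_inv_cancel hdne hdtop, mul_one]
      rw [e1, e2, e3, e4, e5,
        ENNReal.mul_rpow_of_nonneg _ _ h1lam.le, ENNReal.mul_rpow_of_nonneg _ _ hlam0.le,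
        ENNReal.ofReal_rpow_of_pos halpha, ENNReal.ofReal_rpow_of_pos hbeta,
        ENNReal.ofReal_mul (by positivity : (0:ℝ) ≤ alpha ^ (1 - lam))]
      ring
    rw [← hexpand]
    exact hfin
  -- pass to the limit
  set ν' := volume.withDensity fun x => ENNReal.ofReal (φ x)
  have hsupmin : ∀ x : ℝ≥0∞, (⨆ k : ℕ, min x ((k:ℝ≥0∞) + 1)) = x := by
    intro x
    refine le_antisymm (iSup_le fun k => min_le_left _ _) ?_
    rcases eq_or_ne x ⊤ with hx | hx
    · have htop : (⊤:ℝ≥0∞) ≤ ⨆ k : ℕ, min x ((k:ℝ≥0∞) + 1) := by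
        refine le_trans (le_of_eq ENNReal.iSup_natCast.symm) (iSup_le fun n => ?_)
        calc (n:ℝ≥0∞) ≤ (n:ℝ≥0∞) + 1 := le_self_add
          _ = min ⊤ ((n:ℝ≥0∞) + 1) := (min_eq_right le_top).symm
          _ = min x ((n:ℝ≥0∞) + 1) := by rw [hx]
          _ ≤ ⨆ k : ℕ, min x ((k:ℝ≥0∞) + 1) :=
              le_iSup (fun k : ℕ => min x ((k:ℝ≥0∞) + 1)) n
      exact le_trans (le_of_eq hx) htop
    · obtain ⟨n, hn⟩ := ENNReal.exists_nat_gt hx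
      have : min x ((n:ℝ≥0∞) + 1) = x := min_eq_left (le_trans hn.le le_self_add)
      calc x = min x ((n:ℝ≥0∞) + 1) := this.symm
        _ ≤ ⨆ k : ℕ, min x ((k:ℝ≥0∞) + 1) :=
            le_iSup (fun k : ℕ => min x ((k:ℝ≥0∞) + 1)) n
  have hmonoF : Monotone fun (k:ℕ) (x:ℝ) => min (F x) ((k:ℝ≥0∞) + 1) := by
    intro j k hjk x
    exact min_le_min le_rfl (add_le_add (by exact_mod_cast hjk) le_rfl)
  have hmonoG : Monotone fun (k:ℕ) (y:ℝ) => min (G y) ((k:ℝ≥0∞) + 1) := by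
    intro j k hjk y
    exact min_le_min le_rfl (add_le_add (by exact_mod_cast hjk) le_rfl)
  have hIF : (∫⁻ x, F x ∂ν) = ⨆ k : ℕ, ∫⁻ x, min (F x) ((k:ℝ≥0∞) + 1) ∂ν := by
    rw [← lintegral_iSup (fun k => hFm.min measurable_const) hmonoF]
    refine lintegral_congr fun x => ?_
    exact (hsupmin (F x)).symm
  have hIG : (∫⁻ y, G y ∂ν) = ⨆ k : ℕ, ∫⁻ y, min (G y) ((k:ℝ≥0∞) + 1) ∂ν := by
    rw [← lintegral_iSup (fun k => hGm.min measurable_const) hmonoG]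
    refine lintegral_congr fun y => ?_
    exact (hsupmin (G y)).symm
  have hmonoIF : Monotone fun k : ℕ => ∫⁻ x, min (F x) ((k:ℝ≥0∞) + 1) ∂ν :=
    fun j k hjk => lintegral_mono fun x => hmonoF hjk x
  have hmonoIG : Monotone fun k : ℕ => ∫⁻ y, min (G y) ((k:ℝ≥0∞) + 1) ∂ν :=
    fun j k hjk => lintegral_mono fun y => hmonoG hjk y
  rw [hIF, hIG, iSup_rpow _ h1lam, iSup_rpow _ hlam0, ENNReal.mul_iSup]
  refine iSup_le fun j => ?_
  rw [ENNReal.mul_iSup, ENNReal.iSup_mul]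
  refine iSup_le fun k => ?_
  have hk' : (∫⁻ x, min (F x) ((k:ℝ≥0∞) + 1) ∂ν) ^ (1 - lam)
      ≤ (∫⁻ x, min (F x) (((max k j : ℕ):ℝ≥0∞) + 1) ∂ν) ^ (1 - lam) :=
    ENNReal.rpow_le_rpow (hmonoIF (le_max_left k j)) h1lam.le
  have hj' : (∫⁻ y, min (G y) ((j:ℝ≥0∞) + 1) ∂ν) ^ lam
      ≤ (∫⁻ y, min (G y) (((max k j : ℕ):ℝ≥0∞) + 1) ∂ν) ^ lam :=
    ENNReal.rpow_le_rpow (hmonoIG (le_max_right k j)) hlam0.le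
  calc ENNReal.ofReal (alpha ^ (1 - lam) * beta ^ lam)
        * (∫⁻ x, min (F x) ((k:ℝ≥0∞) + 1) ∂ν) ^ (1 - lam)
        * (∫⁻ y, min (G y) ((j:ℝ≥0∞) + 1) ∂ν) ^ lam
      ≤ ENNReal.ofReal (alpha ^ (1 - lam) * beta ^ lam)
        * (∫⁻ x, min (F x) (((max k j : ℕ):ℝ≥0∞) + 1) ∂ν) ^ (1 - lam)
        * (∫⁻ y, min (G y) (((max k j : ℕ):ℝ≥0∞) + 1) ∂ν) ^ lam :=
        mul_le_mul' (mul_le_mul' le_rfl hk') hj'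
    _ ≤ ∫⁻ z, H z ∂ν := main (max k j)

end Dim1


section Induction

lemma cons_measurable (n : ℕ) :
    Measurable fun p : ℝ × (Fin n → ℝ) => Fin.cons (α := fun _ => ℝ) p.1 p.2 := by
  apply measurable_pi_iff.mpr
  intro i
  refine Fin.cases ?_ ?_ i
  · simpa using measurable_fst
  · intro j; simp only [Fin.cons_succ]; exact (measurable_pi_apply j).comp measurable_snd

lemma pi_succ_lintegral (n : ℕ) (μ : Fin (n+1) → Measure ℝ) [∀ i, SigmaFinite (μ i)]
    (F : (Fin (n+1) → ℝ) → ℝ≥0∞) (hF : Measurable F) :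
    ∫⁻ x, F x ∂(Measure.pi μ)
      = ∫⁻ x₁, ∫⁻ x', F (Fin.cons x₁ x') ∂(Measure.pi fun j => μ j.succ) ∂(μ 0) := by
  set e := MeasurableEquiv.piFinSuccAbove (fun _ : Fin (n+1) => ℝ) 0 with he
  have hmp := measurePreserving_piFinSuccAbove μ 0
  have hμ' : (fun j : Fin n => μ ((0:Fin (n+1)).succAbove j)) = fun j => μ j.succ := by
    funext j; rw [Fin.succAbove_zero]
  rw [hμ'] at hmp
  have hesymm : ∀ (x₁ : ℝ) (x' : Fin n → ℝ), e.symm (x₁, x') = Fin.cons x₁ x' := by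
    intro x₁ x'
    show Fin.insertNthEquiv (fun _ : Fin (n+1) => ℝ) 0 (x₁, x') = Fin.cons x₁ x'
    simp [Fin.insertNthEquiv, Fin.insertNth_zero]
  have hgm : Measurable fun p : ℝ × (Fin n → ℝ) => F (e.symm p) := hF.comp e.symm.measurable
  have h1 : ∫⁻ x, F x ∂(Measure.pi μ)
      = ∫⁻ p, F (e.symm p) ∂((μ 0).prod (Measure.pi fun j => μ j.succ)) := by
    exact ((hmp.symm e).lintegral_comp hF).symm
  rw [h1, lintegral_prod _ hgm.aemeasurable]
  refine lintegral_congr fun x₁ => lintegral_congr fun x' => by rw [hesymm]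

/-- the main induction over the dimension. -/
lemma main_ind (n : ℕ) {a b lam alpha beta : ℝ} (ha : 0 < a) (hb : 0 < b)
    (hab : a + b ≤ 1) (hlam : lam ∈ Set.Ioo (0:ℝ) 1)
    (hal : a = (1 - lam) * alpha) (hbe : b = lam * beta)
    (μ : Fin n → Measure ℝ) (hSF : ∀ i, SigmaFinite (μ i))
    (φ : Fin n → ℝ → ℝ) (hφm : ∀ i, Measurable (φ i))
    (hμ : ∀ i, μ i = volume.withDensity fun x => ENNReal.ofReal (φ i x))
    (hφqc : ∀ i, ∀ x y : ℝ, ∀ τ ∈ Set.Icc (0:ℝ) 1,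
      min (φ i x) (φ i y) ≤ φ i ((1 - τ) * x + τ * y))
    (hφmax : ∀ i x, φ i x ≤ φ i 0)
    (F G H : (Fin n → ℝ) → ℝ≥0∞)
    (hFm : Measurable F) (hGm : Measurable G) (hHm : Measurable H)
    (hFu : ∀ (x : Fin n → ℝ) (ε : Fin n → Bool), F x ≤ F (fun i => if ε i then x i else 0))
    (hGu : ∀ (y : Fin n → ℝ) (ε : Fin n → Bool), G y ≤ G (fun i => if ε i then y i else 0))
    (cond : ∀ x y, F x ≠ 0 → G y ≠ 0 →
      F x ^ (1 - lam) * G y ^ lam ≤ H (a • x + b • y)) :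
    ENNReal.ofReal (alpha ^ (1 - lam) * beta ^ lam) ^ n
      * (∫⁻ x, F x ∂(Measure.pi μ)) ^ (1 - lam)
      * (∫⁻ y, G y ∂(Measure.pi μ)) ^ lam
      ≤ ∫⁻ z, H z ∂(Measure.pi μ) := by
  induction n with
  | zero =>
    haveI := hSF
    obtain ⟨hlam0, hlam1⟩ := hlam
    have h1lam : (0:ℝ) < 1 - lam := by linarith
    rw [Measure.pi_of_empty μ 0]
    rw [lintegral_dirac' _ hFm, lintegral_dirac' _ hGm, lintegral_dirac' _ hHm]
    rw [pow_zero, one_mul]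
    rcases eq_or_ne (F 0) 0 with hF0 | hF0
    · rw [hF0, ENNReal.zero_rpow_of_pos h1lam, zero_mul]
      exact zero_le
    rcases eq_or_ne (G 0) 0 with hG0 | hG0
    · rw [hG0, ENNReal.zero_rpow_of_pos hlam0, mul_zero]
      exact zero_le
    have := cond 0 0 hF0 hG0
    have h00 : a • (0 : Fin 0 → ℝ) + b • (0 : Fin 0 → ℝ) = 0 := Subsingleton.elim _ _
    rwa [h00] at this
  | succ n ih =>
    haveI := hSF
    obtain ⟨hlam0, hlam1⟩ := hlam
    have h1lam : (0:ℝ) < 1 - lam := by linarith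
    have halpha : 0 < alpha := by
      by_contra hcon
      push_neg at hcon
      nlinarith
    have hbeta : 0 < beta := by
      by_contra hcon
      push_neg at hcon
      nlinarith
    set Cn := ENNReal.ofReal (alpha ^ (1 - lam) * beta ^ lam) with hCndef
    have hCn0 : Cn ≠ 0 := by
      rw [hCndef]
      simp only [ne_eq, ENNReal.ofReal_eq_zero, not_le]
      positivity
    have hCntop : Cn ≠ ⊤ := ENNReal.ofReal_ne_top
    have hCnn0 : Cn ^ n ≠ 0 := pow_ne_zero n hCn0
    have hCnntop : Cn ^ n ≠ ⊤ := ENNReal.pow_ne_top hCntop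
    set μ' : Fin n → Measure ℝ := fun j => μ j.succ with hμ'def
    haveI : ∀ j, SigmaFinite (μ' j) := fun j => hSF j.succ
    set ν' := Measure.pi μ' with hν'def
    have hconsm := cons_measurable n
    -- sliced functions
    set F1 : ℝ → ℝ≥0∞ := fun x₁ => ∫⁻ x', F (Fin.cons x₁ x') ∂ν' with hF1def
    set G1 : ℝ → ℝ≥0∞ := fun y₁ => ∫⁻ y', G (Fin.cons y₁ y') ∂ν' with hG1def
    set H0 : ℝ → ℝ≥0∞ := fun z₁ => ∫⁻ z', H (Fin.cons z₁ z') ∂ν' with hH0def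
    have hF1m : Measurable F1 := (hFm.comp hconsm).lintegral_prod_right'
    have hG1m : Measurable G1 := (hGm.comp hconsm).lintegral_prod_right'
    have hH0m : Measurable H0 := (hHm.comp hconsm).lintegral_prod_right'
    -- inner inequality from the inductive hypothesis
    have inner : ∀ x₁ y₁ : ℝ,
        Cn ^ n * (F1 x₁) ^ (1 - lam) * (G1 y₁) ^ lam ≤ H0 (a * x₁ + b * y₁) := by
      intro x₁ y₁
      have hmk : ∀ c : ℝ, Measurable fun w : Fin n → ℝ => (c, w) :=
        fun c => measurable_const.prodMk measurable_id
      have hFms : Measurable fun x' => F (Fin.cons x₁ x') := hFm.comp (hconsm.comp (hmk x₁))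
      have hGms : Measurable fun y' => G (Fin.cons y₁ y') := hGm.comp (hconsm.comp (hmk y₁))
      have hHms : Measurable fun z' => H (Fin.cons (a * x₁ + b * y₁) z') :=
        hHm.comp (hconsm.comp (hmk _))
      have hFus : ∀ (x' : Fin n → ℝ) (ε' : Fin n → Bool),
          F (Fin.cons x₁ x') ≤ F (Fin.cons x₁ (fun j => if ε' j then x' j else 0)) := by
        intro x' ε'
        have := hFu (Fin.cons x₁ x') (Fin.cons true ε')
        have heq : (fun i => if (Fin.cons (α := fun _ => Bool) true ε') i
            then (Fin.cons (α := fun _ => ℝ) x₁ x') i else 0)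
            = Fin.cons (α := fun _ => ℝ) x₁ (fun j => if ε' j then x' j else 0) := by
          funext i
          refine Fin.cases ?_ ?_ i
          · simp
          · intro j; simp
        rwa [heq] at this
      have hGus : ∀ (y' : Fin n → ℝ) (ε' : Fin n → Bool),
          G (Fin.cons y₁ y') ≤ G (Fin.cons y₁ (fun j => if ε' j then y' j else 0)) := by
        intro y' ε'
        have := hGu (Fin.cons y₁ y') (Fin.cons true ε')
        have heq : (fun i => if (Fin.cons (α := fun _ => Bool) true ε') i
            then (Fin.cons (α := fun _ => ℝ) y₁ y') i else 0)
            = Fin.cons (α := fun _ => ℝ) y₁ (fun j => if ε' j then y' j else 0) := by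
          funext i
          refine Fin.cases ?_ ?_ i
          · simp
          · intro j; simp
        rwa [heq] at this
      have conds : ∀ x' y', F (Fin.cons x₁ x') ≠ 0 → G (Fin.cons y₁ y') ≠ 0 →
          F (Fin.cons x₁ x') ^ (1 - lam) * G (Fin.cons y₁ y') ^ lam
            ≤ H (Fin.cons (a * x₁ + b * y₁) (a • x' + b • y')) := by
        intro x' y' hx' hy'
        have hcons_comb :
            a • (Fin.cons x₁ x' : Fin (n+1) → ℝ) + b • (Fin.cons y₁ y' : Fin (n+1) → ℝ)
              = Fin.cons (α := fun _ => ℝ) (a * x₁ + b * y₁) (a • x' + b • y') := by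
          funext i
          refine Fin.cases ?_ ?_ i
          · simp
          · intro j; simp
        have := cond (Fin.cons x₁ x') (Fin.cons y₁ y') hx' hy'
        rwa [hcons_comb] at this
      exact ih (fun j => μ j.succ) (fun j => hSF j.succ) (fun j => φ j.succ)
        (fun j => hφm j.succ) (fun j => hμ j.succ) (fun j => hφqc j.succ)
        (fun j x => hφmax j.succ x)
        (fun x' => F (Fin.cons x₁ x')) (fun y' => G (Fin.cons y₁ y'))
        (fun z' => H (Fin.cons (a * x₁ + b * y₁) z'))
        hFms hGms hHms hFus hGus conds
    -- one-dimensional reduction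
    set H1 : ℝ → ℝ≥0∞ := fun z₁ => H0 z₁ * (Cn ^ n)⁻¹ with hH1def
    have hH1m : Measurable H1 := hH0m.mul measurable_const
    have cond1 : ∀ x₁ y₁ : ℝ, F1 x₁ ≠ 0 → G1 y₁ ≠ 0 →
        F1 x₁ ^ (1 - lam) * G1 y₁ ^ lam ≤ H1 (a * x₁ + b * y₁) := by
      intro x₁ y₁ _ _
      have h := inner x₁ y₁
      have h2 := mul_le_mul_right h ((Cn ^ n)⁻¹)
      calc F1 x₁ ^ (1 - lam) * G1 y₁ ^ lam
          = (Cn ^ n)⁻¹ * (Cn ^ n * F1 x₁ ^ (1 - lam) * G1 y₁ ^ lam) := by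
            rw [← mul_assoc, ← mul_assoc, ENNReal.inv_mul_cancel hCnn0 hCnntop, one_mul]
        _ ≤ (Cn ^ n)⁻¹ * H0 (a * x₁ + b * y₁) := h2
        _ = H1 (a * x₁ + b * y₁) := by rw [hH1def]; dsimp only; rw [mul_comm]
    have hF1u : ∀ x₁, F1 x₁ ≤ F1 0 := by
      intro x₁
      refine lintegral_mono fun x' => ?_
      have := hFu (Fin.cons x₁ x') (Fin.cons false (fun _ => true))
      have heq : (fun i => if (Fin.cons (α := fun _ => Bool) false fun _ => true) i
          then (Fin.cons (α := fun _ => ℝ) x₁ x') i else 0)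
          = Fin.cons (α := fun _ => ℝ) 0 x' := by
        funext i
        refine Fin.cases ?_ ?_ i
        · simp
        · intro j; simp
      rwa [heq] at this
    have hG1u : ∀ y₁, G1 y₁ ≤ G1 0 := by
      intro y₁
      refine lintegral_mono fun y' => ?_
      have := hGu (Fin.cons y₁ y') (Fin.cons false (fun _ => true))
      have heq : (fun i => if (Fin.cons (α := fun _ => Bool) false fun _ => true) i
          then (Fin.cons (α := fun _ => ℝ) y₁ y') i else 0)
          = Fin.cons (α := fun _ => ℝ) 0 y' := by
        funext i
        refine Fin.cases ?_ ?_ i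
        · simp
        · intro j; simp
      rwa [heq] at this
    have dim1res := dim1 ha hb hab ⟨hlam0, hlam1⟩ hal hbe (hφm 0) (hφqc 0) (hφmax 0)
      hF1m hG1m hH1m hF1u hG1u cond1
    rw [← hμ 0] at dim1res
    -- put the pieces together
    have hdF : ∫⁻ x, F x ∂(Measure.pi μ) = ∫⁻ x₁, F1 x₁ ∂(μ 0) :=
      pi_succ_lintegral n μ F hFm
    have hdG : ∫⁻ y, G y ∂(Measure.pi μ) = ∫⁻ y₁, G1 y₁ ∂(μ 0) :=
      pi_succ_lintegral n μ G hGm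
    have hdH : ∫⁻ z, H z ∂(Measure.pi μ) = ∫⁻ z₁, H0 z₁ ∂(μ 0) :=
      pi_succ_lintegral n μ H hHm
    have hIH1 : (∫⁻ z₁, H1 z₁ ∂(μ 0)) = (∫⁻ z₁, H0 z₁ ∂(μ 0)) * (Cn ^ n)⁻¹ :=
      lintegral_mul_const' _ _ (ENNReal.inv_ne_top.mpr hCnn0)
    rw [hIH1] at dim1res
    rw [hdF, hdG, hdH]
    calc Cn ^ (n + 1) * (∫⁻ x₁, F1 x₁ ∂(μ 0)) ^ (1 - lam) * (∫⁻ y₁, G1 y₁ ∂(μ 0)) ^ lam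
        = Cn ^ n * (Cn * (∫⁻ x₁, F1 x₁ ∂(μ 0)) ^ (1 - lam) * (∫⁻ y₁, G1 y₁ ∂(μ 0)) ^ lam) := by
          rw [pow_succ]; ring
      _ ≤ Cn ^ n * ((∫⁻ z₁, H0 z₁ ∂(μ 0)) * (Cn ^ n)⁻¹) := mul_le_mul_right dim1res _
      _ = (∫⁻ z₁, H0 z₁ ∂(μ 0)) * ((Cn ^ n) * (Cn ^ n)⁻¹) := by ring
      _ = ∫⁻ z₁, H0 z₁ ∂(μ 0) := by
          rw [ENNReal.mul_inv_cancel hCnn0 hCnntop, mul_one]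

end Induction


end LPPL

open LPPL

/-- A nonnegative function on `ℝ^n` is weakly unconditional if replacing any subset of the
coordinates of a point by `0` does not decrease its value. -/
def WeaklyUnconditionalFn {n : ℕ} (f : (Fin n → ℝ) → ℝ) : Prop :=
  ∀ x : Fin n → ℝ, ∀ ε : Fin n → Bool, f x ≤ f (fun i => if ε i then x i else 0)

/-- **L_p-Prékopa–Leindler inequality for product measures with quasi-concave densities.** -/
theorem lp_prekopa_leindler_product
    (n : ℕ) (p t : ℝ) (hp : 1 < p) (ht : t ∈ Set.Ioo (0:ℝ) 1)
    (μ : Fin n → Measure ℝ) [∀ i, SigmaFinite (μ i)]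
    (φ : Fin n → ℝ → ℝ) (hφ0 : ∀ i x, 0 ≤ φ i x) (hφm : ∀ i, Measurable (φ i))
    (hμ : ∀ i, μ i = volume.withDensity (fun x => ENNReal.ofReal (φ i x)))
    (hφqc : ∀ i, ∀ x y : ℝ, ∀ τ ∈ Set.Icc (0:ℝ) 1,
      min (φ i x) (φ i y) ≤ φ i ((1 - τ) * x + τ * y))
    (hφmax : ∀ i x, φ i x ≤ φ i 0)
    (f g h : (Fin n → ℝ) → ℝ)
    (hfm : Measurable f) (hgm : Measurable g) (hhm : Measurable h)
    (hf0 : ∀ x, 0 ≤ f x) (hg0 : ∀ x, 0 ≤ g x) (hh0 : ∀ x, 0 ≤ h x)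
    (hfb : ∃ M : ℝ, ∀ x, f x ≤ M) (hgb : ∃ M : ℝ, ∀ x, g x ≤ M)
    (hfu : WeaklyUnconditionalFn f) (hgu : WeaklyUnconditionalFn g)
    (hcond : ∀ x, 0 < f x → ∀ y, 0 < g y → ∀ l ∈ Set.Ioo (0:ℝ) 1,
      f x ^ ((1 - t) ^ (1/p) * (1 - l) ^ ((p-1)/p)) * g y ^ (t ^ (1/p) * l ^ ((p-1)/p))
        ≤ h (((1 - t) ^ (1/p) * (1 - l) ^ ((p-1)/p)) • x + (t ^ (1/p) * l ^ ((p-1)/p)) • y))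
    (l : ℝ) (hl : l ∈ Set.Ioo (0:ℝ) 1) :
    ENNReal.ofReal (((((1 - t)/(1 - l)) ^ (1 - l)) * ((t/l) ^ l)) ^ ((n : ℝ)/p))
        * (∫⁻ x, ENNReal.ofReal (f x ^ (((1 - t)/(1 - l)) ^ (1/p))) ∂(Measure.pi μ)) ^ (1 - l)
        * (∫⁻ x, ENNReal.ofReal (g x ^ ((t/l) ^ (1/p))) ∂(Measure.pi μ)) ^ l
      ≤ ∫⁻ x, ENNReal.ofReal (h x) ∂(Measure.pi μ) := by
  obtain ⟨ht0, ht1⟩ := ht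
  obtain ⟨hl0, hl1⟩ := hl
  have hp0 : (0:ℝ) < p := lt_trans one_pos hp
  have h1t : (0:ℝ) < 1 - t := by linarith
  have h1l : (0:ℝ) < 1 - l := by linarith
  set a : ℝ := (1 - t) ^ (1/p) * (1 - l) ^ ((p-1)/p) with hadef
  set b : ℝ := t ^ (1/p) * l ^ ((p-1)/p) with hbdef
  set alpha : ℝ := ((1 - t)/(1 - l)) ^ (1/p) with halphadef
  set beta : ℝ := (t/l) ^ (1/p) with hbetadef
  have hX : (0:ℝ) < (1 - t)/(1 - l) := div_pos h1t h1l
  have hY : (0:ℝ) < t/l := div_pos ht0 hl0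
  have ha : 0 < a := mul_pos (Real.rpow_pos_of_pos h1t _) (Real.rpow_pos_of_pos h1l _)
  have hb : 0 < b := mul_pos (Real.rpow_pos_of_pos ht0 _) (Real.rpow_pos_of_pos hl0 _)
  have halpha : 0 < alpha := Real.rpow_pos_of_pos hX _
  have hbeta : 0 < beta := Real.rpow_pos_of_pos hY _
  have hw2 : (0:ℝ) ≤ (p-1)/p := div_nonneg (by linarith) hp0.le
  have hsum : 1/p + (p-1)/p = 1 := by field_simp; ring
  have hab : a + b ≤ 1 := by
    have hA := Real.geom_mean_le_arith_mean2_weighted (by positivity : (0:ℝ) ≤ 1/p) hw2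
      h1t.le h1l.le hsum
    have hB := Real.geom_mean_le_arith_mean2_weighted (by positivity : (0:ℝ) ≤ 1/p) hw2
      ht0.le hl0.le hsum
    nlinarith [hA, hB]
  have hexp : (p-1)/p = 1 - 1/p := by field_simp
  have hal : a = (1 - l) * alpha := by
    rw [hadef, halphadef, Real.div_rpow h1t.le h1l.le, hexp, Real.rpow_sub h1l,
      Real.rpow_one]
    have hne : (1 - l) ^ (1/p) ≠ 0 := (Real.rpow_pos_of_pos h1l _).ne'
    field_simp
  have hbe : b = l * beta := by
    rw [hbdef, hbetadef, Real.div_rpow ht0.le hl0.le, hexp, Real.rpow_sub hl0,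
      Real.rpow_one]
    have hne : l ^ (1/p) ≠ 0 := (Real.rpow_pos_of_pos hl0 _).ne'
    field_simp
  set F : (Fin n → ℝ) → ℝ≥0∞ := fun x => ENNReal.ofReal (f x ^ alpha) with hFdef
  set G : (Fin n → ℝ) → ℝ≥0∞ := fun y => ENNReal.ofReal (g y ^ beta) with hGdef
  set H : (Fin n → ℝ) → ℝ≥0∞ := fun z => ENNReal.ofReal (h z) with hHdef
  have hFm : Measurable F :=
    (((Real.continuous_rpow_const halpha.le).measurable).comp hfm).ennreal_ofReal
  have hGm : Measurable G :=
    (((Real.continuous_rpow_const hbeta.le).measurable).comp hgm).ennreal_ofReal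
  have hHm : Measurable H := hhm.ennreal_ofReal
  have hFu : ∀ (x : Fin n → ℝ) (ε : Fin n → Bool),
      F x ≤ F (fun i => if ε i then x i else 0) := fun x ε =>
    ENNReal.ofReal_le_ofReal (Real.rpow_le_rpow (hf0 x) (hfu x ε) halpha.le)
  have hGu : ∀ (y : Fin n → ℝ) (ε : Fin n → Bool),
      G y ≤ G (fun i => if ε i then y i else 0) := fun y ε =>
    ENNReal.ofReal_le_ofReal (Real.rpow_le_rpow (hg0 y) (hgu y ε) hbeta.le)
  have cond : ∀ x y, F x ≠ 0 → G y ≠ 0 →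
      F x ^ (1 - l) * G y ^ l ≤ H (a • x + b • y) := by
    intro x y hFx hGy
    have hfx : 0 < f x := by
      by_contra hcon
      push_neg at hcon
      have hfx0 : f x = 0 := le_antisymm hcon (hf0 x)
      apply hFx
      rw [hFdef]
      simp [hfx0, Real.zero_rpow halpha.ne']
    have hgy : 0 < g y := by
      by_contra hcon
      push_neg at hcon
      have hgy0 : g y = 0 := le_antisymm hcon (hg0 y)
      apply hGy
      rw [hGdef]
      simp [hgy0, Real.zero_rpow hbeta.ne']
    have key := hcond x hfx y hgy l ⟨hl0, hl1⟩
    have e1 : F x ^ (1 - l) = ENNReal.ofReal (f x ^ a) := by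
      rw [hFdef]
      dsimp only
      rw [ENNReal.ofReal_rpow_of_nonneg (Real.rpow_nonneg (hf0 x) _) (by linarith),
        ← Real.rpow_mul (hf0 x)]
      congr 1
      rw [hal]
      ring
    have e2 : G y ^ l = ENNReal.ofReal (g y ^ b) := by
      rw [hGdef]
      dsimp only
      rw [ENNReal.ofReal_rpow_of_nonneg (Real.rpow_nonneg (hg0 y) _) hl0.le,
        ← Real.rpow_mul (hg0 y)]
      congr 1
      rw [hbe]
      ring
    rw [e1, e2, ← ENNReal.ofReal_mul (Real.rpow_nonneg (hf0 x) _)]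
    exact ENNReal.ofReal_le_ofReal key
  have main := main_ind n ha hb hab ⟨hl0, hl1⟩ hal hbe μ (fun i => inferInstance)
    φ hφm hμ hφqc hφmax F G H hFm hGm hHm hFu hGu cond
  have hconst : ENNReal.ofReal (((((1 - t)/(1 - l)) ^ (1 - l)) * ((t/l) ^ l)) ^ ((n : ℝ)/p))
      = ENNReal.ofReal (alpha ^ (1 - l) * beta ^ l) ^ n := by
    rw [← ENNReal.ofReal_pow (by positivity)]
    congr 1
    have e1 : alpha ^ (1 - l) = ((1 - t)/(1 - l)) ^ ((1 - l)/p) := by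
      rw [halphadef, ← Real.rpow_mul hX.le]
      congr 1
      ring
    have e2 : beta ^ l = (t/l) ^ (l/p) := by
      rw [hbetadef, ← Real.rpow_mul hY.le]
      congr 1
      ring
    rw [← Real.rpow_natCast (alpha ^ (1 - l) * beta ^ l) n, e1, e2]
    rw [Real.mul_rpow (Real.rpow_nonneg hX.le _) (Real.rpow_nonneg hY.le _),
      Real.mul_rpow (Real.rpow_nonneg hX.le _) (Real.rpow_nonneg hY.le _),
      ← Real.rpow_mul hX.le, ← Real.rpow_mul hY.le,
      ← Real.rpow_mul hX.le, ← Real.rpow_mul hY.le]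
    rw [show (1 - l) * ((n:ℝ)/p) = (1 - l)/p * (n:ℝ) by ring,
      show l * ((n:ℝ)/p) = l/p * (n:ℝ) by ring]
  rw [hconst]
  exact main
end

section
/- Let p > 1, t ∈ (0,1), and let μ = μ₁ × ⋯ × μ_n be a product measure on ℝ^n where each μ_i is a Borel measure on ℝ having a quasi-concave density φ_i with φ_i(0) = sup φ_i. Then for any weakly unconditional measurable sets A, B ⊆ ℝ^n such that (1−t) ·_p A +_p t ·_p B is measurable, and for every λ ∈ (0,1), one has μ((1−t) ·_p A +_p t ·_p B) ≥ [((1−t)/(1−λ))^{1−λ} (t/λ)^{λ}]^{n/p} · μ(A)^{1−λ} · μ(B)^{λ}. -/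
open MeasureTheory Set ENNReal NNReal
open scoped Pointwise

lemma iSup_min_natCast (c : ℝ≥0∞) : ⨆ (m : ℕ), min c (m : ℝ≥0∞) = c := by
  apply le_antisymm (iSup_le fun m => min_le_left _ _)
  rcases eq_or_ne c ⊤ with rfl | hc
  · have : ⨆ (m : ℕ), min (⊤:ℝ≥0∞) (m:ℝ≥0∞) = ⨆ (m : ℕ), (m:ℝ≥0∞) := by simp
    rw [this, ENNReal.iSup_natCast]
  · obtain ⟨m, hm⟩ := exists_nat_ge c.toReal
    have : c ≤ (m : ℝ≥0∞) := by
      rw [← ENNReal.ofReal_toReal hc]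
      exact le_trans (ENNReal.ofReal_le_ofReal hm) (by simp)
    exact le_trans (le_min le_rfl this) (le_iSup (fun m : ℕ => min c (m:ℝ≥0∞)) m)

lemma ennreal_geom_mean (lam : ℝ) (hl0 : 0 < lam) (hl1 : lam < 1) (Z₁ Z₂ : ℝ≥0∞) :
    Z₁ ^ (1 - lam) * Z₂ ^ lam ≤ ENNReal.ofReal (1 - lam) * Z₁ + ENNReal.ofReal lam * Z₂ := by
  have h1l : 0 < 1 - lam := by linarith
  rcases eq_or_ne Z₁ ⊤ with rfl | h₁
  · rcases eq_or_ne Z₂ 0 with rfl | h₂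
    · simp [ENNReal.zero_rpow_of_pos hl0]
    · have hr : ENNReal.ofReal (1-lam) * ⊤ = ⊤ := by
        rw [ENNReal.mul_top]; simp [ENNReal.ofReal_eq_zero]; linarith
      rw [hr]; exact le_top.trans (le_add_right le_rfl)
  rcases eq_or_ne Z₂ ⊤ with rfl | h₂
  · rcases eq_or_ne Z₁ 0 with rfl | h₁0
    · simp [ENNReal.zero_rpow_of_pos h1l]
    · have hr : ENNReal.ofReal lam * ⊤ = ⊤ := by
        rw [ENNReal.mul_top]; simp [ENNReal.ofReal_eq_zero]; linarith
      rw [hr]; exact le_top.trans (le_add_left le_rfl)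
  · -- both finite
    lift Z₁ to ℝ≥0 using h₁
    lift Z₂ to ℝ≥0 using h₂
    have key := NNReal.geom_mean_le_arith_mean2_weighted (Real.toNNReal (1-lam))
      (Real.toNNReal lam) Z₁ Z₂ (by
        ext1
        push_cast [Real.coe_toNNReal _ h1l.le, Real.coe_toNNReal _ hl0.le]
        ring)
    have c1 : ((Real.toNNReal (1-lam) : ℝ≥0) : ℝ) = 1 - lam := Real.coe_toNNReal _ h1l.le
    have c2 : ((Real.toNNReal lam : ℝ≥0) : ℝ) = lam := Real.coe_toNNReal _ hl0.le
    rw [c1, c2] at key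
    calc (Z₁ : ℝ≥0∞) ^ (1-lam) * (Z₂:ℝ≥0∞) ^ lam
        = ((Z₁ ^ (1-lam) * Z₂ ^ lam : ℝ≥0) : ℝ≥0∞) := by
          push_cast [ENNReal.coe_rpow_of_nonneg _ h1l.le, ENNReal.coe_rpow_of_nonneg _ hl0.le]
          rfl
      _ ≤ ((Real.toNNReal (1-lam) * Z₁ + Real.toNNReal lam * Z₂ : ℝ≥0) : ℝ≥0∞) :=
          ENNReal.coe_le_coe.mpr key
      _ = ENNReal.ofReal (1 - lam) * Z₁ + ENNReal.ofReal lam * Z₂ := by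
          push_cast
          rfl

lemma ennreal_geom_mean_weighted (lam a b : ℝ) (hl0 : 0 < lam) (hl1 : lam < 1)
    (ha : 0 < a) (hb : 0 < b) (X Y : ℝ≥0∞) :
    ENNReal.ofReal ((a/(1-lam))^(1-lam) * (b/lam)^lam) * X ^ (1-lam) * Y ^ lam ≤
      ENNReal.ofReal a * X + ENNReal.ofReal b * Y := by
  have h1l : 0 < 1 - lam := by linarith
  have key : (ENNReal.ofReal (a/(1-lam)) * X) ^ (1-lam) * (ENNReal.ofReal (b/lam) * Y) ^ lam ≤
      ENNReal.ofReal (1-lam) * (ENNReal.ofReal (a/(1-lam)) * X)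
        + ENNReal.ofReal lam * (ENNReal.ofReal (b/lam) * Y) :=
    ennreal_geom_mean lam hl0 hl1 _ _
  have e1 : ENNReal.ofReal (1-lam) * (ENNReal.ofReal (a/(1-lam)) * X) = ENNReal.ofReal a * X := by
    rw [← mul_assoc, ← ENNReal.ofReal_mul h1l.le, mul_div_cancel₀]
    exact h1l.ne'
  have e2 : ENNReal.ofReal lam * (ENNReal.ofReal (b/lam) * Y) = ENNReal.ofReal b * Y := by
    rw [← mul_assoc, ← ENNReal.ofReal_mul hl0.le, mul_div_cancel₀]
    exact hl0.ne'
  have e3 : (ENNReal.ofReal (a/(1-lam)) * X) ^ (1-lam) * (ENNReal.ofReal (b/lam) * Y) ^ lam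
      = ENNReal.ofReal ((a/(1-lam))^(1-lam) * (b/lam)^lam) * X ^ (1-lam) * Y ^ lam := by
    rw [ENNReal.mul_rpow_of_nonneg _ _ h1l.le, ENNReal.mul_rpow_of_nonneg _ _ hl0.le,
      ENNReal.ofReal_rpow_of_pos (by positivity), ENNReal.ofReal_rpow_of_pos (by positivity),
      ENNReal.ofReal_mul (by positivity)]
    ring
  rw [e1, e2, e3] at key
  exact key

lemma qc_combo (φ : ℝ → ℝ)
    (hqc : ∀ x y : ℝ, ∀ τ ∈ Set.Icc (0:ℝ) 1, min (φ x) (φ y) ≤ φ ((1 - τ) * x + τ * y))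
    (hmax : ∀ x, φ x ≤ φ 0) (a b : ℝ) (ha : 0 ≤ a) (hb : 0 ≤ b) (hab : a + b ≤ 1)
    (x y : ℝ) : min (φ x) (φ y) ≤ φ (a*x + b*y) := by
  rcases eq_or_lt_of_le (by positivity : (0:ℝ) ≤ a + b) with h0 | hpos
  · have ha0 : a = 0 := by nlinarith
    have hb0 : b = 0 := by nlinarith
    subst ha0; subst hb0
    simp only [zero_mul, add_zero]
    exact le_trans (min_le_left _ _) (hmax x)
  · have hc0 : (a + b) ≠ 0 := hpos.ne'
    have hτ : b / (a+b) ∈ Set.Icc (0:ℝ) 1 :=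
      ⟨by positivity, by rw [div_le_one hpos]; linarith⟩
    set w := (1 - b/(a+b)) * x + (b/(a+b)) * y with hw
    have h1 : min (φ x) (φ y) ≤ φ w := hqc x y _ hτ
    have h2 := hqc 0 w (a+b) ⟨hpos.le, hab⟩
    have hcb : (a+b) * (b/(a+b)) = b := by field_simp
    have e : (1 - (a+b)) * 0 + (a+b) * w = a*x + b*y := by
      rw [hw]
      calc (1 - (a+b)) * 0 + (a+b) * ((1 - b/(a+b)) * x + (b/(a+b)) * y)
          = ((a+b) - (a+b)*(b/(a+b))) * x + ((a+b)*(b/(a+b))) * y := by ring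
        _ = a*x + b*y := by rw [hcb]; ring
    rw [e, min_eq_right (hmax w)] at h2
    exact h1.trans h2

/-- translation invariance for images -/
lemma volume_image_add_right (W : Set ℝ) (c : ℝ) : volume ((fun z => z + c) '' W) = volume W := by
  have : (fun z => z + c) '' W = (fun z => z + (-c)) ⁻¹' W := by
    ext z
    constructor
    · rintro ⟨x, hx, rfl⟩; simpa using hx
    · intro hz; exact ⟨z + (-c), hz, by ring⟩
  rw [this, measure_preimage_add_right]

lemma volume_image_add_left (W : Set ℝ) (c : ℝ) : volume ((fun z => c + z) '' W) = volume W := by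
  have : (fun z => c + z) '' W = (fun z => z + c) '' W := by
    ext z; constructor <;> rintro ⟨x, hx, rfl⟩ <;> exact ⟨x, hx, by ring⟩
  rw [this, volume_image_add_right]

lemma volume_image_mul (W : Set ℝ) (c : ℝ) (hc : 0 < c) :
    volume ((fun z => c * z) '' W) = ENNReal.ofReal c * volume W := by
  have : (fun z => c * z) '' W = (fun z => c⁻¹ * z) ⁻¹' W := by
    ext z
    constructor
    · rintro ⟨x, hx, rfl⟩; simpa [inv_mul_cancel_left₀ hc.ne'] using hx
    · intro hz; exact ⟨c⁻¹ * z, hz, by field_simp⟩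
  rw [this, Real.volume_preimage_mul_left (by positivity : c⁻¹ ≠ 0), inv_inv,
    abs_of_pos hc]

/-- 1-D sumset superadditivity, compact case -/
lemma sumset_compact (K L : Set ℝ) (hK : IsCompact K) (hL : IsCompact L)
    (hKne : K.Nonempty) (hLne : L.Nonempty) : volume K + volume L ≤ volume (K + L) := by
  set m₁ := sSup K with hm₁def
  set m₂ := sInf L with hm₂def
  have hm₁ : m₁ ∈ K := hK.sSup_mem hKne
  have hm₂ : m₂ ∈ L := hL.sInf_mem hLne
  set c := m₁ + m₂ with hcdef
  have hsub1 : (fun z => z + m₂) '' K ⊆ K + L := by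
    rintro z ⟨k, hk, rfl⟩; exact Set.add_mem_add hk hm₂
  have hsub2 : (fun z => m₁ + z) '' L ⊆ K + L := by
    rintro z ⟨l, hl, rfl⟩; exact Set.add_mem_add hm₁ hl
  have hb1 : (fun z => z + m₂) '' K ⊆ Iic c := by
    rintro z ⟨k, hk, rfl⟩
    exact add_le_add_left (le_csSup hK.bddAbove hk) m₂
  have hb2 : (fun z => m₁ + z) '' L ⊆ Ici c := by
    rintro z ⟨l, hl, rfl⟩
    exact add_le_add_right (csInf_le hL.bddBelow hl) m₁
  set S₁ := ((fun z => z + m₂) '' K) ∩ Iio c with hS₁def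
  have hS₁m : MeasurableSet S₁ := by
    apply MeasurableSet.inter _ measurableSet_Iio
    exact (hK.image (continuous_id.add continuous_const)).measurableSet
  have hS₂m : MeasurableSet ((fun z => m₁ + z) '' L) :=
    (hL.image (continuous_const.add continuous_id)).measurableSet
  have hdisj : Disjoint S₁ ((fun z => m₁ + z) '' L) :=
    Disjoint.mono (Set.inter_subset_right) hb2 (Iio_disjoint_Ici le_rfl)
  have hv1 : volume ((fun z => z + m₂) '' K) ≤ volume S₁ := by
    have hsub : (fun z => z + m₂) '' K ⊆ S₁ ∪ {c} := by
      intro z hz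
      rcases lt_or_eq_of_le (mem_Iic.mp (hb1 hz)) with h | h
      · exact Or.inl ⟨hz, h⟩
      · exact Or.inr (by simpa using h)
    calc volume ((fun z => z + m₂) '' K) ≤ volume (S₁ ∪ {c}) := measure_mono hsub
      _ ≤ volume S₁ + volume {c} := measure_union_le _ _
      _ = volume S₁ := by simp
  calc volume K + volume L
      = volume ((fun z => z + m₂) '' K) + volume ((fun z => m₁ + z) '' L) := by
        rw [volume_image_add_right, volume_image_add_left]
    _ ≤ volume S₁ + volume ((fun z => m₁ + z) '' L) := add_le_add_left hv1 _
    _ = volume (S₁ ∪ (fun z => m₁ + z) '' L) := (measure_union hdisj hS₂m).symm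
    _ ≤ volume (K + L) := measure_mono (Set.union_subset ((Set.inter_subset_left).trans hsub1) hsub2)

/-- helper: one-sided bound -/
lemma vol_le_sumset_right (U V W : Set ℝ) (hW : W ⊆ V) (hUne : U.Nonempty) :
    volume W ≤ volume (U + V) := by
  obtain ⟨u, hu⟩ := hUne
  have : (fun z => u + z) '' W ⊆ U + V := by
    rintro z ⟨w, hw, rfl⟩; exact Set.add_mem_add hu (hW hw)
  calc volume W = volume ((fun z => u + z) '' W) := (volume_image_add_left W u).symm
    _ ≤ volume (U + V) := measure_mono this

lemma vol_le_sumset_left (U V W : Set ℝ) (hW : W ⊆ U) (hVne : V.Nonempty) :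
    volume W ≤ volume (U + V) := by
  obtain ⟨v, hv⟩ := hVne
  have : (fun z => z + v) '' W ⊆ U + V := by
    rintro z ⟨w, hw, rfl⟩; exact Set.add_mem_add (hW hw) hv
  calc volume W = volume ((fun z => z + v) '' W) := (volume_image_add_right W v).symm
    _ ≤ volume (U + V) := measure_mono this

/-- 1-D sumset superadditivity, measurable case -/
lemma sumset_superadd (U V : Set ℝ) (hU : MeasurableSet U) (hV : MeasurableSet V)
    (hUne : U.Nonempty) (hVne : V.Nonempty) : volume U + volume V ≤ volume (U + V) := by
  have hUe : volume U = ⨆ (K : Set ℝ) (_ : K ⊆ U) (_ : IsCompact K), volume K :=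
    hU.measure_eq_iSup_isCompact volume
  have hVe : volume V = ⨆ (L : Set ℝ) (_ : L ⊆ V) (_ : IsCompact L), volume L :=
    hV.measure_eq_iSup_isCompact volume
  have hzero : ∀ (p q : Prop) (x : ℝ≥0∞), ¬(p ∧ q) → (⨆ (_:p), ⨆ (_:q), x) = 0 := by
    intro p q x hn
    rcases not_and_or.mp hn with h | h
    · simp [iSup_neg h, iSup_bot]
    · simp [iSup_neg h, iSup_bot]
  rw [hUe, hVe, ENNReal.iSup_add]
  refine iSup_le fun K => ?_
  rw [ENNReal.add_iSup]
  refine iSup_le fun L => ?_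
  rcases em (K ⊆ U ∧ IsCompact K) with ⟨hKU, hKc⟩ | hKn
  · rcases em (L ⊆ V ∧ IsCompact L) with ⟨hLV, hLc⟩ | hLn
    · rw [iSup_pos hKU, iSup_pos hKc, iSup_pos hLV, iSup_pos hLc]
      rcases K.eq_empty_or_nonempty with rfl | hKne
      · simpa using vol_le_sumset_right U V L hLV hUne
      rcases L.eq_empty_or_nonempty with rfl | hLne
      · simpa using vol_le_sumset_left U V K hKU hVne
      calc volume K + volume L ≤ volume (K + L) :=
            sumset_compact K L hKc hLc hKne hLne
        _ ≤ volume (U + V) := measure_mono (Set.add_subset_add hKU hLV)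
    · rw [hzero _ _ _ hLn, add_zero, iSup_pos hKU, iSup_pos hKc]
      exact vol_le_sumset_left U V K hKU hVne
  · rw [hzero _ _ _ hKn, zero_add]
    refine iSup_le fun hLV => iSup_le fun _ => vol_le_sumset_right U V L hLV hUne

lemma image_mul_eq_preimage (c : ℝ) (hc : c ≠ 0) (W : Set ℝ) :
    (fun z => c * z) '' W = (fun z => c⁻¹ * z) ⁻¹' W := by
  ext z
  constructor
  · rintro ⟨x, hx, rfl⟩; simpa [inv_mul_cancel_left₀ hc] using hx
  · intro hz; exact ⟨c⁻¹ * z, hz, by field_simp⟩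

/-- layer-cake representation for 1-D measures with density -/
lemma withDensity_repr (φ : ℝ → ℝ) (hφm : Measurable φ)
    (E : Set ℝ) (hE : MeasurableSet E) :
    (volume.withDensity fun x => ENNReal.ofReal (φ x)) E
      = ∫⁻ w in Ioi (0:ℝ), volume (E ∩ {s | w < φ s}) := by
  set T : Set (ℝ × ℝ) := {p | p.1 ∈ E ∧ p.2 < φ p.1} with hT
  have hTm : MeasurableSet T := by
    refine MeasurableSet.inter (measurable_fst hE) ?_
    exact measurableSet_lt measurable_snd (hφm.comp measurable_fst)
  have pt : ∀ s : ℝ, E.indicator (fun x => ENNReal.ofReal (φ x)) s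
      = ∫⁻ w in Ioi (0:ℝ), T.indicator 1 (s, w) := by
    intro s
    by_cases hs : s ∈ E
    · rw [indicator_of_mem hs]
      have heq : ∀ w : ℝ, T.indicator (1 : ℝ×ℝ → ℝ≥0∞) (s, w) = (Iio (φ s)).indicator 1 w := by
        intro w
        by_cases hw : w < φ s
        · have h1 : (s,w) ∈ T := ⟨hs, hw⟩
          have h2 : w ∈ Iio (φ s) := hw
          rw [Set.indicator_of_mem h1, Set.indicator_of_mem h2]
          rfl
        · have h1 : (s,w) ∉ T := fun hc => hw hc.2
          have h2 : w ∉ Iio (φ s) := hw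
          rw [Set.indicator_of_notMem h1, Set.indicator_of_notMem h2]
      symm
      calc ∫⁻ w in Ioi (0:ℝ), T.indicator 1 (s, w)
          = ∫⁻ w in Ioi (0:ℝ), (Iio (φ s)).indicator 1 w := lintegral_congr heq
        _ = (volume.restrict (Ioi 0)) (Iio (φ s)) := lintegral_indicator_one measurableSet_Iio
        _ = volume (Iio (φ s) ∩ Ioi 0) := Measure.restrict_apply measurableSet_Iio
        _ = ENNReal.ofReal (φ s) := by
            have : Iio (φ s) ∩ Ioi 0 = Ioo 0 (φ s) := by
              ext w; exact ⟨fun ⟨h1, h2⟩ => ⟨h2, h1⟩, fun ⟨h1, h2⟩ => ⟨h2, h1⟩⟩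
            rw [this, Real.volume_Ioo, sub_zero]
    · rw [indicator_of_notMem hs]
      have heq : ∀ w : ℝ, T.indicator (1 : ℝ×ℝ → ℝ≥0∞) (s, w) = 0 :=
        fun w => indicator_of_notMem (fun hc => hs hc.1) _
      simp [heq]
  have swap := lintegral_lintegral_swap (μ := volume) (ν := volume.restrict (Ioi (0:ℝ)))
      (f := fun s w => T.indicator (1 : ℝ×ℝ → ℝ≥0∞) (s, w))
      (((measurable_one (α := ℝ≥0∞)).indicator hTm).aemeasurable)
  calc (volume.withDensity fun x => ENNReal.ofReal (φ x)) E
      = ∫⁻ x in E, ENNReal.ofReal (φ x) ∂volume := withDensity_apply _ hE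
    _ = ∫⁻ x, E.indicator (fun x => ENNReal.ofReal (φ x)) x ∂volume :=
        (lintegral_indicator hE _).symm
    _ = ∫⁻ s, ∫⁻ w in Ioi (0:ℝ), T.indicator 1 (s, w) ∂volume := lintegral_congr pt
    _ = ∫⁻ w in Ioi (0:ℝ), ∫⁻ s, T.indicator 1 (s, w) ∂volume := swap
    _ = ∫⁻ w in Ioi (0:ℝ), volume (E ∩ {s | w < φ s}) := by
        refine lintegral_congr fun w => ?_
        have : (fun s => T.indicator (1:ℝ×ℝ→ℝ≥0∞) (s, w)) = (E ∩ {s | w < φ s}).indicator 1 := by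
          funext s
          by_cases hc : s ∈ E ∧ w < φ s
          · have h1 : (s,w) ∈ T := hc
            have h2 : s ∈ E ∩ {s | w < φ s} := hc
            rw [Set.indicator_of_mem h1, Set.indicator_of_mem h2]
            rfl
          · have h1 : (s,w) ∉ T := hc
            have h2 : s ∉ E ∩ {s | w < φ s} := hc
            rw [Set.indicator_of_notMem h1, Set.indicator_of_notMem h2]
        rw [this]
        exact lintegral_indicator_one (hE.inter (hφm measurableSet_Ioi))

/-- key 1-D superadditivity for quasiconcave-density measures -/
lemma lemB (φ : ℝ → ℝ) (hφm : Measurable φ)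
    (hqc : ∀ x y : ℝ, ∀ τ ∈ Set.Icc (0:ℝ) 1, min (φ x) (φ y) ≤ φ ((1 - τ) * x + τ * y))
    (hmax : ∀ x, φ x ≤ φ 0)
    (a b : ℝ) (ha : 0 ≤ a) (hb : 0 ≤ b) (hab : a + b ≤ 1)
    (U V : Set ℝ) (hU : MeasurableSet U) (hV : MeasurableSet V)
    (hU0 : (0:ℝ) ∈ U) (hV0 : (0:ℝ) ∈ V) :
    ENNReal.ofReal a * (volume.withDensity fun x => ENNReal.ofReal (φ x)) U
      + ENNReal.ofReal b * (volume.withDensity fun x => ENNReal.ofReal (φ x)) V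
      ≤ (volume.withDensity fun x => ENNReal.ofReal (φ x))
          {z | ∃ x ∈ U, ∃ y ∈ V, z = a*x + b*y} := by
  set μ' := volume.withDensity fun x => ENNReal.ofReal (φ x) with hμ'
  set S := {z : ℝ | ∃ x ∈ U, ∃ y ∈ V, z = a*x + b*y} with hS
  have hmU : Measurable fun w : ℝ => volume (U ∩ {s | w < φ s}) := by
    apply Antitone.measurable
    intro w₁ w₂ hw
    exact measure_mono (inter_subset_inter_right _ (fun s hs => lt_of_le_of_lt hw hs))
  have hmV : Measurable fun w : ℝ => volume (V ∩ {s | w < φ s}) := by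
    apply Antitone.measurable
    intro w₁ w₂ hw
    exact measure_mono (inter_subset_inter_right _ (fun s hs => lt_of_le_of_lt hw hs))
  have repr_le : ∫⁻ w in Ioi (0:ℝ), volume (S ∩ {s | w < φ s}) ≤ μ' S := by
    calc ∫⁻ w in Ioi (0:ℝ), volume (S ∩ {s | w < φ s})
        ≤ ∫⁻ w in Ioi (0:ℝ), volume (toMeasurable μ' S ∩ {s | w < φ s}) :=
          lintegral_mono fun w =>
            measure_mono (inter_subset_inter_left _ (subset_toMeasurable _ _))
      _ = μ' (toMeasurable μ' S) :=
          (withDensity_repr φ hφm _ (measurableSet_toMeasurable _ _)).symm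
      _ = μ' S := measure_toMeasurable _
  have pointwise : ∀ w : ℝ, w ∈ Ioi (0:ℝ) →
      ENNReal.ofReal a * volume (U ∩ {s | w < φ s})
        + ENNReal.ofReal b * volume (V ∩ {s | w < φ s})
        ≤ volume (S ∩ {s | w < φ s}) := by
    intro w hwpos
    set I := {s : ℝ | w < φ s} with hI
    have hIm : MeasurableSet I := hφm measurableSet_Ioi
    by_cases hw0 : w < φ 0
    swap
    · have hIe : I = ∅ := by
        apply eq_empty_iff_forall_notMem.mpr
        intro s hs
        exact hw0 (lt_of_lt_of_le hs (hmax s))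
      simp [hIe]
    · have hkey : ∀ x, x ∈ U ∩ I → ∀ y, y ∈ V ∩ I → a*x + b*y ∈ S ∩ I := by
        rintro x ⟨hxU, hxI⟩ y ⟨hyV, hyI⟩
        refine ⟨⟨x, hxU, y, hyV, rfl⟩, ?_⟩
        exact lt_of_lt_of_le (lt_min hxI hyI) (qc_combo φ hqc hmax a b ha hb hab x y)
      have himg : ∀ c : ℝ, 0 < c → ∀ W : Set ℝ, ((fun z => c * z) '' W) ⊆ S ∩ I →
          ENNReal.ofReal c * volume W ≤ volume (S ∩ I) := by
        intro c hc W hsub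
        rw [← volume_image_mul W c hc]
        exact measure_mono hsub
      by_cases ha0 : a = 0
      · subst ha0
        simp only [ENNReal.ofReal_zero, zero_mul, zero_add]
        by_cases hb0 : b = 0
        · subst hb0; simp
        · have hbpos : 0 < b := lt_of_le_of_ne hb (Ne.symm hb0)
          refine himg b hbpos (V ∩ I) ?_
          rintro z ⟨y, hy, rfl⟩
          have := hkey 0 ⟨hU0, hw0⟩ y hy
          simpa using this
      by_cases hb0 : b = 0
      · subst hb0
        simp only [ENNReal.ofReal_zero, zero_mul, add_zero]
        have hapos : 0 < a := lt_of_le_of_ne ha (Ne.symm ha0)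
        refine himg a hapos (U ∩ I) ?_
        rintro z ⟨x, hx, rfl⟩
        have := hkey x hx 0 ⟨hV0, hw0⟩
        simpa using this
      · have hapos : 0 < a := lt_of_le_of_ne ha (Ne.symm ha0)
        have hbpos : 0 < b := lt_of_le_of_ne hb (Ne.symm hb0)
        set U' := (fun z => a * z) '' (U ∩ I) with hU'
        set V' := (fun z => b * z) '' (V ∩ I) with hV'
        have hU'm : MeasurableSet U' := by
          rw [hU', image_mul_eq_preimage a hapos.ne' _]
          exact (hU.inter hIm).preimage (measurable_const_mul _)
        have hV'm : MeasurableSet V' := by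
          rw [hV', image_mul_eq_preimage b hbpos.ne' _]
          exact (hV.inter hIm).preimage (measurable_const_mul _)
        have hU'ne : U'.Nonempty := ⟨a * 0, 0, ⟨hU0, hw0⟩, rfl⟩
        have hV'ne : V'.Nonempty := ⟨b * 0, 0, ⟨hV0, hw0⟩, rfl⟩
        have hsub : U' + V' ⊆ S ∩ I := by
          rintro z ⟨u', ⟨x, hx, rfl⟩, v', ⟨y, hy, rfl⟩, rfl⟩
          exact hkey x hx y hy
        calc ENNReal.ofReal a * volume (U ∩ I) + ENNReal.ofReal b * volume (V ∩ I)
            = volume U' + volume V' := by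
              rw [hU', hV', volume_image_mul _ a hapos, volume_image_mul _ b hbpos]
          _ ≤ volume (U' + V') := sumset_superadd U' V' hU'm hV'm hU'ne hV'ne
          _ ≤ volume (S ∩ I) := measure_mono hsub
  calc ENNReal.ofReal a * μ' U + ENNReal.ofReal b * μ' V
      = ∫⁻ w in Ioi (0:ℝ), (ENNReal.ofReal a * volume (U ∩ {s | w < φ s})
          + ENNReal.ofReal b * volume (V ∩ {s | w < φ s})) := by
        rw [hμ', withDensity_repr φ hφm U hU, withDensity_repr φ hφm V hV,
          ← lintegral_const_mul' _ _ ENNReal.ofReal_ne_top,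
          ← lintegral_const_mul' _ _ ENNReal.ofReal_ne_top,
          ← lintegral_add_left (hmU.const_mul _)]
    _ ≤ ∫⁻ w in Ioi (0:ℝ), volume (S ∩ {s | w < φ s}) := by
        refine lintegral_mono_ae ?_
        filter_upwards [ae_restrict_mem measurableSet_Ioi] with w hw
        exact pointwise w hw
    _ ≤ μ' S := repr_le

lemma lemC1 (φ : ℝ → ℝ) (hφm : Measurable φ)
    (hqc : ∀ x y : ℝ, ∀ τ ∈ Set.Icc (0:ℝ) 1, min (φ x) (φ y) ≤ φ ((1 - τ) * x + τ * y))
    (hmax : ∀ x, φ x ≤ φ 0)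
    (μ₁ : Measure ℝ) [SigmaFinite μ₁]
    (hμ₁ : μ₁ = volume.withDensity fun x => ENNReal.ofReal (φ x))
    (lam a b : ℝ) (hlam0 : 0 < lam) (hlam1 : lam < 1)
    (ha : 0 ≤ a) (hb : 0 ≤ b) (hab : a + b ≤ 1)
    (f g h : ℝ → ℝ≥0∞) (hf : Measurable f) (hg : Measurable g) (hh : Measurable h)
    (hf1 : ∀ s, f s ≤ 1) (hg1 : ∀ s, g s ≤ 1) (hf0 : f 0 = 1) (hg0 : g 0 = 1)
    (hyp : ∀ x y, f x ^ (1-lam) * g y ^ lam ≤ h (a*x + b*y)) :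
    ENNReal.ofReal a * ∫⁻ s, f s ∂μ₁ + ENNReal.ofReal b * ∫⁻ s, g s ∂μ₁
      ≤ ∫⁻ s, h s ∂μ₁ := by
  have h1l : 0 < 1 - lam := by linarith
  set h₂ := fun s => min (h s) 1 with hh₂
  have hh₂m : Measurable h₂ := hh.min measurable_const
  have layer : ∀ F : ℝ → ℝ≥0∞, Measurable F → (∀ s, F s ≤ 1) →
      ∫⁻ s, F s ∂μ₁ = ∫⁻ t in Ioi (0:ℝ), μ₁ {s | ENNReal.ofReal t < F s} := by
    intro F hFm hF1
    have hne : ∀ s, F s ≠ ⊤ := fun s => (lt_of_le_of_lt (hF1 s) ENNReal.one_lt_top).ne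
    calc ∫⁻ s, F s ∂μ₁ = ∫⁻ s, ENNReal.ofReal ((F s).toReal) ∂μ₁ :=
          lintegral_congr fun s => (ENNReal.ofReal_toReal (hne s)).symm
      _ = ∫⁻ t in Ioi (0:ℝ), μ₁ {s | t < (F s).toReal} :=
          lintegral_eq_lintegral_meas_lt μ₁
            (Filter.Eventually.of_forall fun s => ENNReal.toReal_nonneg)
            hFm.ennreal_toReal.aemeasurable
      _ = ∫⁻ t in Ioi (0:ℝ), μ₁ {s | ENNReal.ofReal t < F s} := by
          refine lintegral_congr_ae ?_
          filter_upwards [ae_restrict_mem measurableSet_Ioi] with t ht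
          congr 1
          ext s
          exact (ENNReal.ofReal_lt_iff_lt_toReal ht.le (hne s)).symm
  have key : ∀ t : ℝ, t ∈ Ioi (0:ℝ) →
      ENNReal.ofReal a * μ₁ {s | ENNReal.ofReal t < f s}
        + ENNReal.ofReal b * μ₁ {s | ENNReal.ofReal t < g s}
        ≤ μ₁ {s | ENNReal.ofReal t < h₂ s} := by
    intro t ht
    by_cases ht1 : t < 1
    · set c := ENNReal.ofReal t with hc
      have hc0 : c ≠ 0 := (ENNReal.ofReal_pos.mpr ht).ne'
      have hcT : c ≠ ⊤ := ENNReal.ofReal_ne_top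
      have hc1 : c < 1 := by
        rw [hc, ← ENNReal.ofReal_one]
        exact ENNReal.ofReal_lt_ofReal_iff_of_nonneg ht.le |>.mpr ht1
      have hU0 : (0:ℝ) ∈ {s | c < f s} := by
        show c < f 0
        rw [hf0]; exact hc1
      have hV0 : (0:ℝ) ∈ {s | c < g s} := by
        show c < g 0
        rw [hg0]; exact hc1
      have incl : {z | ∃ x ∈ {s | c < f s}, ∃ y ∈ {s | c < g s}, z = a*x + b*y}
          ⊆ {s | c < h₂ s} := by
        rintro z ⟨x, hx, y, hy, rfl⟩
        have hcsplit : c = c^(1-lam) * c^lam := by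
          rw [← ENNReal.rpow_add _ _ hc0 hcT]
          norm_num
        have hlt : c < h (a*x + b*y) := by
          calc c = c^(1-lam) * c^lam := hcsplit
            _ < (f x)^(1-lam) * c^lam := by
                refine ENNReal.mul_lt_mul_left ?_ ?_
                  (ENNReal.rpow_lt_rpow hx h1l)
                · exact (ENNReal.rpow_pos (pos_iff_ne_zero.mpr hc0) hcT).ne'
                · exact (ENNReal.rpow_lt_top_of_nonneg hlam0.le hcT).ne
            _ ≤ (f x)^(1-lam) * (g y)^lam :=
                mul_le_mul_right (ENNReal.rpow_le_rpow hy.le hlam0.le) _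
            _ ≤ h (a*x + b*y) := hyp x y
        exact lt_min hlt hc1
      have hUm : MeasurableSet {s | c < f s} := hf measurableSet_Ioi
      have hVm : MeasurableSet {s | c < g s} := hg measurableSet_Ioi
      calc ENNReal.ofReal a * μ₁ {s | c < f s} + ENNReal.ofReal b * μ₁ {s | c < g s}
          ≤ μ₁ {z | ∃ x ∈ {s | c < f s}, ∃ y ∈ {s | c < g s}, z = a*x + b*y} := by
            rw [hμ₁]
            exact lemB φ hφm hqc hmax a b ha hb hab _ _ hUm hVm hU0 hV0
        _ ≤ μ₁ {s | c < h₂ s} := measure_mono incl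
    · have he1 : {s | ENNReal.ofReal t < f s} = ∅ := by
        apply eq_empty_iff_forall_notMem.mpr
        intro s hs
        have : (1:ℝ≥0∞) ≤ ENNReal.ofReal t := ENNReal.one_le_ofReal.mpr (not_lt.mp ht1)
        exact absurd (lt_of_le_of_lt this hs) (not_lt.mpr (hf1 s))
      have he2 : {s | ENNReal.ofReal t < g s} = ∅ := by
        apply eq_empty_iff_forall_notMem.mpr
        intro s hs
        have : (1:ℝ≥0∞) ≤ ENNReal.ofReal t := ENNReal.one_le_ofReal.mpr (not_lt.mp ht1)
        exact absurd (lt_of_le_of_lt this hs) (not_lt.mpr (hg1 s))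
      simp [he1, he2]
  have hmf : Measurable fun t : ℝ => μ₁ {s | ENNReal.ofReal t < f s} := by
    apply Antitone.measurable
    intro t₁ t₂ hle
    exact measure_mono fun s hs => lt_of_le_of_lt (ENNReal.ofReal_le_ofReal hle) hs
  calc ENNReal.ofReal a * ∫⁻ s, f s ∂μ₁ + ENNReal.ofReal b * ∫⁻ s, g s ∂μ₁
      = ∫⁻ t in Ioi (0:ℝ), (ENNReal.ofReal a * μ₁ {s | ENNReal.ofReal t < f s}
          + ENNReal.ofReal b * μ₁ {s | ENNReal.ofReal t < g s}) := by
        rw [layer f hf hf1, layer g hg hg1,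
          ← lintegral_const_mul' _ _ ENNReal.ofReal_ne_top,
          ← lintegral_const_mul' _ _ ENNReal.ofReal_ne_top,
          ← lintegral_add_left (hmf.const_mul _)]
    _ ≤ ∫⁻ t in Ioi (0:ℝ), μ₁ {s | ENNReal.ofReal t < h₂ s} := by
        refine lintegral_mono_ae ?_
        filter_upwards [ae_restrict_mem measurableSet_Ioi] with t ht
        exact key t ht
    _ = ∫⁻ s, h₂ s ∂μ₁ := (layer h₂ hh₂m fun s => min_le_right _ _).symm
    _ ≤ ∫⁻ s, h s ∂μ₁ := lintegral_mono fun s => min_le_left _ _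

lemma lemC (φ : ℝ → ℝ) (hφm : Measurable φ)
    (hqc : ∀ x y : ℝ, ∀ τ ∈ Set.Icc (0:ℝ) 1, min (φ x) (φ y) ≤ φ ((1 - τ) * x + τ * y))
    (hmax : ∀ x, φ x ≤ φ 0)
    (μ₁ : Measure ℝ) [SigmaFinite μ₁]
    (hμ₁ : μ₁ = volume.withDensity fun x => ENNReal.ofReal (φ x))
    (lam a b : ℝ) (hlam0 : 0 < lam) (hlam1 : lam < 1)
    (ha : 0 < a) (hb : 0 < b) (hab : a + b ≤ 1)
    (f g h : ℝ → ℝ≥0∞) (hf : Measurable f) (hg : Measurable g) (hh : Measurable h)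
    (hf0 : ∀ s, f s ≤ f 0) (hg0 : ∀ s, g s ≤ g 0)
    (hyp : ∀ x y, f x ^ (1-lam) * g y ^ lam ≤ h (a*x + b*y)) :
    ENNReal.ofReal ((a/(1-lam))^(1-lam) * (b/lam)^lam)
        * (∫⁻ s, f s ∂μ₁) ^ (1-lam) * (∫⁻ s, g s ∂μ₁) ^ lam
      ≤ ∫⁻ s, h s ∂μ₁ := by
  have h1l : 0 < 1 - lam := by linarith
  set C := (a/(1-lam))^(1-lam) * (b/lam)^lam with hC
  -- bounded case
  have C2 : ∀ f g : ℝ → ℝ≥0∞, Measurable f → Measurable g →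
      (∀ s, f s ≤ f 0) → (∀ s, g s ≤ g 0) → f 0 ≠ ⊤ → g 0 ≠ ⊤ →
      (∀ x y, f x ^ (1-lam) * g y ^ lam ≤ h (a*x + b*y)) →
      ENNReal.ofReal C * (∫⁻ s, f s ∂μ₁) ^ (1-lam) * (∫⁻ s, g s ∂μ₁) ^ lam
        ≤ ∫⁻ s, h s ∂μ₁ := by
    intro f g hf hg hf0 hg0 hfT hgT hyp
    by_cases hf00 : f 0 = 0
    · have hz : ∀ s, f s = 0 := fun s => le_antisymm (hf00 ▸ hf0 s) (zero_le)
      have : ∫⁻ s, f s ∂μ₁ = 0 := by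
        rw [lintegral_congr hz]; simp
      rw [this, ENNReal.zero_rpow_of_pos h1l, mul_zero, zero_mul]
      exact zero_le
    by_cases hg00 : g 0 = 0
    · have hz : ∀ s, g s = 0 := fun s => le_antisymm (hg00 ▸ hg0 s) (zero_le)
      have : ∫⁻ s, g s ∂μ₁ = 0 := by
        rw [lintegral_congr hz]; simp
      rw [this, ENNReal.zero_rpow_of_pos hlam0, mul_zero]
      exact zero_le
    · set Sf := f 0 with hSf
      set Sg := g 0 with hSg
      set D := Sf ^ (1-lam) * Sg ^ lam with hD
      have hSfrpow0 : Sf ^ (1-lam) ≠ 0 := (ENNReal.rpow_pos (pos_iff_ne_zero.mpr hf00) hfT).ne'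
      have hSgrpow0 : Sg ^ lam ≠ 0 := (ENNReal.rpow_pos (pos_iff_ne_zero.mpr hg00) hgT).ne'
      have hSfrpowT : Sf ^ (1-lam) ≠ ⊤ := (ENNReal.rpow_lt_top_of_nonneg h1l.le hfT).ne
      have hSgrpowT : Sg ^ lam ≠ ⊤ := (ENNReal.rpow_lt_top_of_nonneg hlam0.le hgT).ne
      have hD0 : D ≠ 0 := mul_ne_zero hSfrpow0 hSgrpow0
      have hDT : D ≠ ⊤ := ENNReal.mul_ne_top hSfrpowT hSgrpowT
      set f₁ := fun s => f s * Sf⁻¹ with hf₁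
      set g₁ := fun s => g s * Sg⁻¹ with hg₁
      set h₁ := fun s => h s * D⁻¹ with hh₁
      have hcancel : Sf * Sf⁻¹ = 1 := ENNReal.mul_inv_cancel hf00 hfT
      have hcancelg : Sg * Sg⁻¹ = 1 := ENNReal.mul_inv_cancel hg00 hgT
      have hf₁1 : ∀ s, f₁ s ≤ 1 := fun s => by
        rw [hf₁, ← hcancel]; exact mul_le_mul_left (hf0 s) _
      have hg₁1 : ∀ s, g₁ s ≤ 1 := fun s => by
        rw [hg₁, ← hcancelg]; exact mul_le_mul_left (hg0 s) _
      have hyp₁ : ∀ x y, f₁ x ^ (1-lam) * g₁ y ^ lam ≤ h₁ (a*x + b*y) := by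
        intro x y
        have e : f₁ x ^ (1-lam) * g₁ y ^ lam = (f x ^ (1-lam) * g y ^ lam) * D⁻¹ := by
          rw [hf₁, hg₁, ENNReal.mul_rpow_of_nonneg _ _ h1l.le,
            ENNReal.mul_rpow_of_nonneg _ _ hlam0.le, ENNReal.inv_rpow, ENNReal.inv_rpow,
            hD, ENNReal.mul_inv (Or.inl hSfrpow0) (Or.inl hSfrpowT)]
          ring
        rw [e, hh₁]
        exact mul_le_mul_left (hyp x y) _
      have base := lemC1 φ hφm hqc hmax μ₁ hμ₁ lam a b hlam0 hlam1 ha.le hb.le hab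
        f₁ g₁ h₁ (hf.mul_const _) (hg.mul_const _) (hh.mul_const _) hf₁1 hg₁1
        (by rw [hf₁]; exact hcancel) (by rw [hg₁]; exact hcancelg) hyp₁
      have amgm := ennreal_geom_mean_weighted lam a b hlam0 hlam1 ha hb
        (∫⁻ s, f₁ s ∂μ₁) (∫⁻ s, g₁ s ∂μ₁)
      have hIf : ∫⁻ s, f₁ s ∂μ₁ = (∫⁻ s, f s ∂μ₁) * Sf⁻¹ :=
        lintegral_mul_const' _ _ (ENNReal.inv_ne_top.mpr hf00)
      have hIg : ∫⁻ s, g₁ s ∂μ₁ = (∫⁻ s, g s ∂μ₁) * Sg⁻¹ :=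
        lintegral_mul_const' _ _ (ENNReal.inv_ne_top.mpr hg00)
      have hIh : ∫⁻ s, h₁ s ∂μ₁ = (∫⁻ s, h s ∂μ₁) * D⁻¹ :=
        lintegral_mul_const' _ _ (ENNReal.inv_ne_top.mpr hD0)
      have e2 : ENNReal.ofReal C * (∫⁻ s, f₁ s ∂μ₁) ^ (1-lam) * (∫⁻ s, g₁ s ∂μ₁) ^ lam
          = (ENNReal.ofReal C * (∫⁻ s, f s ∂μ₁) ^ (1-lam) * (∫⁻ s, g s ∂μ₁) ^ lam) * D⁻¹ := by
        rw [hIf, hIg, ENNReal.mul_rpow_of_nonneg _ _ h1l.le,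
          ENNReal.mul_rpow_of_nonneg _ _ hlam0.le, ENNReal.inv_rpow, ENNReal.inv_rpow,
          hD, ENNReal.mul_inv (Or.inl hSfrpow0) (Or.inl hSfrpowT)]
        ring
      have final : (ENNReal.ofReal C * (∫⁻ s, f s ∂μ₁) ^ (1-lam)
          * (∫⁻ s, g s ∂μ₁) ^ lam) * D⁻¹ ≤ (∫⁻ s, h s ∂μ₁) * D⁻¹ := by
        rw [← e2, ← hIh]
        exact le_trans amgm base
      exact (ENNReal.mul_le_mul_iff_left (ENNReal.inv_ne_zero.mpr hDT)
        (ENNReal.inv_ne_top.mpr hD0)).mp final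
  -- truncation
  have trunc : ∀ m k : ℕ,
      ENNReal.ofReal C * (∫⁻ s, min (f s) (m:ℝ≥0∞) ∂μ₁) ^ (1-lam)
        * (∫⁻ s, min (g s) (k:ℝ≥0∞) ∂μ₁) ^ lam ≤ ∫⁻ s, h s ∂μ₁ := by
    intro m k
    refine C2 (fun s => min (f s) (m:ℝ≥0∞)) (fun s => min (g s) (k:ℝ≥0∞))
      (hf.min measurable_const) (hg.min measurable_const)
      (fun s => min_le_min (hf0 s) le_rfl) (fun s => min_le_min (hg0 s) le_rfl)
      (ne_top_of_le_ne_top (ENNReal.natCast_ne_top m) (min_le_right _ _))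
      (ne_top_of_le_ne_top (ENNReal.natCast_ne_top k) (min_le_right _ _)) ?_
    intro x y
    refine le_trans ?_ (hyp x y)
    exact mul_le_mul' (ENNReal.rpow_le_rpow (min_le_left _ _) h1l.le)
      (ENNReal.rpow_le_rpow (min_le_left _ _) hlam0.le)
  have hmonof : Monotone fun m : ℕ => ∫⁻ s, min (f s) (m:ℝ≥0∞) ∂μ₁ := by
    intro m₁ m₂ hle
    exact lintegral_mono fun s => min_le_min le_rfl (Nat.cast_le.mpr hle)
  have hmonog : Monotone fun k : ℕ => ∫⁻ s, min (g s) (k:ℝ≥0∞) ∂μ₁ := by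
    intro m₁ m₂ hle
    exact lintegral_mono fun s => min_le_min le_rfl (Nat.cast_le.mpr hle)
  have hfs : ∫⁻ s, f s ∂μ₁ = ⨆ m : ℕ, ∫⁻ s, min (f s) (m:ℝ≥0∞) ∂μ₁ := by
    calc ∫⁻ s, f s ∂μ₁ = ∫⁻ s, ⨆ m : ℕ, min (f s) (m:ℝ≥0∞) ∂μ₁ :=
          lintegral_congr fun s => (iSup_min_natCast (f s)).symm
      _ = ⨆ m : ℕ, ∫⁻ s, min (f s) (m:ℝ≥0∞) ∂μ₁ :=
          lintegral_iSup (fun m => hf.min measurable_const)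
            (fun m₁ m₂ hle s => min_le_min le_rfl (Nat.cast_le.mpr hle))
  have hgs : ∫⁻ s, g s ∂μ₁ = ⨆ k : ℕ, ∫⁻ s, min (g s) (k:ℝ≥0∞) ∂μ₁ := by
    calc ∫⁻ s, g s ∂μ₁ = ∫⁻ s, ⨆ k : ℕ, min (g s) (k:ℝ≥0∞) ∂μ₁ :=
          lintegral_congr fun s => (iSup_min_natCast (g s)).symm
      _ = ⨆ k : ℕ, ∫⁻ s, min (g s) (k:ℝ≥0∞) ∂μ₁ :=
          lintegral_iSup (fun k => hg.min measurable_const)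
            (fun m₁ m₂ hle s => min_le_min le_rfl (Nat.cast_le.mpr hle))
  have hrpow_sup : ∀ (X : ℕ → ℝ≥0∞) (r : ℝ), Monotone X → 0 < r →
      (⨆ m, X m) ^ r = ⨆ m, (X m) ^ r := by
    intro X r hX hr
    refine Monotone.map_iSup_of_continuousAt ?_
      (fun u v huv => ENNReal.rpow_le_rpow huv hr.le) ?_
    · exact ENNReal.continuous_rpow_const.continuousAt
    · show (⊥ : ℝ≥0∞) ^ r = ⊥
      simp [ENNReal.zero_rpow_of_pos hr]
  rw [hfs, hgs, hrpow_sup _ _ hmonof h1l, hrpow_sup _ _ hmonog hlam0]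
  rw [ENNReal.mul_iSup]
  refine iSup_le fun k => ?_
  rw [ENNReal.mul_iSup, ENNReal.iSup_mul]
  exact iSup_le fun m => trunc m k
lemma transport {n : ℕ} (μ : Fin (n+1) → Measure ℝ) [∀ i, SigmaFinite (μ i)]
    (T : (Fin (n+1) → ℝ) → ℝ≥0∞) (hT : Measurable T) :
    ∫⁻ x, T x ∂Measure.pi μ
      = ∫⁻ s, ∫⁻ y, T (Fin.cons s y) ∂Measure.pi (fun j : Fin n => μ j.succ) ∂μ 0 := by
  have mp := measurePreserving_piFinSuccAbove μ 0
  set e := MeasurableEquiv.piFinSuccAbove (fun _ : Fin (n+1) => ℝ) 0 with he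
  have hsymm : ∀ (s : ℝ) (y : Fin n → ℝ), e.symm (s, y) = Fin.cons s y := by
    intro s y
    funext i
    refine Fin.cases ?_ (fun j => ?_) i
    · simp [he, MeasurableEquiv.piFinSuccAbove]
    · simp [he, MeasurableEquiv.piFinSuccAbove]
  have hTe : Measurable (fun z : ℝ × (Fin n → ℝ) => T (e.symm z)) :=
    hT.comp e.symm.measurable
  have h1 : ∫⁻ x, T x ∂Measure.pi μ
      = ∫⁻ z, T (e.symm z) ∂((μ 0).prod (Measure.pi fun j : Fin n => μ ((0:Fin (n+1)).succAbove j))) := by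
    rw [← mp.lintegral_comp hTe]
    refine lintegral_congr fun x => ?_
    rw [e.symm_apply_apply]
  rw [h1]
  have h2 : (Measure.pi fun j : Fin n => μ ((0:Fin (n+1)).succAbove j))
      = Measure.pi (fun j : Fin n => μ j.succ) := by
    congr 1
  rw [h2, lintegral_prod _ ?_]
  · refine lintegral_congr fun s => lintegral_congr fun y => ?_
    rw [hsymm]
  · exact (hT.comp e.symm.measurable).aemeasurable

lemma lemD (lam a b : ℝ) (hlam0 : 0 < lam) (hlam1 : lam < 1)
    (ha : 0 < a) (hb : 0 < b) (hab : a + b ≤ 1)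
    (hC0 : 0 < (a/(1-lam))^(1-lam) * (b/lam)^lam) :
    ∀ (n : ℕ) (μ : Fin n → Measure ℝ) (_ : ∀ i, SigmaFinite (μ i))
      (φ : Fin n → ℝ → ℝ) (_ : ∀ i, Measurable (φ i))
      (_ : ∀ i, μ i = volume.withDensity fun x => ENNReal.ofReal (φ i x))
      (_ : ∀ i, ∀ x y : ℝ, ∀ τ ∈ Set.Icc (0:ℝ) 1,
        min (φ i x) (φ i y) ≤ φ i ((1-τ)*x + τ*y))
      (_ : ∀ i x, φ i x ≤ φ i 0)
      (f g h : (Fin n → ℝ) → ℝ≥0∞) (_ : Measurable f) (_ : Measurable g) (_ : Measurable h)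
      (_ : ∀ x (ε : Fin n → Bool), f x ≤ f (fun i => if ε i then x i else 0))
      (_ : ∀ x (ε : Fin n → Bool), g x ≤ g (fun i => if ε i then x i else 0))
      (_ : ∀ x y, f x ^ (1-lam) * g y ^ lam ≤ h (fun i => a * x i + b * y i)),
      ENNReal.ofReal ((a/(1-lam))^(1-lam) * (b/lam)^lam) ^ n
        * (∫⁻ x, f x ∂Measure.pi μ) ^ (1-lam) * (∫⁻ x, g x ∂Measure.pi μ) ^ lam
        ≤ ∫⁻ x, h x ∂Measure.pi μ := by
  have h1l : 0 < 1 - lam := by linarith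
  set K := ENNReal.ofReal ((a/(1-lam))^(1-lam) * (b/lam)^lam) with hK
  have hK0 : K ≠ 0 := (ENNReal.ofReal_pos.mpr hC0).ne'
  have hKT : K ≠ ⊤ := ENNReal.ofReal_ne_top
  have hKsplit : ∀ m : ℕ, (K^m) ^ (1-lam) * (K^m) ^ lam = K^m := by
    intro m
    rw [← ENNReal.rpow_natCast K m, ← ENNReal.rpow_mul, ← ENNReal.rpow_mul,
      ← ENNReal.rpow_add _ _ hK0 hKT]
    congr 1
    ring
  intro n
  induction n with
  | zero =>
    intro μ hσ φ hφm hμ hqc hmax f g h hf hg hh hfP hgP hyp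
    haveI := hσ
    have hconst : ∀ (F : (Fin 0 → ℝ) → ℝ≥0∞) (x : Fin 0 → ℝ), F x = F (fun _ => 0) :=
      fun F x => congrArg F (Subsingleton.elim _ _)
    have huniv : Measure.pi μ Set.univ = 1 := by
      rw [Measure.pi_univ]; simp
    have hint : ∀ F : (Fin 0 → ℝ) → ℝ≥0∞, ∫⁻ x, F x ∂Measure.pi μ = F (fun _ => 0) := by
      intro F
      rw [lintegral_congr (hconst F), lintegral_const, huniv, mul_one]
    rw [hint, hint, hint, pow_zero, one_mul]
    refine le_trans (hyp (fun _ => 0) (fun _ => 0)) (le_of_eq ?_)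
    exact congrArg h (Subsingleton.elim _ _)
  | succ n ih =>
    intro μ hσ φ hφm hμ hqc hmax f g h hf hg hh hfP hgP hyp
    haveI := hσ
    set μ' := fun j : Fin n => μ j.succ with hμ'
    haveI : ∀ j, SigmaFinite (μ' j) := fun j => hσ _
    have hconsPair : Measurable fun z : ℝ × (Fin n → ℝ) => (Fin.cons z.1 z.2 : Fin (n+1) → ℝ) := by
      refine measurable_pi_iff.mpr fun i => ?_
      refine Fin.cases ?_ (fun j => ?_) i
      · simpa using measurable_fst
      · simpa [Function.comp_def] using (measurable_pi_apply j).comp measurable_snd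
    set F := fun s : ℝ => ∫⁻ y, f (Fin.cons s y) ∂Measure.pi μ' with hF
    set G := fun s : ℝ => ∫⁻ y, g (Fin.cons s y) ∂Measure.pi μ' with hG
    set H := fun s : ℝ => ∫⁻ y, h (Fin.cons s y) ∂Measure.pi μ' with hH
    have hFm : Measurable F := Measurable.lintegral_prod_right' (hf.comp hconsPair)
    have hGm : Measurable G := Measurable.lintegral_prod_right' (hg.comp hconsPair)
    have hHm : Measurable H := Measurable.lintegral_prod_right' (hh.comp hconsPair)
    -- section inequality from ih
    have ihsec : ∀ s₁ s₂ : ℝ, K^n * F s₁ ^ (1-lam) * G s₂ ^ lam ≤ H (a*s₁ + b*s₂) := by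
      intro s₁ s₂
      refine ih μ' (fun j => hσ _) (fun j => φ j.succ) (fun j => hφm _) (fun j => hμ _)
        (fun j => hqc _) (fun j x => hmax _ x)
        (fun x => f (Fin.cons s₁ x)) (fun y => g (Fin.cons s₂ y))
        (fun z => h (Fin.cons (a*s₁ + b*s₂) z))
        (hf.comp ((hconsPair.comp (measurable_prodMk_left (x := s₁)))))
        (hg.comp ((hconsPair.comp (measurable_prodMk_left (x := s₂)))))
        (hh.comp ((hconsPair.comp (measurable_prodMk_left (x := a*s₁+b*s₂)))))
        ?_ ?_ ?_
      · intro x ε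
        have := hfP (Fin.cons s₁ x) (Fin.cons true ε)
        refine le_trans this (le_of_eq (congrArg f ?_))
        funext i
        refine Fin.cases ?_ (fun j => ?_) i
        · simp
        · simp
      · intro x ε
        have := hgP (Fin.cons s₂ x) (Fin.cons true ε)
        refine le_trans this (le_of_eq (congrArg g ?_))
        funext i
        refine Fin.cases ?_ (fun j => ?_) i
        · simp
        · simp
      · intro x y
        have := hyp (Fin.cons s₁ x) (Fin.cons s₂ y)
        refine le_trans this (le_of_eq (congrArg h ?_))
        funext i
        refine Fin.cases ?_ (fun j => ?_) i
        · simp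
        · simp
    -- apply 1-D lemma
    have hFP : ∀ s, F s ≤ F 0 := by
      intro s
      refine lintegral_mono fun y => ?_
      have := hfP (Fin.cons s y) (Fin.cons false (fun _ => true))
      refine le_trans this (le_of_eq (congrArg f ?_))
      funext i
      refine Fin.cases ?_ (fun j => ?_) i
      · simp
      · simp
    have hGP : ∀ s, G s ≤ G 0 := by
      intro s
      refine lintegral_mono fun y => ?_
      have := hgP (Fin.cons s y) (Fin.cons false (fun _ => true))
      refine le_trans this (le_of_eq (congrArg g ?_))
      funext i
      refine Fin.cases ?_ (fun j => ?_) i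
      · simp
      · simp
    have hyp1 : ∀ s₁ s₂ : ℝ, (K^n * F s₁) ^ (1-lam) * (K^n * G s₂) ^ lam
        ≤ H (a*s₁ + b*s₂) := by
      intro s₁ s₂
      refine le_trans (le_of_eq ?_) (ihsec s₁ s₂)
      rw [ENNReal.mul_rpow_of_nonneg _ _ h1l.le, ENNReal.mul_rpow_of_nonneg _ _ hlam0.le]
      calc (K^n)^(1-lam) * F s₁ ^ (1-lam) * ((K^n)^lam * G s₂ ^ lam)
          = ((K^n)^(1-lam) * (K^n)^lam) * F s₁ ^ (1-lam) * G s₂ ^ lam := by ring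
        _ = K^n * F s₁ ^ (1-lam) * G s₂ ^ lam := by rw [hKsplit]
    have base := lemC (φ 0) (hφm 0) (hqc 0) (fun x => hmax 0 x) (μ 0) (hμ 0)
      lam a b hlam0 hlam1 ha hb hab
      (fun s => K^n * F s) (fun s => K^n * G s) H
      (hFm.const_mul _) (hGm.const_mul _) hHm
      (fun s => mul_le_mul_right (hFP s) _) (fun s => mul_le_mul_right (hGP s) _)
      hyp1
    have hIF : ∫⁻ s, K^n * F s ∂μ 0 = K^n * ∫⁻ s, F s ∂μ 0 :=
      lintegral_const_mul' _ _ (ENNReal.pow_ne_top hKT)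
    have hIG : ∫⁻ s, K^n * G s ∂μ 0 = K^n * ∫⁻ s, G s ∂μ 0 :=
      lintegral_const_mul' _ _ (ENNReal.pow_ne_top hKT)
    rw [hIF, hIG] at base
    have htf := transport μ f hf
    have htg := transport μ g hg
    have hth := transport μ h hh
    rw [htf, htg, hth]
    refine le_trans (le_of_eq ?_) base
    rw [ENNReal.mul_rpow_of_nonneg _ _ h1l.le, ENNReal.mul_rpow_of_nonneg _ _ hlam0.le]
    calc K^(n+1) * (∫⁻ s, F s ∂μ 0) ^ (1-lam) * (∫⁻ s, G s ∂μ 0) ^ lam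
        = (K * ((K^n)^(1-lam) * (K^n)^lam)) * (∫⁻ s, F s ∂μ 0) ^ (1-lam)
            * (∫⁻ s, G s ∂μ 0) ^ lam := by rw [hKsplit]; ring
      _ = ENNReal.ofReal ((a/(1-lam))^(1-lam) * (b/lam)^lam)
            * ((K^n)^(1-lam) * (∫⁻ s, F s ∂μ 0) ^ (1-lam))
            * ((K^n)^lam * (∫⁻ s, G s ∂μ 0) ^ lam) := by rw [← hK]; ring

/-- The `L_p`-Minkowski combination `α ·_p A +_p β ·_p B`. -/
def lpComb {V : Type*} [AddCommGroup V] [Module ℝ V] (p α β : ℝ) (A B : Set V) : Set V :=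
  {z | ∃ x ∈ A, ∃ y ∈ B, ∃ l ∈ Set.Icc (0:ℝ) 1,
    z = (α ^ (1/p) * (1 - l) ^ ((p-1)/p)) • x + (β ^ (1/p) * l ^ ((p-1)/p)) • y}

/-- A set `A ⊆ ℝ^n` is weakly unconditional if replacing any subset of the coordinates of any
of its points by `0` stays inside `A`. -/
def WeaklyUnconditionalSet {n : ℕ} (A : Set (Fin n → ℝ)) : Prop :=
  ∀ x ∈ A, ∀ ε : Fin n → Bool, (fun i => if ε i then x i else 0) ∈ A

/-- **L_p-Prékopa–Leindler type inequality for product measures with quasi-concave densities,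
set version.** -/
theorem lp_prekopa_leindler_product_sets
    (n : ℕ) (p t : ℝ) (hp : 1 < p) (ht : t ∈ Set.Ioo (0:ℝ) 1)
    (μ : Fin n → Measure ℝ) [∀ i, SigmaFinite (μ i)]
    (φ : Fin n → ℝ → ℝ) (hφ0 : ∀ i x, 0 ≤ φ i x) (hφm : ∀ i, Measurable (φ i))
    (hμ : ∀ i, μ i = volume.withDensity (fun x => ENNReal.ofReal (φ i x)))
    (hφqc : ∀ i, ∀ x y : ℝ, ∀ τ ∈ Set.Icc (0:ℝ) 1,
      min (φ i x) (φ i y) ≤ φ i ((1 - τ) * x + τ * y))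
    (hφmax : ∀ i x, φ i x ≤ φ i 0)
    (A B : Set (Fin n → ℝ)) (hA : MeasurableSet A) (hB : MeasurableSet B)
    (hAu : WeaklyUnconditionalSet A) (hBu : WeaklyUnconditionalSet B)
    (hABm : MeasurableSet (lpComb p (1 - t) t A B))
    (l : ℝ) (hl : l ∈ Set.Ioo (0:ℝ) 1) :
    ENNReal.ofReal (((((1 - t)/(1 - l)) ^ (1 - l)) * ((t/l) ^ l)) ^ ((n : ℝ)/p))
        * (Measure.pi μ) A ^ (1 - l) * (Measure.pi μ) B ^ l
      ≤ (Measure.pi μ) (lpComb p (1 - t) t A B) := by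
  obtain ⟨ht0, ht1⟩ := ht
  obtain ⟨hl0, hl1⟩ := hl
  have hp0 : 0 < p := by linarith
  have h1t : 0 < 1 - t := by linarith
  have h1l : 0 < 1 - l := by linarith
  set a := (1-t)^(1/p) * (1-l)^((p-1)/p) with ha_def
  set b := t^(1/p) * l^((p-1)/p) with hb_def
  have ha : 0 < a := mul_pos (Real.rpow_pos_of_pos h1t _) (Real.rpow_pos_of_pos h1l _)
  have hb : 0 < b := mul_pos (Real.rpow_pos_of_pos ht0 _) (Real.rpow_pos_of_pos hl0 _)
  have hw : 1/p + (p-1)/p = 1 := by field_simp; ring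
  have hab : a + b ≤ 1 := by
    have hw1 : (0:ℝ) ≤ 1/p := by positivity
    have hw2 : (0:ℝ) ≤ (p-1)/p := div_nonneg (by linarith) hp0.le
    have h1 := Real.geom_mean_le_arith_mean2_weighted hw1 hw2 h1t.le h1l.le hw
    have h2 := Real.geom_mean_le_arith_mean2_weighted hw1 hw2 ht0.le hl0.le hw
    have e : 1/p * (1-t) + (p-1)/p * (1-l) + (1/p * t + (p-1)/p * l) = 1 := by
      field_simp
      ring
    rw [ha_def, hb_def]
    linarith
  have hadiv : a / (1-l) = ((1-t)/(1-l))^(1/p) := by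
    have hsplit : (1-l) = (1-l)^((p-1)/p) * (1-l)^(1/p) := by
      rw [← Real.rpow_add h1l]
      rw [show (p-1)/p + 1/p = 1 by field_simp; ring, Real.rpow_one]
    calc a/(1-l) = ((1-t)^(1/p) * (1-l)^((p-1)/p)) / ((1-l)^((p-1)/p) * (1-l)^(1/p)) := by
          rw [← hsplit]
      _ = (1-t)^(1/p) / (1-l)^(1/p) := by
          rw [mul_comm ((1-t)^(1/p)) _, mul_div_mul_left _ _ (Real.rpow_pos_of_pos h1l _).ne']
      _ = ((1-t)/(1-l))^(1/p) := (Real.div_rpow h1t.le h1l.le _).symm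
  have hbdiv : b / l = (t/l)^(1/p) := by
    have hsplit : l = l^((p-1)/p) * l^(1/p) := by
      rw [← Real.rpow_add hl0]
      rw [show (p-1)/p + 1/p = 1 by field_simp; ring, Real.rpow_one]
    calc b/l = (t^(1/p) * l^((p-1)/p)) / (l^((p-1)/p) * l^(1/p)) := by
          rw [← hsplit]
      _ = t^(1/p) / l^(1/p) := by
          rw [mul_comm (t^(1/p)) _, mul_div_mul_left _ _ (Real.rpow_pos_of_pos hl0 _).ne']
      _ = (t/l)^(1/p) := (Real.div_rpow ht0.le hl0.le _).symm
  set C := (a/(1-l))^(1-l) * (b/l)^l with hC_def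
  have hC0 : 0 < C := by
    rw [hC_def]
    positivity
  -- constant identification
  have hconst : (ENNReal.ofReal C)^n
      = ENNReal.ofReal (((((1 - t)/(1 - l)) ^ (1 - l)) * ((t/l) ^ l)) ^ ((n : ℝ)/p)) := by
    rw [← ENNReal.ofReal_pow hC0.le]
    congr 1
    have hx : (0:ℝ) < (1-t)/(1-l) := by positivity
    have hy : (0:ℝ) < t/l := by positivity
    rw [← Real.rpow_natCast C n, hC_def, hadiv, hbdiv,
      ← Real.rpow_mul hx.le, ← Real.rpow_mul hy.le,
      Real.mul_rpow (Real.rpow_nonneg hx.le _) (Real.rpow_nonneg hy.le _),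
      ← Real.rpow_mul hx.le, ← Real.rpow_mul hy.le,
      Real.mul_rpow (Real.rpow_nonneg hx.le _) (Real.rpow_nonneg hy.le _),
      ← Real.rpow_mul hx.le, ← Real.rpow_mul hy.le]
    congr 1 <;> [skip; skip] <;> congr 1 <;> ring
  -- functions
  set f := A.indicator (1 : (Fin n → ℝ) → ℝ≥0∞) with hf_def
  set g := B.indicator (1 : (Fin n → ℝ) → ℝ≥0∞) with hg_def
  set h := (lpComb p (1 - t) t A B).indicator (1 : (Fin n → ℝ) → ℝ≥0∞) with hh_def
  have h1l' : 0 < 1 - l := h1l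
  have hyp : ∀ x y, f x ^ (1-l) * g y ^ l ≤ h (fun i => a * x i + b * y i) := by
    intro x y
    by_cases hx : x ∈ A
    · by_cases hy : y ∈ B
      · have hmem : (fun i => a * x i + b * y i) ∈ lpComb p (1 - t) t A B := by
          refine ⟨x, hx, y, hy, l, ⟨hl0.le, hl1.le⟩, ?_⟩
          funext i
          simp [ha_def, hb_def, smul_eq_mul]
        rw [hf_def, hg_def, hh_def, Set.indicator_of_mem hx, Set.indicator_of_mem hy,
          Set.indicator_of_mem hmem]
        simp
      · rw [hg_def, Set.indicator_of_notMem hy]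
        have : ((0:ℝ≥0∞)) ^ l = 0 := ENNReal.zero_rpow_of_pos hl0
        rw [this, mul_zero]
        exact zero_le
    · rw [hf_def, Set.indicator_of_notMem hx]
      have : ((0:ℝ≥0∞)) ^ (1-l) = 0 := ENNReal.zero_rpow_of_pos h1l'
      rw [this, zero_mul]
      exact zero_le
  have hfP : ∀ x (ε : Fin n → Bool), f x ≤ f (fun i => if ε i then x i else 0) := by
    intro x ε
    by_cases hx : x ∈ A
    · rw [hf_def, Set.indicator_of_mem hx, Set.indicator_of_mem (hAu x hx ε)]
      exact le_of_eq rfl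
    · rw [hf_def, Set.indicator_of_notMem hx]
      exact zero_le
  have hgP : ∀ x (ε : Fin n → Bool), g x ≤ g (fun i => if ε i then x i else 0) := by
    intro x ε
    by_cases hx : x ∈ B
    · rw [hg_def, Set.indicator_of_mem hx, Set.indicator_of_mem (hBu x hx ε)]
      exact le_of_eq rfl
    · rw [hg_def, Set.indicator_of_notMem hx]
      exact zero_le
  have main := lemD l a b hl0 hl1 ha hb hab hC0 n μ (fun i => inferInstance) φ hφm hμ
    hφqc hφmax f g h
    ((measurable_one (α := ℝ≥0∞)).indicator hA)
    ((measurable_one (α := ℝ≥0∞)).indicator hB)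
    ((measurable_one (α := ℝ≥0∞)).indicator hABm)
    hfP hgP hyp
  have hIf : ∫⁻ x, f x ∂Measure.pi μ = Measure.pi μ A := lintegral_indicator_one hA
  have hIg : ∫⁻ x, g x ∂Measure.pi μ = Measure.pi μ B := lintegral_indicator_one hB
  have hIh : ∫⁻ x, h x ∂Measure.pi μ = Measure.pi μ (lpComb p (1 - t) t A B) :=
    lintegral_indicator_one hABm
  rw [hIf, hIg, hIh, hconst] at main
  exact main
end

section
/- Let p > 1 and t ∈ (0,1). Let f, g, h : ℝ^n → [0,∞) be measurable functions, with f, g bounded, satisfying: for every x ∈ supp(f), y ∈ supp(g) and λ ∈ (0,1), h((1−t)^{1/p}(1−λ)^{(p−1)/p} x + t^{1/p} λ^{(p−1)/p} y) ≥ f(x)^{(1−t)^{1/p}(1−λ)^{(p−1)/p}} · g(y)^{t^{1/p} λ^{(p−1)/p}}. Then for every λ ∈ (0,1), ∫_{ℝ^n} h dx ≥ [((1−t)/(1−λ))^{1−λ} (t/λ)^{λ}]^{n/p} · (∫_{ℝ^n} f^{((1−t)/(1−λ))^{1/p}} dx)^{1−λ} · (∫_{ℝ^n} g^{(t/λ)^{1/p}}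 dx)^{λ}, where integration is with respect to Lebesgue measure. -/
open MeasureTheory Set
open scoped ENNReal Pointwise

theorem bm_one_dim (K L : Set ℝ) (hK : IsCompact K) (hL : IsCompact L) (hKn : K.Nonempty)
    (hLn : L.Nonempty) : volume K + volume L ≤ volume (K + L) := by
  obtain ⟨a, haK, ha⟩ := hK.exists_isMaxOn hKn (continuous_id.continuousOn)
  obtain ⟨b, hbL, hb⟩ := hL.exists_isMinOn hLn (continuous_id.continuousOn)
  have h1 : (· + b) '' K ⊆ K + L := fun z ⟨x, hx, hz⟩ => hz ▸ add_mem_add hx hbL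
  have h2 : (a + ·) '' L ⊆ K + L := fun z ⟨y, hy, hz⟩ => hz ▸ add_mem_add haK hy
  have hc1 : IsCompact ((· + b) '' K) := hK.image (by continuity)
  have key : volume ((· + b) '' K) + volume ((a + ·) '' L)
      ≤ volume ((· + b) '' K ∪ (a + ·) '' L) + volume ((· + b) '' K ∩ (a + ·) '' L) := by
    rw [measure_union_add_inter' hc1.measurableSet]
  have hinter : ((· + b) '' K ∩ (a + ·) '' L) ⊆ {a + b} := by
    rintro z ⟨⟨x, hx, rfl⟩, ⟨y, hy, hz⟩⟩
    have h3 : x ≤ a := ha hx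
    have h4 : b ≤ y := hb hy
    simp only [mem_singleton_iff]
    have hz' : a + y = x + b := hz
    linarith
  calc volume K + volume L = volume ((· + b) '' K) + volume ((a + ·) '' L) := by
        rw [Set.image_add_right, Set.image_add_left, measure_preimage_add_right,
          measure_preimage_add]
    _ ≤ volume ((· + b) '' K ∪ (a + ·) '' L) + volume ((· + b) '' K ∩ (a + ·) '' L) := key
    _ ≤ volume (K + L) + 0 := by
        gcongr
        · exact union_subset h1 h2
        · exact le_trans (measure_mono hinter) (by simp)
    _ = volume (K + L) := by simp

/-- Weighted 1-D Brunn-Minkowski for measurable sets, with outer set. -/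
theorem bm_weighted (t : ℝ) (ht : t ∈ Set.Ioo (0:ℝ) 1) (A B S : Set ℝ)
    (hA : MeasurableSet A) (hB : MeasurableSet B) (hAn : A.Nonempty) (hBn : B.Nonempty)
    (hS : (1 - t) • A + t • B ⊆ S) :
    ENNReal.ofReal (1 - t) * volume A + ENNReal.ofReal t * volume B ≤ volume S := by
  obtain ⟨x₀, hx₀⟩ := hAn
  obtain ⟨y₀, hy₀⟩ := hBn
  rw [hA.measure_eq_iSup_isCompact, hB.measure_eq_iSup_isCompact]
  simp_rw [ENNReal.mul_iSup, iSup_and']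
  refine ENNReal.biSup_add_biSup_le' (p := fun K => K ⊆ A ∧ IsCompact K)
    (q := fun L => L ⊆ B ∧ IsCompact L) ⟨∅, empty_subset _, isCompact_empty⟩
    ⟨∅, empty_subset _, isCompact_empty⟩ fun K ⟨hKA, hK⟩ L ⟨hLB, hL⟩ => ?_
  -- replace K, L by nonempty versions
  set K' := K ∪ {x₀}
  set L' := L ∪ {y₀}
  have hK' : IsCompact K' := hK.union isCompact_singleton
  have hL' : IsCompact L' := hL.union isCompact_singleton
  have hK'A : K' ⊆ A := union_subset hKA (by simpa using hx₀)
  have hL'B : L' ⊆ B := union_subset hLB (by simpa using hy₀)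
  have hmono : ENNReal.ofReal (1 - t) * volume K + ENNReal.ofReal t * volume L
      ≤ ENNReal.ofReal (1 - t) * volume K' + ENNReal.ofReal t * volume L' := by
    gcongr <;> [exact subset_union_left; exact subset_union_left]
  refine hmono.trans ?_
  have e1 : ENNReal.ofReal (1 - t) * volume K' = volume ((1 - t) • K') := by
    rw [Measure.addHaar_smul_of_nonneg volume (by linarith [ht.2] : (0:ℝ) ≤ 1 - t)]
    simp
  have e2 : ENNReal.ofReal t * volume L' = volume (t • L') := by
    rw [Measure.addHaar_smul_of_nonneg volume (le_of_lt ht.1)]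
    simp
  rw [e1, e2]
  calc volume ((1 - t) • K') + volume (t • L') ≤ volume ((1 - t) • K' + t • L') :=
        bm_one_dim _ _ (hK'.smul _) (hL'.smul _)
          (((singleton_nonempty x₀).inr (s := K)).smul_set)
          (((singleton_nonempty y₀).inr (s := L)).smul_set)
    _ ≤ volume S := measure_mono <| (add_subset_add (smul_set_mono hK'A) (smul_set_mono hL'B)).trans hS

theorem ennreal_geom_mean_s5 (t : ℝ) (ht : t ∈ Set.Ioo (0:ℝ) 1) (a b : ℝ≥0∞) :
    a ^ (1 - t) * b ^ t ≤ ENNReal.ofReal (1 - t) * a + ENNReal.ofReal t * b := by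
  obtain ⟨ht0, ht1⟩ := ht
  rcases eq_or_ne a ⊤ with rfl | ha
  · have : ENNReal.ofReal (1 - t) * ⊤ = ⊤ := by
      rw [ENNReal.mul_top]; simp [ENNReal.ofReal_eq_zero]; linarith
    simp [this]
  rcases eq_or_ne b ⊤ with rfl | hb
  · have : ENNReal.ofReal t * ⊤ = ⊤ := by
      rw [ENNReal.mul_top]; simp [ENNReal.ofReal_eq_zero]; linarith
    simp [this]
  rw [← ENNReal.ofReal_toReal ha, ← ENNReal.ofReal_toReal hb,
    ENNReal.ofReal_rpow_of_nonneg a.toReal_nonneg (by linarith),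
    ENNReal.ofReal_rpow_of_nonneg b.toReal_nonneg ht0.le,
    ← ENNReal.ofReal_mul (by positivity), ← ENNReal.ofReal_mul (by linarith),
    ← ENNReal.ofReal_mul ht0.le, ← ENNReal.ofReal_add (mul_nonneg (by linarith) ENNReal.toReal_nonneg) (mul_nonneg ht0.le ENNReal.toReal_nonneg)]
  exact ENNReal.ofReal_le_ofReal <|
    Real.geom_mean_le_arith_mean2_weighted (by linarith) ht0.le a.toReal_nonneg
      b.toReal_nonneg (by ring)

/-- lower layercake bound for ℝ≥0∞-valued functions. -/
theorem layercake_lower {α : Type*} [MeasurableSpace α] (μ : Measure α) (h : α → ℝ≥0∞)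
    (hm : Measurable h) :
    ∫⁻ s in Set.Ioi (0:ℝ), μ {z | ENNReal.ofReal s < h z} ≤ ∫⁻ z, h z ∂μ := by
  have key : ∀ m : ℕ, ∫⁻ s in Set.Ioi (0:ℝ), μ {z | ENNReal.ofReal s < min (h z) m}
      = ∫⁻ z, min (h z) m ∂μ := by
    intro m
    have hfin : ∀ z, min (h z) m ≠ ⊤ := fun z => ne_top_of_le_ne_top (by simp) (min_le_right _ _)
    have hmble : Measurable fun z => min (h z) m := hm.min measurable_const
    have heq := lintegral_eq_lintegral_meas_lt μ
      (f := fun z => (min (h z) (m:ℝ≥0∞)).toReal)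
      (Filter.Eventually.of_forall fun z => ENNReal.toReal_nonneg)
      (hmble.ennreal_toReal.aemeasurable)
    rw [show (fun z => ENNReal.ofReal (min (h z) (m:ℝ≥0∞)).toReal) = fun z => min (h z) m from
      funext fun z => ENNReal.ofReal_toReal (hfin z)] at heq
    rw [heq]
    apply setLIntegral_congr_fun measurableSet_Ioi
    exact fun s hs => by
      congr 1; ext z
      simp only [mem_setOf_eq]
      rw [ENNReal.ofReal_lt_iff_lt_toReal (le_of_lt hs) (hfin z)]
  have hmono : ∀ s : ℝ, Monotone fun m : ℕ => {z | ENNReal.ofReal s < min (h z) m} :=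
    fun s m k hmk z hz => by
      simp only [mem_setOf_eq] at hz ⊢
      exact lt_of_lt_of_le hz (min_le_min le_rfl (by exact_mod_cast hmk))
  calc ∫⁻ s in Set.Ioi (0:ℝ), μ {z | ENNReal.ofReal s < h z}
      = ∫⁻ s in Set.Ioi (0:ℝ), ⨆ m : ℕ, μ {z | ENNReal.ofReal s < min (h z) m} := by
        apply setLIntegral_congr_fun measurableSet_Ioi
        refine fun s hs => ?_
        dsimp only
        rw [← Directed.measure_iUnion ((hmono s).directed_le)]
        congr 1; ext z
        simp only [mem_iUnion, mem_setOf_eq, lt_min_iff]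
        refine ⟨fun hz => ?_, fun ⟨m, hm1, _⟩ => hm1⟩
        obtain ⟨m, hm2⟩ := exists_nat_gt s
        refine ⟨m, hz, ?_⟩
        rw [← ENNReal.ofReal_natCast]
        exact (ENNReal.ofReal_lt_ofReal_iff_of_nonneg (le_of_lt hs)).mpr hm2
      _ = ⨆ m : ℕ, ∫⁻ s in Set.Ioi (0:ℝ), μ {z | ENNReal.ofReal s < min (h z) m} := by
        refine lintegral_iSup (fun m => ?_) (fun m k hmk s => measure_mono (hmono s hmk))
        have : Antitone fun s : ℝ => μ {z | ENNReal.ofReal s < min (h z) m} :=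
          fun s₁ s₂ hs => measure_mono fun z hz =>
            lt_of_le_of_lt (ENNReal.ofReal_le_ofReal hs) hz
        exact this.measurable
      _ ≤ ∫⁻ z, h z ∂μ := by
        refine iSup_le fun m => ?_
        rw [key m]
        exact lintegral_mono fun z => min_le_left _ _

/-- layercake equality for functions bounded by 1, restricted to (0,1). -/
theorem layercake_eq_bdd {α : Type*} [MeasurableSpace α] (μ : Measure α) (F : α → ℝ≥0∞)
    (hm : Measurable F) (hb : ∀ z, F z ≤ 1) :
    ∫⁻ s in Set.Ioo (0:ℝ) 1, μ {z | ENNReal.ofReal s < F z} = ∫⁻ z, F z ∂μ := by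
  have hfin : ∀ z, F z ≠ ⊤ := fun z => ne_top_of_le_ne_top ENNReal.one_ne_top (hb z)
  have heq := lintegral_eq_lintegral_meas_lt μ (f := fun z => (F z).toReal)
    (Filter.Eventually.of_forall fun z => ENNReal.toReal_nonneg)
    (hm.ennreal_toReal.aemeasurable)
  rw [show (fun z => ENNReal.ofReal (F z).toReal) = F from
    funext fun z => ENNReal.ofReal_toReal (hfin z)] at heq
  rw [heq]
  have hsplit : Set.Ioi (0:ℝ) = Set.Ioo 0 1 ∪ Set.Ici 1 := by
    ext s; simp only [mem_Ioi, mem_union, mem_Ioo, mem_Ici]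
    constructor
    · intro hs; rcases lt_or_ge s 1 with h1 | h1; exacts [Or.inl ⟨hs, h1⟩, Or.inr h1]
    · rintro (⟨hs, _⟩ | hs); exacts [hs, by linarith]
  rw [hsplit, lintegral_union measurableSet_Ici
    (disjoint_left.mpr fun s hs hs' => absurd hs.2 (not_lt.mpr hs'))]
  have hzero : ∫⁻ s in Set.Ici (1:ℝ), μ {z | s < (F z).toReal} = 0 := by
    have hpt : ∀ s ∈ Set.Ici (1:ℝ), μ {z | s < (F z).toReal} = (fun _ : ℝ => (0:ℝ≥0∞)) s :=
      fun s hs => by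
        have hempty : {z | s < (F z).toReal} = ∅ := by
          ext z
          simp only [mem_setOf_eq, mem_empty_iff_false, iff_false, not_lt]
          calc (F z).toReal ≤ 1 := ENNReal.toReal_le_of_le_ofReal one_pos.le (by simpa using hb z)
            _ ≤ s := hs
        simp [hempty]
    rw [setLIntegral_congr_fun measurableSet_Ici hpt]
    simp
  rw [hzero, add_zero]
  apply setLIntegral_congr_fun measurableSet_Ioo
  refine fun s hs => ?_
  dsimp only
  congr 1; ext z
  simp only [mem_setOf_eq]
  rw [ENNReal.ofReal_lt_iff_lt_toReal hs.1.le (hfin z)]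

theorem pl_dim_one_bdd (t : ℝ) (ht : t ∈ Set.Ioo (0:ℝ) 1) (f g h : ℝ → ℝ≥0∞)
    (hf : Measurable f) (hg : Measurable g) (hh : Measurable h)
    (hfb : (⨆ x, f x) ≠ ⊤) (hgb : (⨆ x, g x) ≠ ⊤)
    (hc : ∀ x y, 0 < f x → 0 < g y → f x ^ (1 - t) * g y ^ t ≤ h ((1 - t) * x + t * y)) :
    (∫⁻ x, f x) ^ (1 - t) * (∫⁻ x, g x) ^ t ≤ ∫⁻ x, h x := by
  obtain ⟨ht0, ht1⟩ := ht
  set Sf := ⨆ x, f x with hSf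
  set Sg := ⨆ x, g x with hSg
  by_cases hSf0 : Sf = 0
  · have hzero : ∀ x, f x = 0 := fun x => le_antisymm ((le_iSup f x).trans hSf0.le) zero_le
    rw [show (fun x => f x) = fun _ => (0:ℝ≥0∞) from funext hzero]
    simp [ENNReal.zero_rpow_of_pos (by linarith : (0:ℝ) < 1 - t)]
  by_cases hSg0 : Sg = 0
  · have hzero : ∀ x, g x = 0 := fun x => le_antisymm ((le_iSup g x).trans hSg0.le) zero_le
    rw [show (fun x => g x) = fun _ => (0:ℝ≥0∞) from funext hzero]
    simp [ENNReal.zero_rpow_of_pos ht0]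
  set C := Sf ^ (1 - t) * Sg ^ t with hC
  have hC0 : C ≠ 0 :=
    mul_ne_zero (ENNReal.rpow_pos (pos_iff_ne_zero.mpr hSf0) hfb).ne'
      (ENNReal.rpow_pos (pos_iff_ne_zero.mpr hSg0) hgb).ne'
  have hCtop : C ≠ ⊤ :=
    ENNReal.mul_ne_top (ENNReal.rpow_ne_top_of_nonneg (by linarith) hfb)
      (ENNReal.rpow_ne_top_of_nonneg ht0.le hgb)
  -- normalized functions
  set F := fun x => f x / Sf with hF
  set G := fun x => g x / Sg with hG
  set H := fun x => h x / C with hH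
  have hFm : Measurable F := hf.div_const _
  have hGm : Measurable G := hg.div_const _
  have hHm : Measurable H := hh.div_const _
  have hFb : ∀ z, F z ≤ 1 := fun z => ENNReal.div_le_of_le_mul (by rw [one_mul]; exact le_iSup f z)
  have hGb : ∀ z, G z ≤ 1 := fun z => ENNReal.div_le_of_le_mul (by rw [one_mul]; exact le_iSup g z)
  -- level-set inequality
  have key : ∀ s ∈ Set.Ioo (0:ℝ) 1,
      ENNReal.ofReal (1 - t) * volume {x | ENNReal.ofReal s < F x}
        + ENNReal.ofReal t * volume {y | ENNReal.ofReal s < G y}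
      ≤ volume {z | ENNReal.ofReal s < H z} := by
    intro s hs
    have hs0 : ENNReal.ofReal s ≠ 0 := by simp [ENNReal.ofReal_eq_zero]; linarith [hs.1]
    have hAeq : {x | ENNReal.ofReal s < F x} = {x | ENNReal.ofReal s * Sf < f x} := by
      ext x
      simp only [mem_setOf_eq, hF]
      exact ENNReal.lt_div_iff_mul_lt (Or.inl hSf0) (Or.inl hfb)
    have hBeq : {y | ENNReal.ofReal s < G y} = {y | ENNReal.ofReal s * Sg < g y} := by
      ext y
      simp only [mem_setOf_eq, hG]
      exact ENNReal.lt_div_iff_mul_lt (Or.inl hSg0) (Or.inl hgb)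
    have hSeq : {z | ENNReal.ofReal s < H z} = {z | ENNReal.ofReal s * C < h z} := by
      ext z
      simp only [mem_setOf_eq, hH]
      exact ENNReal.lt_div_iff_mul_lt (Or.inl hC0) (Or.inl hCtop)
    rw [hAeq, hBeq, hSeq]
    have hs1 : ENNReal.ofReal s < 1 := by
      rw [← ENNReal.ofReal_one]
      exact (ENNReal.ofReal_lt_ofReal_iff_of_nonneg hs.1.le).mpr hs.2
    have hAn : {x | ENNReal.ofReal s * Sf < f x}.Nonempty := by
      have hlt : ENNReal.ofReal s * Sf < Sf := by
        conv_rhs => rw [← one_mul Sf]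
        exact ENNReal.mul_lt_mul_left hSf0 hfb hs1
      obtain ⟨x, hx⟩ := lt_iSup_iff.mp hlt
      exact ⟨x, hx⟩
    have hBn : {y | ENNReal.ofReal s * Sg < g y}.Nonempty := by
      have hlt : ENNReal.ofReal s * Sg < Sg := by
        conv_rhs => rw [← one_mul Sg]
        exact ENNReal.mul_lt_mul_left hSg0 hgb hs1
      obtain ⟨y, hy⟩ := lt_iSup_iff.mp hlt
      exact ⟨y, hy⟩
    refine bm_weighted t ⟨ht0, ht1⟩ _ _ _
      (hf measurableSet_Ioi) (hg measurableSet_Ioi) hAn hBn ?_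
    rintro z hz
    rw [Set.mem_add] at hz
    obtain ⟨x', hx', y', hy', rfl⟩ := hz
    obtain ⟨x, hx, rfl⟩ := hx'
    obtain ⟨y, hy, rfl⟩ := hy'
    have hfx : ENNReal.ofReal s * Sf < f x := hx
    have hgy : ENNReal.ofReal s * Sg < g y := hy
    have hfx0 : 0 < f x := lt_of_le_of_lt zero_le hfx
    have hgy0 : 0 < g y := lt_of_le_of_lt zero_le hgy
    have hmain := hc x y hfx0 hgy0
    have hlt : ENNReal.ofReal s * C < f x ^ (1 - t) * g y ^ t := by
      have h1 : (ENNReal.ofReal s * Sf) ^ (1 - t) < f x ^ (1 - t) :=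
        ENNReal.rpow_lt_rpow hfx (by linarith)
      have h2 : (ENNReal.ofReal s * Sg) ^ t < g y ^ t := ENNReal.rpow_lt_rpow hgy ht0
      calc ENNReal.ofReal s * C = (ENNReal.ofReal s * Sf) ^ (1 - t)
            * (ENNReal.ofReal s * Sg) ^ t := by
            rw [ENNReal.mul_rpow_of_nonneg _ _ (by linarith : (0:ℝ) ≤ 1 - t),
              ENNReal.mul_rpow_of_nonneg _ _ ht0.le, mul_mul_mul_comm,
              ← ENNReal.rpow_add _ _ hs0 ENNReal.ofReal_ne_top, sub_add_cancel,
              ENNReal.rpow_one, hC]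
        _ < f x ^ (1 - t) * g y ^ t := ENNReal.mul_lt_mul h1 h2
    show ENNReal.ofReal s * C < h ((1 - t) • x + t • y)
    simp only [smul_eq_mul]
    exact lt_of_lt_of_le hlt hmain
  -- integrate
  have hFA : ∀ s : ℝ, Antitone fun s : ℝ => volume {x | ENNReal.ofReal s < F x} := fun _ s₁ s₂ hs =>
    measure_mono fun x hx => lt_of_le_of_lt (ENNReal.ofReal_le_ofReal hs) hx
  have lhsF : ∫⁻ s in Set.Ioo (0:ℝ) 1, volume {x | ENNReal.ofReal s < F x}
      = lintegral volume F := layercake_eq_bdd volume F hFm hFb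
  have lhsG : ∫⁻ s in Set.Ioo (0:ℝ) 1, volume {y | ENNReal.ofReal s < G y}
      = lintegral volume G := layercake_eq_bdd volume G hGm hGb
  have step : ENNReal.ofReal (1 - t) * lintegral volume F + ENNReal.ofReal t * lintegral volume G
      ≤ lintegral volume H := by
    rw [← lhsF, ← lhsG,
      ← lintegral_const_mul' _ _ ENNReal.ofReal_ne_top,
      ← lintegral_const_mul' _ _ ENNReal.ofReal_ne_top,
      ← lintegral_add_left]
    · calc ∫⁻ s in Set.Ioo (0:ℝ) 1, (ENNReal.ofReal (1-t) * volume {x | ENNReal.ofReal s < F x}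
            + ENNReal.ofReal t * volume {y | ENNReal.ofReal s < G y})
          ≤ ∫⁻ s in Set.Ioo (0:ℝ) 1, volume {z | ENNReal.ofReal s < H z} := by
            apply setLIntegral_mono' measurableSet_Ioo
            exact fun s hs => key s hs
        _ ≤ ∫⁻ s in Set.Ioi (0:ℝ), volume {z | ENNReal.ofReal s < H z} :=
            lintegral_mono_set (fun s hs => hs.1)
        _ ≤ lintegral volume H := layercake_lower volume H hHm
    · exact measurable_const.mul ((hFA 0).measurable)
  -- un-normalize
  have hIF : lintegral volume F = (∫⁻ z, f z) / Sf := by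
    simp only [hF, div_eq_mul_inv]
    exact lintegral_mul_const' _ _ (by simp [hSf0])
  have hIG : lintegral volume G = (∫⁻ z, g z) / Sg := by
    simp only [hG, div_eq_mul_inv]
    exact lintegral_mul_const' _ _ (by simp [hSg0])
  have hIH : lintegral volume H = (∫⁻ z, h z) / C := by
    simp only [hH, div_eq_mul_inv]
    exact lintegral_mul_const' _ _ (by simp [hC0])
  rw [hIF, hIG, hIH] at step
  have hgm := ennreal_geom_mean_s5 t ⟨ht0, ht1⟩ ((∫⁻ z, f z) / Sf) ((∫⁻ z, g z) / Sg)
  have hdiv : ((∫⁻ z, f z) / Sf) ^ (1 - t) * ((∫⁻ z, g z) / Sg) ^ t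
      = (∫⁻ z, f z) ^ (1 - t) * (∫⁻ z, g z) ^ t / C := by
    rw [ENNReal.div_rpow_of_nonneg _ _ (by linarith : (0:ℝ) ≤ 1 - t),
      ENNReal.div_rpow_of_nonneg _ _ ht0.le, div_eq_mul_inv, div_eq_mul_inv, div_eq_mul_inv,
      mul_mul_mul_comm, ← ENNReal.mul_inv (Or.inl (ENNReal.rpow_pos (pos_iff_ne_zero.mpr hSf0) hfb).ne') (Or.inl (ENNReal.rpow_ne_top_of_nonneg (by linarith) hfb)), hC]
  have final : (∫⁻ z, f z) ^ (1 - t) * (∫⁻ z, g z) ^ t / C ≤ (∫⁻ z, h z) / C :=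
    le_trans (le_of_eq hdiv.symm) (le_trans hgm step)
  calc (∫⁻ x, f x) ^ (1 - t) * (∫⁻ x, g x) ^ t
      = (∫⁻ z, f z) ^ (1 - t) * (∫⁻ z, g z) ^ t / C * C := (ENNReal.div_mul_cancel hC0 hCtop).symm
    _ ≤ (∫⁻ z, h z) / C * C := by gcongr
    _ = ∫⁻ z, h z := ENNReal.div_mul_cancel hC0 hCtop

-- helpers for sup-passing
theorem iSup_mul_iSup_monotone (A B : ℕ → ℝ≥0∞) (hA : Monotone A) (hB : Monotone B) :
    (⨆ m, A m) * (⨆ m, B m) = ⨆ m, A m * B m := by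
  apply le_antisymm
  · rw [ENNReal.iSup_mul]
    refine iSup_le fun i => ?_
    rw [ENNReal.mul_iSup]
    refine iSup_le fun j => ?_
    calc A i * B j ≤ A (max i j) * B (max i j) :=
          mul_le_mul' (hA (le_max_left _ _)) (hB (le_max_right _ _))
      _ ≤ ⨆ m, A m * B m := le_iSup (fun m => A m * B m) (max i j)
  · exact iSup_le fun m => mul_le_mul' (le_iSup A m) (le_iSup B m)

theorem iSup_rpow_nat (A : ℕ → ℝ≥0∞) (c : ℝ) (hc : 0 < c) :
    (⨆ m, A m) ^ c = ⨆ m, A m ^ c := by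
  have h := map_iSup (ENNReal.orderIsoRpow c hc) A
  simp only [ENNReal.orderIsoRpow_apply] at h
  exact h

theorem iSup_min_nat (a : ℝ≥0∞) : ⨆ m : ℕ, min a m = a := by
  apply le_antisymm (iSup_le fun m => min_le_left _ _)
  rcases eq_or_ne a ⊤ with rfl | ha
  · calc ⊤ = ⨆ m : ℕ, (m : ℝ≥0∞) := ENNReal.iSup_natCast.symm
      _ ≤ ⨆ m : ℕ, min ⊤ (m:ℝ≥0∞) := by simp
  · obtain ⟨m, hm⟩ := ENNReal.exists_nat_gt ha
    calc a = min a m := (min_eq_left hm.le).symm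
      _ ≤ ⨆ m : ℕ, min a m := le_iSup (fun m : ℕ => min a (m:ℝ≥0∞)) m

theorem pl_dim_one (t : ℝ) (ht : t ∈ Set.Ioo (0:ℝ) 1) (f g h : ℝ → ℝ≥0∞)
    (hf : Measurable f) (hg : Measurable g) (hh : Measurable h)
    (hc : ∀ x y, 0 < f x → 0 < g y → f x ^ (1 - t) * g y ^ t ≤ h ((1 - t) * x + t * y)) :
    (∫⁻ x, f x) ^ (1 - t) * (∫⁻ x, g x) ^ t ≤ ∫⁻ x, h x := by
  have hbd : ∀ m : ℕ, (∫⁻ x, min (f x) m) ^ (1 - t) * (∫⁻ x, min (g x) m) ^ t ≤ ∫⁻ x, h x := by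
    intro m
    refine pl_dim_one_bdd t ht _ _ h (hf.min measurable_const) (hg.min measurable_const) hh
      ?_ ?_ ?_
    · exact ne_top_of_le_ne_top (by simp : (m:ℝ≥0∞) ≠ ⊤) (iSup_le fun x => min_le_right _ _)
    · exact ne_top_of_le_ne_top (by simp : (m:ℝ≥0∞) ≠ ⊤) (iSup_le fun x => min_le_right _ _)
    · intro x y hfx hgy
      have hfx' : 0 < f x := lt_of_lt_of_le hfx (min_le_left _ _)
      have hgy' : 0 < g y := lt_of_lt_of_le hgy (min_le_left _ _)
      calc min (f x) m ^ (1 - t) * min (g y) m ^ t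
          ≤ f x ^ (1 - t) * g y ^ t :=
            mul_le_mul' (ENNReal.rpow_le_rpow (min_le_left _ _) (by linarith [ht.2]))
              (ENNReal.rpow_le_rpow (min_le_left _ _) ht.1.le)
        _ ≤ h ((1 - t) * x + t * y) := hc x y hfx' hgy'
  have hFm : Monotone fun m : ℕ => ∫⁻ x, min (f x) m := fun i j hij =>
    lintegral_mono fun x => min_le_min le_rfl (by exact_mod_cast hij)
  have hGm : Monotone fun m : ℕ => ∫⁻ x, min (g x) m := fun i j hij =>
    lintegral_mono fun x => min_le_min le_rfl (by exact_mod_cast hij)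
  have hFs : (⨆ m : ℕ, ∫⁻ x, min (f x) m) = ∫⁻ x, f x := by
    rw [← lintegral_iSup (fun m => hf.min measurable_const)
      (fun i j hij x => min_le_min le_rfl (by exact_mod_cast hij))]
    simp_rw [iSup_min_nat]
  have hGs : (⨆ m : ℕ, ∫⁻ x, min (g x) m) = ∫⁻ x, g x := by
    rw [← lintegral_iSup (fun m => hg.min measurable_const)
      (fun i j hij x => min_le_min le_rfl (by exact_mod_cast hij))]
    simp_rw [iSup_min_nat]
  calc (∫⁻ x, f x) ^ (1 - t) * (∫⁻ x, g x) ^ t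
      = (⨆ m : ℕ, ∫⁻ x, min (f x) m) ^ (1 - t) * (⨆ m : ℕ, ∫⁻ x, min (g x) m) ^ t := by
        rw [hFs, hGs]
    _ = (⨆ m : ℕ, (∫⁻ x, min (f x) m) ^ (1-t)) * (⨆ m : ℕ, (∫⁻ x, min (g x) m) ^ t) := by
        rw [iSup_rpow_nat _ _ (by linarith [ht.2] : (0:ℝ) < 1 - t),
          iSup_rpow_nat _ _ ht.1]
    _ = ⨆ m : ℕ, (∫⁻ x, min (f x) m) ^ (1-t) * (∫⁻ x, min (g x) m) ^ t := by
        refine iSup_mul_iSup_monotone _ _ (fun i j hij => ?_) (fun i j hij => ?_)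
        · exact ENNReal.rpow_le_rpow (hFm hij) (by linarith [ht.2])
        · exact ENNReal.rpow_le_rpow (hGm hij) ht.1.le
    _ ≤ ∫⁻ x, h x := iSup_le hbd

theorem pl_dim (n : ℕ) (t : ℝ) (ht : t ∈ Set.Ioo (0:ℝ) 1) (f g h : (Fin n → ℝ) → ℝ≥0∞)
    (hf : Measurable f) (hg : Measurable g) (hh : Measurable h)
    (hc : ∀ x y, 0 < f x → 0 < g y → f x ^ (1 - t) * g y ^ t ≤ h ((1 - t) • x + t • y)) :
    (∫⁻ x, f x) ^ (1 - t) * (∫⁻ x, g x) ^ t ≤ ∫⁻ x, h x := by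
  induction n with
  | zero =>
    have huniv : (volume : Measure (Fin 0 → ℝ)) Set.univ = 1 := by
      simp [volume_pi, Measure.pi_univ]
    rw [lintegral_unique f, lintegral_unique g, lintegral_unique h, huniv, mul_one, mul_one,
      mul_one]
    have hgen : ∀ d : Fin 0 → ℝ, f d ^ (1 - t) * g d ^ t ≤ h d := by
      intro d
      by_cases hf0 : f d = 0
      · rw [hf0, ENNReal.zero_rpow_of_pos (by linarith [ht.2] : (0:ℝ) < 1 - t), zero_mul]
        exact zero_le
      by_cases hg0 : g d = 0
      · rw [hg0, ENNReal.zero_rpow_of_pos ht.1, mul_zero]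
        exact zero_le
      have hthis := hc d d (pos_iff_ne_zero.mpr hf0) (pos_iff_ne_zero.mpr hg0)
      have heq : h ((1-t) • d + t • d) = h d := congrArg h (Subsingleton.elim _ _)
      rw [heq] at hthis
      exact hthis
    exact hgen _
  | succ n ih =>
    set e := MeasurableEquiv.piFinSuccAbove (fun _ : Fin (n+1) => ℝ) 0 with he
    have hvp : MeasurePreserving e volume volume :=
      volume_preserving_piFinSuccAbove (fun _ : Fin (n + 1) => ℝ) 0
    have hvps : MeasurePreserving e.symm volume volume := hvp.symm e
    -- linearity of e.symm
    have helin : ∀ (a b : ℝ) (x y : Fin (n+1) → ℝ), e (a • x + b • y) = a • e x + b • e y := by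
      intro a b x y
      ext
      · rfl
      · rfl
    have hlin : ∀ (a b : ℝ) (p q : ℝ × (Fin n → ℝ)),
        e.symm (a • p + b • q) = a • e.symm p + b • e.symm q := by
      intro a b p q
      apply e.injective
      rw [helin, e.apply_symm_apply, e.apply_symm_apply, e.apply_symm_apply]
    set f' : ℝ × (Fin n → ℝ) → ℝ≥0∞ := fun p => f (e.symm p) with hf'
    set g' : ℝ × (Fin n → ℝ) → ℝ≥0∞ := fun p => g (e.symm p) with hg'
    set h' : ℝ × (Fin n → ℝ) → ℝ≥0∞ := fun p => h (e.symm p) with hh'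
    have hf'm : Measurable f' := hf.comp e.symm.measurable
    have hg'm : Measurable g' := hg.comp e.symm.measurable
    have hh'm : Measurable h' := hh.comp e.symm.measurable
    set φ : ℝ → ℝ≥0∞ := fun x₁ => ∫⁻ x₂, f' (x₁, x₂) with hφ
    set ψ : ℝ → ℝ≥0∞ := fun y₁ => ∫⁻ y₂, g' (y₁, y₂) with hψ
    set χ : ℝ → ℝ≥0∞ := fun z₁ => ∫⁻ z₂, h' (z₁, z₂) with hχ
    have hφm : Measurable φ := hf'm.lintegral_prod_right'
    have hψm : Measurable ψ := hg'm.lintegral_prod_right'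
    have hχm : Measurable χ := hh'm.lintegral_prod_right'
    have hslice : ∀ x₁ y₁ : ℝ, 0 < φ x₁ → 0 < ψ y₁ →
        φ x₁ ^ (1 - t) * ψ y₁ ^ t ≤ χ ((1 - t) * x₁ + t * y₁) := by
      intro x₁ y₁ _ _
      refine ih (fun x₂ => f' (x₁, x₂)) (fun y₂ => g' (y₁, y₂))
        (fun z₂ => h' ((1 - t) * x₁ + t * y₁, z₂))
        (hf'm.comp (measurable_prodMk_left)) (hg'm.comp (measurable_prodMk_left))
        (hh'm.comp (measurable_prodMk_left)) ?_
      intro x₂ y₂ hx hy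
      have := hc (e.symm (x₁, x₂)) (e.symm (y₁, y₂)) hx hy
      rw [← hlin] at this
      have hcomb : ((1 - t) • ((x₁, x₂) : ℝ × (Fin n → ℝ)) + t • (y₁, y₂))
          = ((1 - t) * x₁ + t * y₁, (1 - t) • x₂ + t • y₂) := by
        simp [Prod.ext_iff, smul_eq_mul]
      rw [hcomb] at this
      exact this
    have hmain := pl_dim_one t ht φ ψ χ hφm hψm hχm hslice
    have hIf : ∫⁻ x, f x = ∫⁻ x₁, φ x₁ := by
      rw [hφ, ← hvps.lintegral_comp hf]
      rw [Measure.volume_eq_prod, lintegral_prod _ hf'm.aemeasurable]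
    have hIg : ∫⁻ x, g x = ∫⁻ y₁, ψ y₁ := by
      rw [hψ, ← hvps.lintegral_comp hg]
      rw [Measure.volume_eq_prod, lintegral_prod _ hg'm.aemeasurable]
    have hIh : ∫⁻ x, h x = ∫⁻ z₁, χ z₁ := by
      rw [hχ, ← hvps.lintegral_comp hh]
      rw [Measure.volume_eq_prod, lintegral_prod _ hh'm.aemeasurable]
    rw [hIf, hIg, hIh]
    exact hmain

theorem lintegral_comp_smul_inv (n : ℕ) (φ : (Fin n → ℝ) → ℝ≥0∞) (hφ : Measurable φ)
    (c : ℝ) (hc : 0 < c) :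
    ∫⁻ u, φ (c⁻¹ • u) = ENNReal.ofReal (c ^ n) * ∫⁻ x, φ x := by
  have hT : Measurable fun x : Fin n → ℝ => c • x := measurable_id.const_smul c
  have hφ' : Measurable fun u : Fin n → ℝ => φ (c⁻¹ • u) :=
    hφ.comp (measurable_id.const_smul c⁻¹)
  have hmap : Measure.map (fun x : Fin n → ℝ => c • x) volume
      = ENNReal.ofReal ((c ^ n)⁻¹) • volume := by
    have hh := Measure.map_addHaar_smul (μ := (volume : Measure (Fin n → ℝ))) hc.ne'
    rw [Module.finrank_fin_fun, abs_of_pos (by positivity)] at hh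
    exact hh
  have h1 : ∫⁻ u, φ (c⁻¹ • u) ∂(Measure.map (fun x : Fin n → ℝ => c • x) volume)
      = ∫⁻ x, φ x := by
    rw [lintegral_map hφ' hT]
    congr 1
    funext x
    rw [smul_smul, inv_mul_cancel₀ hc.ne', one_smul]
  have h2 : ∫⁻ u, φ (c⁻¹ • u) ∂(Measure.map (fun x : Fin n → ℝ => c • x) volume)
      = ENNReal.ofReal ((c ^ n)⁻¹) * ∫⁻ u, φ (c⁻¹ • u) := by
    rw [hmap, lintegral_smul_measure, smul_eq_mul]
  have h3 : ENNReal.ofReal ((c ^ n)⁻¹) * ∫⁻ u, φ (c⁻¹ • u) = ∫⁻ x, φ x := by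
    rw [← h2, h1]
  calc ∫⁻ u, φ (c⁻¹ • u)
      = (ENNReal.ofReal (c ^ n) * ENNReal.ofReal ((c ^ n)⁻¹)) * ∫⁻ u, φ (c⁻¹ • u) := by
        rw [← ENNReal.ofReal_mul (by positivity), mul_inv_cancel₀ (by positivity), ENNReal.ofReal_one, one_mul]
    _ = ENNReal.ofReal (c ^ n) * (ENNReal.ofReal ((c ^ n)⁻¹) * ∫⁻ u, φ (c⁻¹ • u)) := by ring
    _ = ENNReal.ofReal (c ^ n) * ∫⁻ x, φ x := by rw [h3]

/-- **L_p-Prékopa–Leindler type inequality for the Lebesgue measure.** -/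
theorem lp_prekopa_leindler_lebesgue
    (n : ℕ) (p t : ℝ) (hp : 1 < p) (ht : t ∈ Set.Ioo (0:ℝ) 1)
    (f g h : (Fin n → ℝ) → ℝ)
    (hfm : Measurable f) (hgm : Measurable g) (hhm : Measurable h)
    (hf0 : ∀ x, 0 ≤ f x) (hg0 : ∀ x, 0 ≤ g x) (hh0 : ∀ x, 0 ≤ h x)
    (hfb : ∃ M : ℝ, ∀ x, f x ≤ M) (hgb : ∃ M : ℝ, ∀ x, g x ≤ M)
    (hcond : ∀ x, 0 < f x → ∀ y, 0 < g y → ∀ l ∈ Set.Ioo (0:ℝ) 1,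
      f x ^ ((1 - t) ^ (1/p) * (1 - l) ^ ((p-1)/p)) * g y ^ (t ^ (1/p) * l ^ ((p-1)/p))
        ≤ h (((1 - t) ^ (1/p) * (1 - l) ^ ((p-1)/p)) • x + (t ^ (1/p) * l ^ ((p-1)/p)) • y))
    (l : ℝ) (hl : l ∈ Set.Ioo (0:ℝ) 1) :
    ENNReal.ofReal (((((1 - t)/(1 - l)) ^ (1 - l)) * ((t/l) ^ l)) ^ ((n : ℝ)/p))
        * (∫⁻ x, ENNReal.ofReal (f x ^ (((1 - t)/(1 - l)) ^ (1/p)))) ^ (1 - l)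
        * (∫⁻ x, ENNReal.ofReal (g x ^ ((t/l) ^ (1/p)))) ^ l
      ≤ ∫⁻ x, ENNReal.ofReal (h x) := by
  obtain ⟨ht0, ht1⟩ := ht
  obtain ⟨hl0, hl1⟩ := hl
  have hp0 : (0:ℝ) < p := by linarith
  have h1t : (0:ℝ) < 1 - t := by linarith
  have h1l : (0:ℝ) < 1 - l := by linarith
  set c₁ : ℝ := ((1 - t)/(1 - l)) ^ (1/p) with hc₁
  set c₂ : ℝ := (t/l) ^ (1/p) with hc₂
  have hc₁0 : 0 < c₁ := Real.rpow_pos_of_pos (by positivity) _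
  have hc₂0 : 0 < c₂ := Real.rpow_pos_of_pos (by positivity) _
  -- exponent identities
  have hexp : (p - 1)/p = 1 - 1/p := by field_simp
  have ha : c₁ * (1 - l) = (1 - t) ^ (1/p) * (1 - l) ^ ((p-1)/p) := by
    rw [hc₁, Real.div_rpow h1t.le h1l.le, hexp, Real.rpow_sub h1l, Real.rpow_one,
      div_mul_eq_mul_div]
    ring
  have hb : c₂ * l = t ^ (1/p) * l ^ ((p-1)/p) := by
    rw [hc₂, Real.div_rpow ht0.le hl0.le, hexp, Real.rpow_sub hl0, Real.rpow_one,
      div_mul_eq_mul_div]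
    ring
  -- functions for pl_dim
  set F : (Fin n → ℝ) → ℝ≥0∞ := fun u => ENNReal.ofReal (f (c₁⁻¹ • u) ^ c₁) with hF
  set G : (Fin n → ℝ) → ℝ≥0∞ := fun v => ENNReal.ofReal (g (c₂⁻¹ • v) ^ c₂) with hG
  set H : (Fin n → ℝ) → ℝ≥0∞ := fun z => ENNReal.ofReal (h z) with hH
  have hFm : Measurable F :=
    (ENNReal.measurable_ofReal.comp ((hfm.comp (measurable_id.const_smul c₁⁻¹)).pow_const c₁))
  have hGm : Measurable G :=
    (ENNReal.measurable_ofReal.comp ((hgm.comp (measurable_id.const_smul c₂⁻¹)).pow_const c₂))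
  have hHm : Measurable H := ENNReal.measurable_ofReal.comp hhm
  have hcnd : ∀ u v, 0 < F u → 0 < G v →
      F u ^ (1 - l) * G v ^ l ≤ H ((1 - l) • u + l • v) := by
    intro u v hFu hGv
    set x := c₁⁻¹ • u with hx
    set y := c₂⁻¹ • v with hy
    have hfx : 0 < f x := by
      rcases lt_or_eq_of_le (hf0 x) with hpos | hzero
      · exact hpos
      · exfalso
        rw [hF] at hFu
        simp only [← hzero, Real.zero_rpow hc₁0.ne'] at hFu
        simp [← hx, ← hzero, Real.zero_rpow hc₁0.ne'] at hFu
    have hgy : 0 < g y := by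
      rcases lt_or_eq_of_le (hg0 y) with hpos | hzero
      · exact hpos
      · exfalso
        rw [hG] at hGv
        simp only [← hzero, Real.zero_rpow hc₂0.ne'] at hGv
        simp [← hy, ← hzero, Real.zero_rpow hc₂0.ne'] at hGv
    have hmain := hcond x hfx y hgy l ⟨hl0, hl1⟩
    rw [← ha, ← hb] at hmain
    have harg : (c₁ * (1 - l)) • x + (c₂ * l) • y = (1 - l) • u + l • v := by
      rw [hx, hy, smul_smul, smul_smul, mul_assoc, mul_comm (1 - l) c₁⁻¹, ← mul_assoc,
        mul_inv_cancel₀ hc₁0.ne', one_mul, mul_assoc, mul_comm l c₂⁻¹, ← mul_assoc,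
        mul_inv_cancel₀ hc₂0.ne', one_mul]
    rw [harg] at hmain
    calc F u ^ (1 - l) * G v ^ l
        = ENNReal.ofReal ((f x ^ c₁) ^ (1-l)) * ENNReal.ofReal ((g y ^ c₂) ^ l) := by
          rw [hF, hG, ENNReal.ofReal_rpow_of_nonneg (by positivity) h1l.le,
            ENNReal.ofReal_rpow_of_nonneg (by positivity) hl0.le]
      _ = ENNReal.ofReal (f x ^ (c₁ * (1-l)) * g y ^ (c₂ * l)) := by
          rw [← Real.rpow_mul (hf0 x), ← Real.rpow_mul (hg0 y),
            ENNReal.ofReal_mul (by positivity)]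
      _ ≤ H ((1 - l) • u + l • v) := ENNReal.ofReal_le_ofReal hmain
  have hpl := pl_dim n l ⟨hl0, hl1⟩ F G H hFm hGm hHm hcnd
  -- change of variables
  have hIF : ∫⁻ u, F u = ENNReal.ofReal (c₁ ^ n) * ∫⁻ x, ENNReal.ofReal (f x ^ c₁) :=
    lintegral_comp_smul_inv n (fun x => ENNReal.ofReal (f x ^ c₁))
      (ENNReal.measurable_ofReal.comp (hfm.pow_const c₁)) c₁ hc₁0
  have hIG : ∫⁻ v, G v = ENNReal.ofReal (c₂ ^ n) * ∫⁻ y, ENNReal.ofReal (g y ^ c₂) :=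
    lintegral_comp_smul_inv n (fun y => ENNReal.ofReal (g y ^ c₂))
      (ENNReal.measurable_ofReal.comp (hgm.pow_const c₂)) c₂ hc₂0
  rw [hIF, hIG] at hpl
  -- constant identity
  have hK : ENNReal.ofReal (((((1 - t)/(1 - l)) ^ (1 - l)) * ((t/l) ^ l)) ^ ((n : ℝ)/p))
      = ENNReal.ofReal ((c₁ ^ n) ^ (1 - l)) * ENNReal.ofReal ((c₂ ^ n) ^ l) := by
    rw [← ENNReal.ofReal_mul (by positivity)]
    congr 1
    have e1 : (c₁ ^ n : ℝ) = ((1 - t)/(1 - l)) ^ ((1/p) * n) := by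
      rw [hc₁, ← Real.rpow_natCast (((1 - t)/(1 - l)) ^ (1/p)) n, ← Real.rpow_mul (by positivity)]
    have e2 : (c₂ ^ n : ℝ) = (t/l) ^ ((1/p) * n) := by
      rw [hc₂, ← Real.rpow_natCast ((t/l) ^ (1/p)) n, ← Real.rpow_mul (by positivity)]
    rw [e1, e2, ← Real.rpow_mul (by positivity), ← Real.rpow_mul (by positivity),
      Real.mul_rpow (by positivity) (by positivity),
      ← Real.rpow_mul (by positivity), ← Real.rpow_mul (by positivity)]
    ring_nf
  rw [hK]
  calc ENNReal.ofReal ((c₁ ^ n) ^ (1 - l)) * ENNReal.ofReal ((c₂ ^ n) ^ l)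
        * (∫⁻ x, ENNReal.ofReal (f x ^ c₁)) ^ (1 - l)
        * (∫⁻ x, ENNReal.ofReal (g x ^ c₂)) ^ l
      = (ENNReal.ofReal (c₁ ^ n) * ∫⁻ x, ENNReal.ofReal (f x ^ c₁)) ^ (1 - l)
        * (ENNReal.ofReal (c₂ ^ n) * ∫⁻ y, ENNReal.ofReal (g y ^ c₂)) ^ l := by
        rw [ENNReal.mul_rpow_of_nonneg _ _ h1l.le, ENNReal.mul_rpow_of_nonneg _ _ hl0.le,
          ENNReal.ofReal_rpow_of_nonneg (by positivity) h1l.le,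
          ENNReal.ofReal_rpow_of_nonneg (by positivity) hl0.le]
        ring
    _ ≤ ∫⁻ x, ENNReal.ofReal (h x) := hpl
end

section
/- There exists a universal constant C > 1 such that for every dimension n ≥ 1, every p ≥ 1, every t ∈ [0,1], and every Borel measure μ on ℝ^n with a log-concave density φ satisfying φ(0) = sup φ, and for all convex bodies K, L ⊆ ℝ^n containing the origin in their interiors, one has μ((1−t) ·_p K +_p t ·_p L)^{p/n} ≥ (1/C^p) · [(1−t) μ(K)^{p/n} + t μ(L)^{p/n}]. -/
open MeasureTheory Set Pointwise

/-- Scaling bound for integrals of functions that increase under contraction. -/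
lemma scale_lintegral_bound {n : ℕ} (f : (Fin n → ℝ) → ENNReal) (hf : Measurable f)
    {s : ℝ} (hs : 0 < s) (hmono : ∀ x, f x ≤ f (s • x))
    {K : Set (Fin n → ℝ)} (hK : MeasurableSet K) (hK' : MeasurableSet (s • K)) :
    ENNReal.ofReal (s ^ n) * ∫⁻ x in K, f x ≤ ∫⁻ x in s • K, f x := by
  have hsn : (0:ℝ) < s ^ n := pow_pos hs n
  set F : (Fin n → ℝ) → ENNReal := (s • K).indicator f with hF
  have hFmeas : Measurable F := hf.indicator hK'
  have hmap : ∫⁻ y, F (s • y) = ENNReal.ofReal (|(s ^ n)⁻¹|) * ∫⁻ y, F y := by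
    have h1 : ∫⁻ y, F (s • y) = ∫⁻ y, F y ∂(Measure.map (s • ·) volume) :=
      (lintegral_map hFmeas (measurable_const_smul s)).symm
    rw [h1, Measure.map_addHaar_smul volume hs.ne', Module.finrank_fin_fun,
      MeasureTheory.lintegral_smul_measure, smul_eq_mul]
  have hpt : ∀ y, K.indicator f y ≤ F (s • y) := by
    intro y
    by_cases hy : y ∈ K
    · have hy' : s • y ∈ s • K := smul_mem_smul_set hy
      rw [indicator_of_mem hy, hF, indicator_of_mem hy']
      exact hmono y
    · rw [indicator_of_notMem hy]; exact zero_le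
  have h2 : ∫⁻ x in K, f x ≤ ENNReal.ofReal (|(s ^ n)⁻¹|) * ∫⁻ y, F y := by
    rw [← hmap, ← lintegral_indicator hK]
    exact lintegral_mono hpt
  have h3 : ∫⁻ y, F y = ∫⁻ x in s • K, f x := lintegral_indicator hK' f
  rw [h3] at h2
  calc ENNReal.ofReal (s ^ n) * ∫⁻ x in K, f x
      ≤ ENNReal.ofReal (s ^ n) * (ENNReal.ofReal (|(s ^ n)⁻¹|) * ∫⁻ x in s • K, f x) :=
        mul_le_mul_right h2 _
    _ = ∫⁻ x in s • K, f x := by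
        rw [← mul_assoc, abs_of_pos (inv_pos.2 hsn), ← ENNReal.ofReal_mul hsn.le,
          mul_inv_cancel₀ hsn.ne', ENNReal.ofReal_one, one_mul]

/-- **L_p-Brunn–Minkowski inequality, up to a universal constant, for log-concave measures
and convex bodies containing the origin in their interiors (Gardner–Zvavitch type).** -/
theorem lp_gardner_zvavitch_logconcave :
    ∃ C : ℝ, 1 < C ∧
      ∀ (n : ℕ), 1 ≤ n → ∀ p : ℝ, 1 ≤ p → ∀ t ∈ Set.Icc (0:ℝ) 1,
        ∀ (φ : (Fin n → ℝ) → ℝ), (∀ x, 0 ≤ φ x) → Measurable φ →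
          (∀ x y : Fin n → ℝ, ∀ τ ∈ Set.Icc (0:ℝ) 1,
            φ x ^ (1 - τ) * φ y ^ τ ≤ φ ((1 - τ) • x + τ • y)) →
          (∀ x, φ x ≤ φ 0) →
          ∀ (μ : Measure (Fin n → ℝ)),
            μ = volume.withDensity (fun x => ENNReal.ofReal (φ x)) →
            ∀ K L : Set (Fin n → ℝ),
              IsCompact K → Convex ℝ K → (0 : Fin n → ℝ) ∈ interior K →
              IsCompact L → Convex ℝ L → (0 : Fin n → ℝ) ∈ interior L →
              ENNReal.ofReal (1 / C ^ p)
                  * (ENNReal.ofReal (1 - t) * μ K ^ (p/n)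
                      + ENNReal.ofReal t * μ L ^ (p/n))
                ≤ μ (lpComb p (1 - t) t K L) ^ (p/n) := by
  refine ⟨2, one_lt_two, ?_⟩
  intro n hn p hp t ht φ hφ0 hφm hlog hφmax μ hμ K L hKc hKconv h0K hLc hLconv h0L
  have hp0 : (0:ℝ) < p := lt_of_lt_of_le one_pos hp
  have hn0 : (0:ℝ) < (n:ℝ) := by exact_mod_cast hn
  have hpn : (0:ℝ) ≤ p / n := by positivity
  set f : (Fin n → ℝ) → ENNReal := fun x => ENNReal.ofReal (φ x) with hfdef
  have hfm : Measurable f := hφm.ennreal_ofReal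
  -- φ increases under contraction by s ∈ (0,1]
  have hcontr : ∀ s : ℝ, 0 < s → s ≤ 1 → ∀ x, φ x ≤ φ (s • x) := by
    intro s hs0 hs1 x
    have hτ : s ∈ Set.Icc (0:ℝ) 1 := ⟨hs0.le, hs1⟩
    have h := hlog 0 x s hτ
    rw [smul_zero, zero_add] at h
    rcases eq_or_lt_of_le (hφ0 x) with hzero | hpos
    · rw [← hzero]; exact hφ0 _
    · have h1 : φ x ^ (1 - s) ≤ φ 0 ^ (1 - s) :=
        Real.rpow_le_rpow (hφ0 x) (hφmax x) (by linarith)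
      calc φ x = φ x ^ (1 - s) * φ x ^ s := by
            rw [← Real.rpow_add hpos, sub_add_cancel, Real.rpow_one]
        _ ≤ φ 0 ^ (1 - s) * φ x ^ s :=
            mul_le_mul_of_nonneg_right h1 (Real.rpow_nonneg (hφ0 x) s)
        _ ≤ φ (s • x) := h
  -- key claim
  have key : ∀ (r : ℝ), r ∈ Set.Icc (0:ℝ) 1 →
      ∀ M : Set (Fin n → ℝ), IsCompact M →
      (r ^ (1/p)) • M ⊆ lpComb p (1 - t) t K L →
      ENNReal.ofReal r * μ M ^ (p/(n:ℝ)) ≤ μ (lpComb p (1 - t) t K L) ^ (p/(n:ℝ)) := by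
    intro r hr M hMc hsub
    rcases eq_or_lt_of_le hr.1 with hr0 | hr0
    · simp [← hr0]
    set s : ℝ := r ^ (1/p) with hsdef
    have hs0 : 0 < s := Real.rpow_pos_of_pos hr0 _
    have hs1 : s ≤ 1 := Real.rpow_le_one hr.1 hr.2 (by positivity)
    have hM : MeasurableSet M := hMc.measurableSet
    have hM' : MeasurableSet (s • M) := (hMc.smul s).measurableSet
    have hb : ENNReal.ofReal (s ^ n) * μ M ≤ μ (s • M) := by
      rw [hμ, withDensity_apply _ hM, withDensity_apply _ hM']
      exact scale_lintegral_bound f hfm hs0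
        (fun x => ENNReal.ofReal_le_ofReal (hcontr s hs0 hs1 x)) hM hM'
    have h4 : ENNReal.ofReal (s ^ n) * μ M ≤ μ (lpComb p (1 - t) t K L) :=
      le_trans hb (measure_mono hsub)
    have h5 := ENNReal.rpow_le_rpow h4 hpn
    rw [ENNReal.mul_rpow_of_nonneg _ _ hpn,
        ENNReal.ofReal_rpow_of_nonneg (by positivity) hpn] at h5
    have hexp : ((s ^ n : ℝ)) ^ (p / (n:ℝ)) = r := by
      rw [← Real.rpow_natCast s n, hsdef, ← Real.rpow_mul hr.1,
        ← Real.rpow_mul hr.1,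
        show 1/p * (n:ℝ) * (p/(n:ℝ)) = 1 by field_simp, Real.rpow_one]
    rwa [hexp] at h5
  -- subsets
  have h0K' : (0 : Fin n → ℝ) ∈ K := interior_subset h0K
  have h0L' : (0 : Fin n → ℝ) ∈ L := interior_subset h0L
  have sub1 : ((1 - t) ^ (1/p)) • K ⊆ lpComb p (1 - t) t K L := by
    rintro z ⟨x, hx, rfl⟩
    exact ⟨x, hx, 0, h0L', 0, ⟨le_refl _, zero_le_one⟩, by
      simp [Real.one_rpow]⟩
  have sub2 : (t ^ (1/p)) • L ⊆ lpComb p (1 - t) t K L := by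
    rintro z ⟨y, hy, rfl⟩
    exact ⟨0, h0K', y, hy, 1, ⟨zero_le_one, le_refl _⟩, by
      simp [Real.one_rpow]⟩
  have A := key (1 - t) ⟨by linarith [ht.2], by linarith [ht.1]⟩ K hKc sub1
  have B := key t ht L hLc sub2
  have hsum : ENNReal.ofReal (1 - t) * μ K ^ (p/(n:ℝ))
      + ENNReal.ofReal t * μ L ^ (p/(n:ℝ))
      ≤ 2 * μ (lpComb p (1 - t) t K L) ^ (p/(n:ℝ)) := by
    rw [two_mul]; exact add_le_add A B
  have hC : ENNReal.ofReal (1 / (2:ℝ) ^ p) ≤ 2⁻¹ := by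
    have h2p : (2:ℝ) ≤ (2:ℝ) ^ p := by
      calc (2:ℝ) = (2:ℝ) ^ (1:ℝ) := (Real.rpow_one 2).symm
        _ ≤ (2:ℝ) ^ p := Real.rpow_le_rpow_of_exponent_le one_le_two hp
    have : (1:ℝ) / (2:ℝ) ^ p ≤ 1 / 2 := by
      apply one_div_le_one_div_of_le two_pos h2p
    calc ENNReal.ofReal (1 / (2:ℝ) ^ p) ≤ ENNReal.ofReal (1/2) :=
          ENNReal.ofReal_le_ofReal this
      _ = 2⁻¹ := by
          rw [one_div, ENNReal.ofReal_inv_of_pos two_pos]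
          norm_num
  calc ENNReal.ofReal (1 / (2:ℝ) ^ p)
        * (ENNReal.ofReal (1 - t) * μ K ^ (p/(n:ℝ))
            + ENNReal.ofReal t * μ L ^ (p/(n:ℝ)))
      ≤ 2⁻¹ * (2 * μ (lpComb p (1 - t) t K L) ^ (p/(n:ℝ))) := mul_le_mul' hC hsum
    _ = μ (lpComb p (1 - t) t K L) ^ (p/(n:ℝ)) := by
        rw [← mul_assoc, ENNReal.inv_mul_cancel two_ne_zero ENNReal.ofNat_ne_top, one_mul]
end

section
/- Let p ≥ 1, t ∈ [0,1], and let μ be a Borel measure on ℝ^n satisfying the radial decay property μ(τK) ≥ τ^n μ(K) for every convex set K containing the origin and every τ ∈ [0,1]. Then for any convex bodies K, L ⊆ ℝ^n containing the origin, with μ(K), μ(L) and μ((1−t) ·_p K +_p t ·_p L) finite, one has μ((1−t) ·_p K +_p t ·_p L)^{p/n} ≥ (1/2) · [(1−t) μ(K)^{p/n} + t μ(L)^{p/n}]. -/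
open MeasureTheory Set Pointwise

/-- **L_p-Brunn–Minkowski inequality with constant 1/2 for measures with radial decay.** -/
theorem lp_brunn_minkowski_radial_decay
    (n : ℕ) (p t : ℝ) (hp : 1 ≤ p) (ht : t ∈ Set.Icc (0:ℝ) 1)
    (μ : Measure (Fin n → ℝ))
    (hdecay : ∀ K : Set (Fin n → ℝ), Convex ℝ K → (0 : Fin n → ℝ) ∈ K →
      ∀ τ ∈ Set.Icc (0:ℝ) 1, ENNReal.ofReal (τ ^ (n:ℕ)) * μ K ≤ μ (τ • K))
    (K L : Set (Fin n → ℝ))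
    (hKc : IsCompact K) (hKconv : Convex ℝ K) (hKint : (interior K).Nonempty) (hK0 : (0 : Fin n → ℝ) ∈ K)
    (hLc : IsCompact L) (hLconv : Convex ℝ L) (hLint : (interior L).Nonempty) (hL0 : (0 : Fin n → ℝ) ∈ L)
    (hKfin : μ K ≠ ⊤) (hLfin : μ L ≠ ⊤)
    (hcombfin : μ (lpComb p (1 - t) t K L) ≠ ⊤) :
    (1/2) * ((1 - t) * (μ K).toReal ^ (p/n) + t * (μ L).toReal ^ (p/n))
      ≤ (μ (lpComb p (1 - t) t K L)).toReal ^ (p/n) := by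
  obtain ⟨ht0, ht1⟩ := ht
  have hp0 : (0:ℝ) < p := lt_of_lt_of_le one_pos hp
  set C : Set (Fin n → ℝ) := lpComb p (1 - t) t K L with hC
  set M : ℝ := (μ C).toReal with hM
  have hMnn : 0 ≤ M := ENNReal.toReal_nonneg
  -- case n = 0
  rcases Nat.eq_zero_or_pos n with hn | hn
  · subst hn
    simp only [Nat.cast_zero, div_zero, Real.rpow_zero]
    linarith
  have hn0 : (n:ℝ) ≠ 0 := Nat.cast_ne_zero.mpr hn.ne'
  -- the combination contains (1-t)^(1/p) • K and t^(1/p) • L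
  have hsub1 : (1 - t) ^ (1/p) • K ⊆ C := by
    rintro z ⟨x, hx, rfl⟩
    refine ⟨x, hx, 0, hL0, 0, ⟨le_refl 0, zero_le_one⟩, ?_⟩
    simp [Real.one_rpow]
  have hsub2 : t ^ (1/p) • L ⊆ C := by
    rintro z ⟨y, hy, rfl⟩
    refine ⟨0, hK0, y, hy, 1, ⟨zero_le_one, le_refl 1⟩, ?_⟩
    simp [Real.one_rpow]
  -- main scaling estimate
  have main : ∀ (s : ℝ) (A : Set (Fin n → ℝ)), 0 ≤ s → s ≤ 1 → Convex ℝ A →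
      (0 : Fin n → ℝ) ∈ A → s • A ⊆ C → s ^ (n:ℕ) * (μ A).toReal ≤ M := by
    intro s A hs0 hs1 hAconv hA0 hsub
    have h1 : ENNReal.ofReal (s ^ (n:ℕ)) * μ A ≤ μ C :=
      le_trans (hdecay A hAconv hA0 s ⟨hs0, hs1⟩) (measure_mono hsub)
    have h2 := ENNReal.toReal_mono hcombfin h1
    rwa [ENNReal.toReal_mul, ENNReal.toReal_ofReal (pow_nonneg hs0 n)] at h2
  have hX : 0 ≤ (μ K).toReal := ENNReal.toReal_nonneg
  have hY : 0 ≤ (μ L).toReal := ENNReal.toReal_nonneg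
  have hpn : 0 ≤ p / n := div_nonneg hp0.le (Nat.cast_nonneg n)
  have hexp : (1/p * n) * (p / n) = 1 := by field_simp
  -- per-term bounds
  have step : ∀ (s : ℝ) (A : Set (Fin n → ℝ)), 0 ≤ s → s ≤ 1 → Convex ℝ A →
      (0 : Fin n → ℝ) ∈ A → s ^ (1/p) • A ⊆ C →
      s * (μ A).toReal ^ (p/n) ≤ M ^ (p/n) := by
    intro s A hs0 hs1 hAconv hA0 hsub
    have hs' : 0 ≤ s ^ (1/p) := Real.rpow_nonneg hs0 _
    have hs'' : s ^ (1/p) ≤ 1 := Real.rpow_le_one hs0 hs1 (by positivity)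
    have h := main (s ^ (1/p)) A hs' hs'' hAconv hA0 hsub
    have h2 := Real.rpow_le_rpow (by positivity) h hpn
    have hA : 0 ≤ (μ A).toReal := ENNReal.toReal_nonneg
    rw [Real.mul_rpow (by positivity) hA] at h2
    calc s * (μ A).toReal ^ (p/n)
        = ((s ^ (1/p)) ^ (n:ℕ)) ^ (p/n) * (μ A).toReal ^ (p/n) := by
          rw [← Real.rpow_natCast (s ^ (1/p)) n, ← Real.rpow_mul hs0,
            ← Real.rpow_mul hs0, hexp, Real.rpow_one]
      _ ≤ M ^ (p/n) := h2
  have h1 := step (1 - t) K (by linarith) (by linarith) hKconv hK0 hsub1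
  have h2 := step t L ht0 ht1 hLconv hL0 hsub2
  linarith
end
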